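/- arXiv:1409.0779 — 3 statements merged into one kernel-verified Lean document; each statement's English description precedes it below -/
import Mathlib

section
/- The rank-k free spike Λ_k (k ≥ 3) is representable over GF(q) if and only if there exist nonzero elements α₁, …, α_{k-1}, β₁, β₂ of GF(q) with β₁ ≠ β₂ such that no sub-multiset of {α₁, …, α_{k-1}} has sum equal to β₁ or β₂. -/
open Set Matroid

namespace PaperDefs

variable {α β : Type*}

/-- The rank of a matroid: the common cardinality of its bases (junk value if infinite). -/
noncomputable def rk (M : Matroid α) : ℕ := sSup (Set.ncard '' {B | M.IsBase B})

/-- The rank of a set in a matroid. -/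
noncomputable def rkOf (M : Matroid α) (X : Set α) : ℕ := rk (M ↾ X)

/-- A point is a rank-one flat. -/
def Point (M : Matroid α) (P : Set α) : Prop := M.IsFlat P ∧ rkOf M P = 1

/-- A line is a rank-two flat. -/
def Line (M : Matroid α) (L : Set α) : Prop := M.IsFlat L ∧ rkOf M L = 2

/-- ε(M) : the number of points of `M`. -/
noncomputable def eps (M : Matroid α) : ℕ := {P | Point M P}.ncard

/-- Deletion of a set from a matroid. -/
def delete (M : Matroid α) (D : Set α) : Matroid α := M ↾ (M.E \ D)

/-- Contraction of a set in a matroid, via duality. -/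
def contract (M : Matroid α) (C : Set α) : Matroid α := (delete M✶ C)✶

/-- `N` is a minor of `M`. -/
def IsMinor (N M : Matroid α) : Prop :=
  ∃ C D : Set α, C ⊆ M.E ∧ D ⊆ M.E ∧ Disjoint C D ∧ N = delete (contract M C) D

/-- A matroid is simple if all of its subsets of size at most two are independent. -/
def Simple (M : Matroid α) : Prop :=
  ∀ I ⊆ M.E, I.Finite → I.ncard ≤ 2 → M.Indep I

/-- `M` is (a copy of) the uniform matroid `U_{k,n}`. -/
def IsUnif (M : Matroid α) (k n : ℕ) : Prop :=
  M.E.Finite ∧ M.E.ncard = n ∧ ∀ I ⊆ M.E, (M.Indep I ↔ I.Finite ∧ I.ncard ≤ k)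

/-- A circuit : a minimal dependent set. -/
def Circuit (M : Matroid α) (C : Set α) : Prop :=
  C ⊆ M.E ∧ ¬ M.Indep C ∧ ∀ D ⊂ C, M.Indep D

/-- A cocircuit : a circuit of the dual. -/
def Cocircuit (M : Matroid α) (C : Set α) : Prop := Circuit M✶ C

/-- A loop. -/
def Loop (M : Matroid α) (e : α) : Prop := e ∈ M.E ∧ ¬ M.Indep {e}

/-- Representability of a matroid over a field. -/
def Rep (M : Matroid α) (F : Type*) [Field F] : Prop :=
  ∃ (n : ℕ) (φ : α → (Fin n → F)),
    ∀ I ⊆ M.E, (M.Indep I ↔ LinearIndependent F (fun x : I => φ x.1))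

/-- `M` is (a copy of) the projective geometry `PG(n-1,q)` over the finite field `F` of order
`q`: a simple rank-`n` `F`-representable matroid with `(q^n-1)/(q-1)` elements. -/
def IsPG (M : Matroid α) (F : Type*) [Field F] [Fintype F] (n : ℕ) : Prop :=
  Simple M ∧ Rep M F ∧ rk M = n ∧ M.E.Finite ∧
    M.E.ncard = (Fintype.card F ^ n - 1) / (Fintype.card F - 1)

/-- A flat `Fl` of `M` is modular. -/
def ModularFlat (M : Matroid α) (Fl : Set α) : Prop :=
  M.IsFlat Fl ∧ ∀ G, M.IsFlat G → rkOf M Fl + rkOf M G = rkOf M (Fl ∪ G) + rkOf M (Fl ∩ G)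

/-- `M'` is the principal extension of `M` by the new element `e` placed freely on the flat
`Fl` of `M`. -/
def IsPrincipalExt (M' M : Matroid α) (e : α) (Fl : Set α) : Prop :=
  M.IsFlat Fl ∧ e ∉ M.E ∧ M'.E = insert e M.E ∧ delete M' {e} = M ∧
    ∀ X ⊆ M.E, (e ∈ M'.closure X ↔ Fl ⊆ M.closure X)

/-- `N` is (a copy of) `P(n-1,q,k)` : the principal extension of a rank-`k` flat of
`PG(n-1,q)`, where `q = |F|`. -/
def IsPGPrincExt (N : Matroid α) (F : Type*) [Field F] [Fintype F] (n k : ℕ) : Prop :=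
  ∃ (e : α) (Fl : Set α), IsPG (delete N {e}) F n ∧ rkOf (delete N {e}) Fl = k ∧
    IsPrincipalExt N (delete N {e}) e Fl

/-- `T` is the truncation of the matroid `N`. -/
def IsTruncation (T N : Matroid α) : Prop :=
  T.E = N.E ∧ ∀ I, (T.Indep I ↔ N.Indep I ∧ I.Finite ∧ I.ncard ≤ rk N - 1)

/-- `M` is (a copy of) the rank-`k` free spike `Λ_k` : ground set consists of `k` two-element
legs, and a set is independent iff it has at most `k` elements and contains at most one leg. -/
def IsFreeSpike (M : Matroid α) (k : ℕ) : Prop :=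
  ∃ f : Fin k × Fin 2 ↪ α, M.E = Set.range f ∧
    ∀ I ⊆ M.E, (M.Indep I ↔ I.Finite ∧ I.ncard ≤ k ∧
      ¬ ∃ i j : Fin k, i ≠ j ∧ {f (i,0), f (i,1), f (j,0), f (j,1)} ⊆ I)

end PaperDefs

open PaperDefs

namespace Spk

variable {F : Type} [Field F]

def Good (k : ℕ) (J : Set (Fin k × Fin 2)) : Prop :=
  J.ncard ≤ k ∧ ¬ ∃ i j : Fin k, i ≠ j ∧
    ({(i,0), (i,1), (j,0), (j,1)} : Set (Fin k × Fin 2)) ⊆ J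

lemma li_iff {ι V : Type*} [Fintype ι] [AddCommGroup V] [Module F V]
    (u : ι → V) (J : Set ι) :
    LinearIndependent F (fun x : J => u x) ↔
      ∀ g : ι → F, (∀ z, z ∉ J → g z = 0) → ∑ z, g z • u z = 0 → ∀ z, g z = 0 := by
  classical
  haveI : Fintype J := J.toFinite.fintype
  rw [Fintype.linearIndependent_iff]
  have key : ∀ g : ι → F, (∀ z, z ∉ J → g z = 0) →
      ∑ z, g z • u z = ∑ x : J, g x • u x := by
    intro g hg
    have h1 : ∑ z ∈ Finset.univ.filter (· ∈ J), g z • u z = ∑ z, g z • u z :=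
      Finset.sum_subset (Finset.subset_univ _)
        (fun z _ hz => by rw [hg z (by simpa using hz), zero_smul])
    rw [← h1, Finset.sum_subtype (p := (· ∈ J)) _ (by simp) (fun z => g z • u z)]
  constructor
  · intro H g hg hsum z
    by_cases hz : z ∈ J
    · exact H (fun x => g x) (by rw [← key g hg]; exact hsum) ⟨z, hz⟩
    · exact hg z hz
  · intro H g hsum x
    have hsupp : ∀ z, z ∉ J → (fun z => if h : z ∈ J then g ⟨z, h⟩ else 0) z = 0 :=
      fun z hz => dif_neg hz
    have h2 : ∑ y : J, (if h : (y:ι) ∈ J then g ⟨y, h⟩ else 0) • u y = ∑ y : J, g y • u y := by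
      refine Finset.sum_congr rfl fun y _ => ?_
      rw [dif_pos y.2]
    have := H _ hsupp (by rw [key _ hsupp, h2]; exact hsum) x
    rwa [dif_pos x.2] at this

lemma sum_support_subset {ι M : Type*} [Fintype ι] [AddCommMonoid M] (f : ι → M)
    (s : Finset ι) (h : ∀ z ∉ s, f z = 0) : ∑ z, f z = ∑ z ∈ s, f z :=
  (Finset.sum_subset (Finset.subset_univ s) (fun z _ hz => h z hz)).symm

lemma sum_eval {k : ℕ} (g : Fin k × Fin 2 → F) (u : Fin k × Fin 2 → (Fin k → F)) (m : Fin k) :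
    (∑ z, g z • u z) m = ∑ i, (g (i,0) * u (i,0) m + g (i,1) * u (i,1) m) := by
  rw [Finset.sum_apply, Fintype.sum_prod_type]
  refine Finset.sum_congr rfl fun i _ => ?_
  rw [Fin.sum_univ_two]
  rfl

def sv {k : ℕ} (δ : Fin k → F) (z : Fin k × Fin 2) : Fin k → F :=
  fun m => (if z.1 = m then 1 else 0) + (if z.2 = 1 then δ z.1 else 0)

lemma sum_eval_sv {k : ℕ} (δ : Fin k → F) (g : Fin k × Fin 2 → F) (m : Fin k) :
    (∑ z, g z • sv δ z) m
      = ∑ i, (g (i,0) * (if i = m then (1:F) else 0)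
          + g (i,1) * ((if i = m then (1:F) else 0) + δ i)) := by
  rw [sum_eval]
  refine Finset.sum_congr rfl fun i _ => ?_
  simp [sv]


lemma pair_snd_ne {k : ℕ} {a b : Fin k} {x y : Fin 2} (hxy : x ≠ y)
    (h : (a,x) = (b,y)) : False := by
  have h2 : x = y := congrArg Prod.snd h
  exact hxy h2


lemma sum_eq_pair {ι M : Type*} [Fintype ι] [DecidableEq ι] [AddCommMonoid M]
    (i j : ι) (hij : i ≠ j) (h : ι → M) (hv : ∀ x, x ≠ i → x ≠ j → h x = 0) :
    ∑ x, h x = h i + h j := by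
  rw [sum_support_subset h {i,j} (fun z hz => by
    simp only [Finset.mem_insert, Finset.mem_singleton] at hz
    push_neg at hz
    exact hv z hz.1 hz.2)]
  rw [Finset.sum_insert (by simp [hij]), Finset.sum_singleton]


lemma construct {k : ℕ} (hk : 3 ≤ k) (δ : Fin k → F) (hδ0 : ∀ i, δ i ≠ 0)
    (hδ : ∀ B : Finset (Fin k), ∑ i ∈ B, δ i ≠ -1) (J : Set (Fin k × Fin 2)) :
    LinearIndependent F (fun x : J => sv δ x) ↔ Good k J := by
  classical
  constructor
  · intro hli
    constructor
    · by_contra hbig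
      push_neg at hbig
      haveI : Fintype J := J.toFinite.fintype
      have h1 : Fintype.card J ≤ k := by
        have := hli.fintype_card_le_finrank
        rwa [Module.finrank_pi, Fintype.card_fin] at this
      have h2 : J.ncard = Fintype.card J := by
        rw [Set.ncard_eq_toFinset_card', Set.toFinset_card]
      omega
    · rintro ⟨i, j, hij, hsub⟩
      have crit := (li_iff (sv δ) J).mp hli
      set g : Fin k × Fin 2 → F := fun z =>
        if z = (i,0) then -δ j else if z = (i,1) then δ j
        else if z = (j,0) then δ i else if z = (j,1) then -δ i else 0 with hgdef
      have hmem0 : ((i,0) : Fin k × Fin 2) ∈ J := hsub (by simp)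
      have hmem1 : ((i,1) : Fin k × Fin 2) ∈ J := hsub (by simp)
      have hmem2 : ((j,0) : Fin k × Fin 2) ∈ J := hsub (by simp)
      have hmem3 : ((j,1) : Fin k × Fin 2) ∈ J := hsub (by simp)
      have hgsupp : ∀ z, z ∉ J → g z = 0 := by
        intro z hz
        have h0 : z ≠ (i,0) := fun h => hz (h ▸ hmem0)
        have h1 : z ≠ (i,1) := fun h => hz (h ▸ hmem1)
        have h2 : z ≠ (j,0) := fun h => hz (h ▸ hmem2)
        have h3 : z ≠ (j,1) := fun h => hz (h ▸ hmem3)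
        simp [hgdef, h0, h1, h2, h3]
      have hdist : ((i,(0:Fin 2)) ≠ (i,1)) ∧ ((i,(0:Fin 2)) ≠ (j,0)) ∧ ((i,(0:Fin 2)) ≠ (j,1))
          ∧ ((i,(1:Fin 2)) ≠ (j,0)) ∧ ((i,(1:Fin 2)) ≠ (j,1)) ∧ ((j,(0:Fin 2)) ≠ (j,1)) := by
        refine ⟨?_, ?_, ?_, ?_, ?_, ?_⟩ <;> simp [Prod.ext_iff, hij] <;> decide
      obtain ⟨d1, d2, d3, d4, d5, d6⟩ := hdist
      have hg0 : g (i,0) = -δ j := by simp [hgdef]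
      have hg1 : g (i,1) = δ j := by simp [hgdef, d1.symm]
      have hg2 : g (j,0) = δ i := by simp [hgdef, d2.symm, d4.symm]
      have hg3 : g (j,1) = -δ i := by simp [hgdef, d3.symm, d5.symm, d6.symm]
      have hsum : ∑ z, g z • sv δ z = 0 := by
        have hcollapse : ∑ z, g z • sv δ z
            = ∑ z ∈ ({(i,0), (i,1), (j,0), (j,1)} : Finset (Fin k × Fin 2)), g z • sv δ z := by
          refine sum_support_subset _ _ ?_
          intro z hz
          simp only [Finset.mem_insert, Finset.mem_singleton] at hz
          push_neg at hz
          rw [hgdef]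
          simp [hz.1, hz.2.1, hz.2.2.1, hz.2.2.2, zero_smul]
        rw [hcollapse]
        rw [Finset.sum_insert (by simp [d1, d2, d3]),
            Finset.sum_insert (by simp [d4, d5]),
            Finset.sum_insert (by simp [d6]),
            Finset.sum_singleton]
        rw [hg0, hg1, hg2, hg3]
        funext m
        simp only [sv, Pi.add_apply, Pi.smul_apply, smul_eq_mul, Pi.zero_apply]
        norm_num
        split_ifs <;> ring
      have := crit g hgsupp hsum (i,1)
      rw [hg1] at this
      exact hδ0 j this
  · rintro ⟨hcard, hlegs⟩
    rw [li_iff]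
    intro g hg hsum z
    have eqn : ∀ m, g (m,0) + g (m,1) + (∑ i, g (i,1) * δ i) = 0 := by
      intro m
      have h := congrFun hsum m
      rw [sum_eval_sv] at h
      have expand : ∀ i, g (i,0) * (if i = m then (1:F) else 0)
            + g (i,1) * ((if i = m then (1:F) else 0) + δ i)
          = ((if i = m then g (i,0) + g (i,1) else 0) + g (i,1) * δ i) := by
        intro i; split_ifs <;> ring
      simp only [expand, Finset.sum_add_distrib, Finset.sum_ite_eq' Finset.univ m,
        Finset.mem_univ, if_true] at h
      have h0 : (0 : Fin k → F) m = 0 := rfl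
      rw [h0] at h
      linear_combination h
    by_cases htouch : ∀ m : Fin k, (m,(0:Fin 2)) ∈ J ∨ (m,(1:Fin 2)) ∈ J
    · haveI : Fintype J := J.toFinite.fintype
      have hsurj : Function.Surjective (fun x : J => (x.1).1) := by
        intro m
        rcases htouch m with h | h
        exacts [⟨⟨(m,0), h⟩, rfl⟩, ⟨⟨(m,1), h⟩, rfl⟩]
      have hcardJ : Fintype.card J = k := by
        have h2 : J.ncard = Fintype.card J := by
          rw [Set.ncard_eq_toFinset_card', Set.toFinset_card]
        have h3 := Fintype.card_le_of_surjective _ hsurj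
        rw [Fintype.card_fin] at h3
        omega
      have hinj : Function.Injective (fun x : J => (x.1).1) := by
        have := (Fintype.bijective_iff_surjective_and_card (fun x : J => (x.1).1)).mpr
          ⟨hsurj, by rw [hcardJ, Fintype.card_fin]⟩
        exact this.1
      have hexcl : ∀ m : Fin k, ¬((m,(0:Fin 2)) ∈ J ∧ (m,(1:Fin 2)) ∈ J) := by
        rintro m ⟨h0, h1⟩
        have := hinj (a₁ := ⟨(m,0), h0⟩) (a₂ := ⟨(m,1), h1⟩) rfl
        have := congrArg (fun x => (x.1).2) this
        simp at this
      set B : Finset (Fin k) := Finset.univ.filter (fun i => (i,(1:Fin 2)) ∈ J) with hB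
      have hg0 : ∀ m ∉ B, g (m,1) = 0 := by
        intro m hm; exact hg _ (by simpa [hB] using hm)
      have hgy : ∀ m ∈ B, g (m,1) = -(∑ i, g (i,1) * δ i) := by
        intro m hm
        have hm' : (m,(1:Fin 2)) ∈ J := by simpa [hB] using hm
        have h0 : g (m,0) = 0 := hg _ (fun hmem => hexcl m ⟨hmem, hm'⟩)
        linear_combination eqn m - h0
      have key : (∑ i, g (i,1) * δ i) * (1 + ∑ i ∈ B, δ i) = 0 := by
        have e1 : ∑ i, g (i,1) * δ i = ∑ i ∈ B, g (i,1) * δ i :=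
          (Finset.sum_subset (Finset.subset_univ B)
            (fun i _ hi => by rw [hg0 i hi, zero_mul])).symm
        have e2 : ∑ i ∈ B, g (i,1) * δ i
            = ∑ i ∈ B, (-(∑ i, g (i,1) * δ i)) * δ i :=
          Finset.sum_congr rfl (fun m hm => by rw [hgy m hm])
        have e3 : (-(∑ i, g (i,1) * δ i)) * (∑ i ∈ B, δ i)
            = ∑ i ∈ B, (-(∑ i, g (i,1) * δ i)) * δ i := Finset.mul_sum _ _ _
        linear_combination e1 + e2 - e3
      have hc0 : (∑ i, g (i,1) * δ i) = 0 := by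
        rcases mul_eq_zero.mp key with h | h
        · exact h
        · exact absurd (by linear_combination h) (hδ B)
      have hy : ∀ m, g (m,1) = 0 := by
        intro m
        by_cases hm : m ∈ B
        · rw [hgy m hm, hc0, neg_zero]
        · exact hg0 m hm
      have hx : ∀ m, g (m,0) = 0 := fun m => by linear_combination eqn m - hy m - hc0
      obtain ⟨m, ε⟩ := z
      have : ε = 0 ∨ ε = 1 := by omega
      rcases this with rfl | rfl
      · exact hx m
      · exact hy m
    · push_neg at htouch
      obtain ⟨m₀, h0, h1⟩ := htouch
      have hc0 : (∑ i, g (i,1) * δ i) = 0 := by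
        linear_combination eqn m₀ - hg _ h0 - hg _ h1
      have hsum2 : ∀ m, g (m,0) + g (m,1) = 0 := fun m => by
        linear_combination eqn m - hc0
      have hyzero : ∀ i, g (i,1) = 0 := by
        by_contra hcon
        push_neg at hcon
        obtain ⟨i₁, hi₁⟩ := hcon
        have hleg : ∀ i, g (i,1) ≠ 0 → ((i,(0:Fin 2)) ∈ J ∧ ((i,(1:Fin 2)) ∈ J)) := by
          intro i hi
          have h1' : (i,(1:Fin 2)) ∈ J := by
            by_contra h; exact hi (hg _ h)
          have h0' : (i,(0:Fin 2)) ∈ J := by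
            by_contra h
            exact hi (by linear_combination hsum2 i - hg _ h)
          exact ⟨h0', h1'⟩
        have huniq : ∀ i, g (i,1) ≠ 0 → i = i₁ := by
          intro i hi
          by_contra hne
          refine hlegs ⟨i, i₁, hne, ?_⟩
          obtain ⟨a0, a1⟩ := hleg i hi
          obtain ⟨b0, b1⟩ := hleg i₁ hi₁
          intro z hz
          simp only [Set.mem_insert_iff, Set.mem_singleton_iff] at hz
          rcases hz with rfl | rfl | rfl | rfl
          exacts [a0, a1, b0, b1]
        have hone : (∑ i, g (i,1) * δ i) = g (i₁,1) * δ i₁ := by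
          refine Finset.sum_eq_single i₁ (fun i _ hne => ?_) (by simp)
          have : g (i,1) = 0 := by
            by_contra h; exact hne (huniq i h)
          rw [this, zero_mul]
        rw [hc0] at hone
        rcases mul_eq_zero.mp hone.symm with h | h
        · exact hi₁ h
        · exact hδ0 i₁ h
      obtain ⟨m, ε⟩ := z
      have : ε = 0 ∨ ε = 1 := by omega
      rcases this with rfl | rfl
      · linear_combination hsum2 m - hyzero m
      · exact hyzero m


lemma li_image {V : Type*} [AddCommGroup V] [Module F V] {β : Type*} {k : ℕ}
    (f : Fin k × Fin 2 ↪ β) (φ : β → V) (J : Set (Fin k × Fin 2)) :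
    LinearIndependent F (fun x : (f '' J) => φ x.1) ↔
      LinearIndependent F (fun z : J => φ (f z.1)) := by
  rw [← linearIndependent_equiv (Equiv.Set.image f J f.injective)
    (f := fun x : (f '' J) => φ x.1)]
  rfl


lemma bridge {α : Type} {M : Matroid α} {k : ℕ} (f : Fin k × Fin 2 ↪ α)
    (hE : M.E = Set.range f)
    (hI : ∀ I ⊆ M.E, (M.Indep I ↔ I.Finite ∧ I.ncard ≤ k ∧
      ¬ ∃ i j : Fin k, i ≠ j ∧ {f (i,0), f (i,1), f (j,0), f (j,1)} ⊆ I))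
    {V : Type*} [AddCommGroup V] [Module F V] (φ : α → V) :
    (∀ I ⊆ M.E, (M.Indep I ↔ LinearIndependent F (fun x : I => φ x.1))) ↔
    (∀ J : Set (Fin k × Fin 2), LinearIndependent F (fun z : J => φ (f z.1)) ↔ Good k J) := by
  have legs_iff : ∀ (J : Set (Fin k × Fin 2)) (i j : Fin k),
      ({f (i,0), f (i,1), f (j,0), f (j,1)} : Set α) ⊆ f '' J ↔
      ({(i,0), (i,1), (j,0), (j,1)} : Set (Fin k × Fin 2)) ⊆ J := by
    intro J i j
    constructor
    · intro h z hz
      have hz' : f z ∈ f '' J := by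
        apply h
        simp only [Set.mem_insert_iff, Set.mem_singleton_iff] at hz ⊢
        rcases hz with rfl | rfl | rfl | rfl
        · exact Or.inl rfl
        · exact Or.inr (Or.inl rfl)
        · exact Or.inr (Or.inr (Or.inl rfl))
        · exact Or.inr (Or.inr (Or.inr rfl))
      obtain ⟨w, hw, hwe⟩ := hz'
      rwa [← f.injective hwe]
    · intro h
      have : ({f (i,0), f (i,1), f (j,0), f (j,1)} : Set α)
          = f '' ({(i,0), (i,1), (j,0), (j,1)} : Set (Fin k × Fin 2)) := by
        simp [Set.image_insert_eq]
      rw [this]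
      exact Set.image_mono h
  have indep_iff_good : ∀ J : Set (Fin k × Fin 2), M.Indep (f '' J) ↔ Good k J := by
    intro J
    have hsub : f '' J ⊆ M.E := by rw [hE]; exact Set.image_subset_range f J
    rw [hI _ hsub]
    unfold Good
    constructor
    · rintro ⟨-, h2, h3⟩
      refine ⟨by rwa [Set.ncard_image_of_injective J f.injective] at h2, ?_⟩
      rintro ⟨i, j, hij, hsubs⟩
      exact h3 ⟨i, j, hij, (legs_iff J i j).mpr hsubs⟩
    · rintro ⟨h2, h3⟩
      refine ⟨(J.toFinite).image f, by rwa [Set.ncard_image_of_injective J f.injective], ?_⟩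
      rintro ⟨i, j, hij, hsubs⟩
      exact h3 ⟨i, j, hij, (legs_iff J i j).mp hsubs⟩
  constructor
  · intro hrep J
    have hsub : f '' J ⊆ M.E := by rw [hE]; exact Set.image_subset_range f J
    rw [← li_image f φ J, ← hrep _ hsub, indep_iff_good J]
  · intro H I hIE
    have hIr : I ⊆ Set.range f := by rwa [← hE]
    have himg : f '' (f ⁻¹' I) = I := Set.image_preimage_eq_of_subset hIr
    rw [← himg, indep_iff_good _, li_image f φ _]
    exact (H _).symm


section Extract

variable {k : ℕ} (u : Fin k × Fin 2 → (Fin k → F))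

lemma F1 (hk : 3 ≤ k) (hu0 : ∀ i m, u (i,0) m = if i = m then 1 else 0)
    (H : ∀ J : Set (Fin k × Fin 2), LinearIndependent F (fun x : J => u x) ↔ Good k J) :
    ∀ j m, u (j,1) m ≠ 0 := by
  classical
  intro j m hc
  set Jf : Finset (Fin k × Fin 2) :=
    insert (j,1) ((Finset.univ.erase m).image (fun i => (i,(0:Fin 2)))) with hJf
  have hgood : Good k (↑Jf) := by
    constructor
    · rw [Set.ncard_coe_finset]
      calc Jf.card ≤ ((Finset.univ.erase m).image (fun i => (i,(0:Fin 2)))).card + 1 :=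
            Finset.card_insert_le _ _
        _ ≤ (Finset.univ.erase m).card + 1 := by
            gcongr
            exact Finset.card_image_le
        _ = (k-1) + 1 := by
            rw [Finset.card_erase_of_mem (Finset.mem_univ m), Finset.card_univ, Fintype.card_fin]
        _ ≤ k := by omega
    · rintro ⟨i1, j1, hij, hsub⟩
      have key : ∀ a : Fin k, (a,(1:Fin 2)) ∈ (↑Jf : Set (Fin k × Fin 2)) → a = j := by
        intro a ha
        simp only [hJf, Finset.coe_insert, Set.mem_insert_iff, Finset.coe_image,
          Set.mem_image, Finset.mem_coe, Finset.mem_erase] at ha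
        rcases ha with h | ⟨b, -, hb⟩
        · exact (Prod.ext_iff.mp h).1
        · exact absurd hb (fun hb => pair_snd_ne (by decide) hb)
      have e1 : i1 = j := key i1 (hsub (by simp))
      have e2 : j1 = j := key j1 (hsub (by simp))
      exact hij (e1.trans e2.symm)
  have crit := (li_iff u (↑Jf)).mp ((H _).mpr hgood)
  set g : Fin k × Fin 2 → F := fun z =>
    if z.2 = 1 then (if z.1 = j then 1 else 0) else -(u (j,1) z.1) with hgdef
  have hsupp : ∀ z, z ∉ (↑Jf : Set (Fin k × Fin 2)) → g z = 0 := by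
    rintro ⟨a, ε⟩ hz
    have hε : ε = 0 ∨ ε = 1 := by omega
    rcases hε with rfl | rfl
    · have ham : a = m := by
        by_contra hne
        exact hz (by simp [hJf, hne])
      subst ham
      simp [hgdef, hc]
    · have haj : a ≠ j := by
        rintro rfl
        exact hz (by simp [hJf])
      simp [hgdef, haj]
  have hsum : ∑ z, g z • u z = 0 := by
    funext m'
    rw [sum_eval, Pi.zero_apply]
    have term : ∀ i, g (i,0) * u (i,0) m' + g (i,1) * u (i,1) m'
        = (if i = m' then -(u (j,1) i) else 0) + (if i = j then u (i,1) m' else 0) := by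
      intro i
      rw [hu0]
      have g0 : g (i,0) = -(u (j,1) i) := by simp [hgdef]
      have g1 : g (i,1) = if i = j then 1 else 0 := by simp [hgdef]
      rw [g0, g1]
      split_ifs <;> ring
    simp only [term, Finset.sum_add_distrib, Finset.sum_ite_eq' Finset.univ,
      Finset.mem_univ, if_true]
    ring
  have := crit g hsupp hsum (j,1)
  simp [hgdef] at this

lemma F2 (hk : 3 ≤ k) (hu0 : ∀ i m, u (i,0) m = if i = m then 1 else 0)
    (H : ∀ J : Set (Fin k × Fin 2), LinearIndependent F (fun x : J => u x) ↔ Good k J) :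
    ∀ i j : Fin k, i ≠ j → ∃ r : F, r ≠ 0 ∧
      ∀ m, m ≠ i → m ≠ j → u (j,1) m = r * u (i,1) m := by
  classical
  intro i j hij
  have hnli : ¬ LinearIndependent F
      (fun x : ({(i,0),(i,1),(j,0),(j,1)} : Set (Fin k × Fin 2)) => u x) := by
    intro h
    exact ((H _).mp h).2 ⟨i, j, hij, subset_rfl⟩
  rw [li_iff] at hnli
  push_neg at hnli
  obtain ⟨g, hgsupp, hgsum, z₀, hz₀⟩ := hnli
  have tri_good : ∀ T : Set (Fin k × Fin 2), T.ncard ≤ 3 →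
      (∀ a b : Fin k, a ≠ b → ¬(({(a,0),(a,1),(b,0),(b,1)} : Set (Fin k × Fin 2)) ⊆ T)) →
      Good k T := by
    intro T hT hL
    exact ⟨hT.trans hk, fun ⟨a, b, hab, hsub⟩ => hL a b hab hsub⟩
  -- g (j,1) ≠ 0
  have S1 : g (j,1) ≠ 0 := by
    intro h0
    have hgood : Good k ({(i,0),(i,1),(j,0)} : Set (Fin k × Fin 2)) := by
      refine tri_good _ ?_ ?_
      · apply (Set.ncard_insert_le _ _).trans
        apply Nat.succ_le_succ
        apply (Set.ncard_insert_le _ _).trans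
        simp
      · intro a b hab hsub
        have ha : (a,(1:Fin 2)) ∈ ({(i,0),(i,1),(j,0)} : Set (Fin k × Fin 2)) :=
          hsub (by simp)
        have hb : (b,(1:Fin 2)) ∈ ({(i,0),(i,1),(j,0)} : Set (Fin k × Fin 2)) :=
          hsub (by simp)
        simp only [Set.mem_insert_iff, Set.mem_singleton_iff, Prod.ext_iff] at ha hb
        have ha' : a = i := by
          rcases ha with ⟨h,h2⟩|⟨h,h2⟩|⟨h,h2⟩ <;> first | exact h | exact absurd h2 (by decide)
        have hb' : b = i := by
          rcases hb with ⟨h,h2⟩|⟨h,h2⟩|⟨h,h2⟩ <;> first | exact h | exact absurd h2 (by decide)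
        exact hab (ha'.trans hb'.symm)
    have crit := (li_iff u _).mp ((H _).mpr hgood)
    have hsupp : ∀ z, z ∉ ({(i,0),(i,1),(j,0)} : Set (Fin k × Fin 2)) → g z = 0 := by
      intro z hz
      by_cases hzj : z = (j,1)
      · rw [hzj]; exact h0
      · apply hgsupp
        intro hzmem
        simp only [Set.mem_insert_iff, Set.mem_singleton_iff] at hzmem hz
        rcases hzmem with h|h|h|h
        · exact hz (Or.inl h)
        · exact hz (Or.inr (Or.inl h))
        · exact hz (Or.inr (Or.inr h))
        · exact hzj h
    exact hz₀ (crit g hsupp hgsum z₀)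
  have S2 : g (i,1) ≠ 0 := by
    intro h0
    have hgood : Good k ({(i,0),(j,0),(j,1)} : Set (Fin k × Fin 2)) := by
      refine tri_good _ ?_ ?_
      · apply (Set.ncard_insert_le _ _).trans
        apply Nat.succ_le_succ
        apply (Set.ncard_insert_le _ _).trans
        simp
      · intro a b hab hsub
        have ha : (a,(1:Fin 2)) ∈ ({(i,0),(j,0),(j,1)} : Set (Fin k × Fin 2)) :=
          hsub (by simp)
        have hb : (b,(1:Fin 2)) ∈ ({(i,0),(j,0),(j,1)} : Set (Fin k × Fin 2)) :=
          hsub (by simp)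
        simp only [Set.mem_insert_iff, Set.mem_singleton_iff, Prod.ext_iff] at ha hb
        have ha' : a = j := by
          rcases ha with ⟨h,h2⟩|⟨h,h2⟩|⟨h,h2⟩ <;> first | exact h | exact absurd h2 (by decide)
        have hb' : b = j := by
          rcases hb with ⟨h,h2⟩|⟨h,h2⟩|⟨h,h2⟩ <;> first | exact h | exact absurd h2 (by decide)
        exact hab (ha'.trans hb'.symm)
    have crit := (li_iff u _).mp ((H _).mpr hgood)
    have hsupp : ∀ z, z ∉ ({(i,0),(j,0),(j,1)} : Set (Fin k × Fin 2)) → g z = 0 := by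
      intro z hz
      by_cases hzi : z = (i,1)
      · rw [hzi]; exact h0
      · apply hgsupp
        intro hzmem
        simp only [Set.mem_insert_iff, Set.mem_singleton_iff] at hzmem hz
        rcases hzmem with h|h|h|h
        · exact hz (Or.inl h)
        · exact hzi h
        · exact hz (Or.inr (Or.inl h))
        · exact hz (Or.inr (Or.inr h))
    exact hz₀ (crit g hsupp hgsum z₀)
  refine ⟨-(g (i,1) / g (j,1)), by simp [S1, S2], ?_⟩
  intro m hmi hmj
  have eqnm : g (i,1) * u (i,1) m + g (j,1) * u (j,1) m = 0 := by
    have h := congrFun hgsum m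
    rw [sum_eval, Pi.zero_apply] at h
    rw [sum_eq_pair i j hij _ (fun x hxi hxj => ?_)] at h
    · rw [hu0, hu0, if_neg (fun hh => hmi hh.symm), if_neg (fun hh => hmj hh.symm)] at h
      linear_combination h
    · have g0 : g (x,0) = 0 := by
        apply hgsupp
        intro hmem
        simp only [Set.mem_insert_iff, Set.mem_singleton_iff] at hmem
        rcases hmem with h|h|h|h
        · exact hxi (congrArg Prod.fst h)
        · exact pair_snd_ne (by decide) h
        · exact hxj (congrArg Prod.fst h)
        · exact pair_snd_ne (by decide) h
      have g1 : g (x,1) = 0 := by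
        apply hgsupp
        intro hmem
        simp only [Set.mem_insert_iff, Set.mem_singleton_iff] at hmem
        rcases hmem with h|h|h|h
        · exact pair_snd_ne (by decide) h
        · exact hxi (congrArg Prod.fst h)
        · exact pair_snd_ne (by decide) h
        · exact hxj (congrArg Prod.fst h)
      rw [g0, g1, zero_mul, zero_mul, add_zero]
  field_simp
  linear_combination eqnm


end Extract

lemma extract4 {k : ℕ} (u : Fin k × Fin 2 → (Fin k → F)) (hk : 4 ≤ k)
    (hu0 : ∀ i m, u (i,0) m = if i = m then 1 else 0)
    (H : ∀ J : Set (Fin k × Fin 2), LinearIndependent F (fun x : J => u x) ↔ Good k J) :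
    ∃ δ : Fin k → F, (∀ i, δ i ≠ 0) ∧ ∀ B : Finset (Fin k), ∑ i ∈ B, δ i ≠ -1 := by
  classical
  have hk3 : 3 ≤ k := by omega
  have hF1 := F1 u hk3 hu0 H
  have hF2 := F2 u hk3 hu0 H
  have hne01 : ((0:Fin 2) : Fin 2) ≠ 1 := by decide
  set o₀ : Fin k := ⟨0, by omega⟩ with ho₀
  set o₁ : Fin k := ⟨1, by omega⟩ with ho₁
  have ho : o₀ ≠ o₁ := by
    intro h
    have := congrArg Fin.val h
    simp [ho₀, ho₁] at this
  -- ratios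
  set R : Fin k → F := fun j => if h : j = o₀ then 1 else (hF2 o₀ j (Ne.symm h)).choose
    with hRdef
  have hR : ∀ j, R j ≠ 0 ∧ ∀ m, m ≠ o₀ → m ≠ j → u (j,1) m = R j * u (o₀,1) m := by
    intro j
    by_cases h : j = o₀
    · subst h
      refine ⟨by simp [hRdef], fun m hm0 hmj => by simp [hRdef]⟩
    · have spec := (hF2 o₀ j (Ne.symm h)).choose_spec
      rw [hRdef]
      simp only [dif_neg h]
      exact spec
  -- tip
  set t : Fin k → F := fun m => if m = o₀ then u (o₁,1) o₀ / R o₁ else u (o₀,1) m with htdef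
  have ht0 : ∀ m, t m ≠ 0 := by
    intro m
    by_cases h : m = o₀
    · subst h
      simp only [htdef, if_pos rfl]
      exact div_ne_zero (hF1 o₁ o₀) (hR o₁).1
    · simp only [htdef, if_neg h]
      exact hF1 o₀ m
  -- existence of a fourth index
  have hfourth : ∀ x y z : Fin k, ∃ m, m ≠ x ∧ m ≠ y ∧ m ≠ z := by
    intro x y z
    by_contra hno
    push_neg at hno
    have hsub : (Finset.univ : Finset (Fin k)) ⊆ {x, y, z} := by
      intro w _
      by_cases hx : w = x
      · simp [hx]
      · by_cases hy : w = y
        · simp [hy]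
        · have := hno w hx hy
          simp [this]
    have h1 := Finset.card_le_card hsub
    have h2 : ({x, y, z} : Finset (Fin k)).card ≤ 3 :=
      (Finset.card_insert_le _ _).trans (Nat.succ_le_succ
        ((Finset.card_insert_le _ _).trans (by simp)))
    rw [Finset.card_univ, Fintype.card_fin] at h1
    omega
  have ht_at0 : t o₀ = u (o₁,1) o₀ / R o₁ := by simp [htdef]
  have ht_ne : ∀ m, m ≠ o₀ → t m = u (o₀,1) m := fun m h => by simp [htdef, h]
  have hT : ∀ j m, m ≠ j → u (j,1) m = R j * t m := by
    intro j m hmj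
    by_cases hm0 : m = o₀
    · subst hm0
      have hj0 : o₀ ≠ j := hmj
      rw [ht_at0]
      by_cases hj1 : j = o₁
      · subst hj1
        rw [mul_comm, div_mul_cancel₀ _ (hR o₁).1]
      · obtain ⟨s, hs0, hs⟩ := hF2 o₁ j (Ne.symm hj1)
        obtain ⟨m', h1, h2, h3⟩ := hfourth o₀ o₁ j
        have e1 : u (j,1) m' = s * u (o₁,1) m' := hs m' h2 h3
        have e2 : u (j,1) m' = R j * u (o₀,1) m' := (hR j).2 m' h1 h3
        have e3 : u (o₁,1) m' = R o₁ * u (o₀,1) m' := (hR o₁).2 m' h1 h2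
        have e4 : u (j,1) o₀ = s * u (o₁,1) o₀ := hs o₀ ho hj0
        have e6 : R j = s * R o₁ := by
          have e5 : R j * u (o₀,1) m' = (s * R o₁) * u (o₀,1) m' := by
            rw [← e2, e1, e3]; ring
          exact mul_right_cancel₀ (hF1 o₀ m') e5
        rw [e4, e6, mul_assoc, mul_comm (R o₁) (u (o₁,1) o₀ / R o₁),
          div_mul_cancel₀ _ (hR o₁).1]
    · rw [ht_ne m hm0]
      exact (hR j).2 m hm0 hmj
  -- diagonal residues
  set a : Fin k → F := fun j => u (j,1) j - R j * t j with hadef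
  have decomp : ∀ j m, u (j,1) m = R j * t m + (if j = m then a j else 0) := by
    intro j m
    split_ifs with h
    · subst h
      simp only [hadef]
      ring
    · rw [add_zero]
      exact hT j m (fun hm => h hm.symm)
  have ha : ∀ j, a j ≠ 0 := by
    intro j ha0
    -- pick i₀ ≠ j
    obtain ⟨i₀, hi₀, -, -⟩ := hfourth j j j
    have hgood : Good k ({(i₀,0),(i₀,1),(j,1)} : Set (Fin k × Fin 2)) := by
      constructor
      · refine le_trans ?_ hk3
        apply (Set.ncard_insert_le _ _).trans
        apply Nat.succ_le_succ
        apply (Set.ncard_insert_le _ _).trans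
        simp
      · rintro ⟨x, y, hxy, hsub⟩
        have key : ∀ w : Fin k, (w,(0:Fin 2)) ∈ ({(i₀,0),(i₀,1),(j,1)} : Set (Fin k × Fin 2))
            → w = i₀ := by
          intro w hw
          simp only [Set.mem_insert_iff, Set.mem_singleton_iff] at hw
          rcases hw with h|h|h
          · exact congrArg Prod.fst h
          · exact absurd h (fun h => pair_snd_ne (by decide) h)
          · exact absurd h (fun h => pair_snd_ne (by decide) h)
        have hx' : x = i₀ := key x (hsub (by simp))
        have hy' : y = i₀ := key y (hsub (by simp))
        exact hxy (hx'.trans hy'.symm)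
    have crit := (li_iff u _).mp ((H _).mpr hgood)
    set g : Fin k × Fin 2 → F := fun z =>
      if z = (i₀,0) then R j * a i₀
      else if z = (i₀,1) then -(R j)
      else if z = (j,1) then R i₀ else 0 with hgdef
    have hsupp : ∀ z, z ∉ ({(i₀,0),(i₀,1),(j,1)} : Set (Fin k × Fin 2)) → g z = 0 := by
      intro z hz
      simp only [Set.mem_insert_iff, Set.mem_singleton_iff] at hz
      push_neg at hz
      simp [hgdef, hz.1, hz.2.1, hz.2.2]
    have hd1 : ((i₀,(1:Fin 2)) : Fin k × Fin 2) ≠ (i₀,0) := fun h => pair_snd_ne (by decide) h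
    have hd2 : ((j,(1:Fin 2)) : Fin k × Fin 2) ≠ (i₀,0) := fun h => pair_snd_ne (by decide) h
    have hd3 : ((j,(1:Fin 2)) : Fin k × Fin 2) ≠ (i₀,1) := by
      intro h
      exact hi₀ (congrArg Prod.fst h).symm
    have hg1 : g (i₀,0) = R j * a i₀ := by simp [hgdef]
    have hg2 : g (i₀,1) = -(R j) := by simp [hgdef, hd1]
    have hg3 : g (j,1) = R i₀ := by simp [hgdef, hd2, hd3]
    have hsum : ∑ z, g z • u z = 0 := by
      have hcollapse : ∑ z, g z • u z
          = ∑ z ∈ ({(i₀,0),(i₀,1),(j,1)} : Finset (Fin k × Fin 2)), g z • u z := by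
        refine sum_support_subset _ _ ?_
        intro z hz
        simp only [Finset.mem_insert, Finset.mem_singleton] at hz
        push_neg at hz
        rw [hsupp z (by simp [hz.1, hz.2.1, hz.2.2]), zero_smul]
      rw [hcollapse, Finset.sum_insert (by simp [hd1.symm, hd2.symm]),
        Finset.sum_insert (by simp [hd3.symm]), Finset.sum_singleton,
        hg1, hg2, hg3]
      funext m
      simp only [Pi.add_apply, Pi.smul_apply, smul_eq_mul, Pi.zero_apply]
      rw [hu0, decomp i₀ m, decomp j m, ha0]
      split_ifs <;> ring
    have := crit g hsupp hsum (j,1)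
    rw [hg3] at this
    exact (hR i₀).1 this
  -- the delta values
  refine ⟨fun i => R i * t i / a i, fun i => div_ne_zero (mul_ne_zero (hR i).1 (ht0 i)) (ha i), ?_⟩
  intro B hB
  by_cases hBe : B = ∅
  · rw [hBe, Finset.sum_empty] at hB
    exact one_ne_zero (by linear_combination hB)
  obtain ⟨i₁, hi₁⟩ := Finset.nonempty_of_ne_empty hBe
  set S : Set (Fin k × Fin 2) :=
    Set.range (fun m : Fin k => (m, if m ∈ B then (1:Fin 2) else 0)) with hSdef
  have hmem1 : ∀ m : Fin k, ((m,(1:Fin 2)) ∈ S ↔ m ∈ B) := by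
    intro m
    constructor
    · rintro ⟨w, hw⟩
      have hw1 : w = m := congrArg Prod.fst hw
      subst hw1
      have hw2 : (if w ∈ B then (1:Fin 2) else 0) = 1 := congrArg Prod.snd hw
      by_cases h : w ∈ B
      · exact h
      · rw [if_neg h] at hw2
        exact absurd hw2 (by decide)
    · intro h
      exact ⟨m, by simp [h]⟩
  have hmem0 : ∀ m : Fin k, ((m,(0:Fin 2)) ∈ S ↔ m ∉ B) := by
    intro m
    constructor
    · rintro ⟨w, hw⟩
      have hw1 : w = m := congrArg Prod.fst hw
      subst hw1
      have hw2 : (if w ∈ B then (1:Fin 2) else 0) = 0 := congrArg Prod.snd hw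
      by_cases h : w ∈ B
      · rw [if_pos h] at hw2
        exact absurd hw2 (by decide)
      · exact h
    · intro h
      exact ⟨m, by simp [h]⟩
  have hgood : Good k S := by
    constructor
    · rw [hSdef, ← Set.image_univ]
      refine (Set.ncard_image_le (Set.toFinite _)).trans ?_
      rw [Set.ncard_univ]
      simp
    · rintro ⟨x, y, hxy, hsub⟩
      have h1 : x ∈ B := (hmem1 x).mp (hsub (by simp))
      have h0 : x ∉ B := (hmem0 x).mp (hsub (by simp))
      exact h0 h1
  have crit := (li_iff u _).mp ((H _).mpr hgood)
  set g : Fin k × Fin 2 → F := fun z =>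
    if z.2 = 1 then (if z.1 ∈ B then -(t z.1) / a z.1 else 0)
    else (if z.1 ∈ B then 0 else -(t z.1)) with hgdef
  have hsupp : ∀ z, z ∉ S → g z = 0 := by
    rintro ⟨m, ε⟩ hz
    have hε : ε = 0 ∨ ε = 1 := by omega
    rcases hε with rfl | rfl
    · have : m ∈ B := by
        by_contra h
        exact hz ((hmem0 m).mpr h)
      simp [hgdef, this]
    · have : m ∉ B := fun h => hz ((hmem1 m).mpr h)
      simp [hgdef, this]
  have hgy : ∀ i, g (i,1) = if i ∈ B then -(t i) / a i else 0 := fun i => by simp [hgdef]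
  have hgx : ∀ i, g (i,0) = if i ∈ B then 0 else -(t i) := fun i => by simp [hgdef]
  have hsum : ∑ z, g z • u z = 0 := by
    funext m
    rw [sum_eval, Pi.zero_apply]
    have hterm : ∀ i, g (i,0) * u (i,0) m + g (i,1) * u (i,1) m
        = (if i = m then (g (m,0) + g (m,1) * a m) else 0) + (g (i,1) * R i) * t m := by
      intro i
      rw [hu0, decomp i m]
      split_ifs with h
      · subst h
        ring
      · ring
    simp only [hterm]
    rw [Finset.sum_add_distrib, Finset.sum_ite_eq' Finset.univ m, ← Finset.sum_mul]
    have hS1 : ∑ i, g (i,1) * R i = 1 := by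
      have he : ∀ i, g (i,1) * R i = if i ∈ B then -(R i * t i / a i) else 0 := by
        intro i
        rw [hgy]
        split_ifs with h
        · ring
        · ring
      rw [Finset.sum_congr rfl (fun i _ => he i), Finset.sum_ite_mem, Finset.univ_inter]
      have : ∑ i ∈ B, -(R i * t i / a i) = -∑ i ∈ B, R i * t i / a i := by
        rw [Finset.sum_neg_distrib]
      rw [this, hB]
      ring
    rw [hS1, one_mul]
    simp only [Finset.mem_univ, if_true]
    rw [hgx, hgy]
    by_cases h : m ∈ B
    · simp only [if_pos h]
      rw [div_mul_cancel₀ _ (ha m)]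
      ring
    · simp only [if_neg h]
      ring
  have := crit g hsupp hsum (i₁,1)
  rw [hgy, if_pos hi₁] at this
  exact (div_ne_zero (neg_ne_zero.mpr (ht0 i₁)) (ha i₁)) this


lemma extract3 [Fintype F] (u : Fin 3 × Fin 2 → (Fin 3 → F))
    (hu0 : ∀ i m, u (i,0) m = if i = m then 1 else 0)
    (H : ∀ J : Set (Fin 3 × Fin 2), LinearIndependent F (fun x : J => u x) ↔ Good 3 J) :
    4 ≤ Fintype.card F := by
  classical
  have hF1 := F1 u (le_refl 3) hu0 H
  set d : Fin 3 → F := fun m => u ((1:Fin 3),(1:Fin 2)) m / u ((0:Fin 3),(1:Fin 2)) m with hddef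
  have hd0 : ∀ m, d m ≠ 0 := fun m => div_ne_zero (hF1 1 m) (hF1 0 m)
  have hdist : ∀ a b m : Fin 3, a ≠ b → a ≠ m → b ≠ m → d a ≠ d b := by
    intro a b m hab ham hbm hdd
    simp only [hddef] at hdd
    rw [div_eq_div_iff (hF1 0 a) (hF1 0 b)] at hdd
    have hgood : Good 3
        ({((0:Fin 3),(1:Fin 2)),((1:Fin 3),(1:Fin 2)),(m,(0:Fin 2))} : Set (Fin 3 × Fin 2)) := by
      constructor
      · apply (Set.ncard_insert_le _ _).trans
        apply Nat.succ_le_succ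
        apply (Set.ncard_insert_le _ _).trans
        simp
      · rintro ⟨x, y, hxy, hsub⟩
        have key : ∀ w : Fin 3, (w,(0:Fin 2)) ∈
            ({((0:Fin 3),(1:Fin 2)),((1:Fin 3),(1:Fin 2)),(m,(0:Fin 2))} : Set (Fin 3 × Fin 2))
            → w = m := by
          intro w hw
          simp only [Set.mem_insert_iff, Set.mem_singleton_iff] at hw
          rcases hw with h|h|h
          · exact absurd h (fun h => pair_snd_ne (by decide) h)
          · exact absurd h (fun h => pair_snd_ne (by decide) h)
          · exact congrArg Prod.fst h
        have hx : x = m := key x (hsub (by simp))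
        have hy : y = m := key y (hsub (by simp))
        exact hxy (hx.trans hy.symm)
    have crit := (li_iff u _).mp ((H _).mpr hgood)
    set g : Fin 3 × Fin 2 → F := fun z =>
      if z = ((0:Fin 3),(1:Fin 2)) then u ((1:Fin 3),(1:Fin 2)) a
      else if z = ((1:Fin 3),(1:Fin 2)) then -(u ((0:Fin 3),(1:Fin 2)) a)
      else if z = (m,(0:Fin 2)) then
        -(u ((1:Fin 3),(1:Fin 2)) a * u ((0:Fin 3),(1:Fin 2)) m
          - u ((0:Fin 3),(1:Fin 2)) a * u ((1:Fin 3),(1:Fin 2)) m)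
      else 0 with hgdef
    have hsupp : ∀ z, z ∉
        ({((0:Fin 3),(1:Fin 2)),((1:Fin 3),(1:Fin 2)),(m,(0:Fin 2))} : Set (Fin 3 × Fin 2))
        → g z = 0 := by
      intro z hz
      simp only [Set.mem_insert_iff, Set.mem_singleton_iff] at hz
      push_neg at hz
      simp only [hgdef]
      rw [if_neg hz.1, if_neg hz.2.1, if_neg hz.2.2]
    have hd1 : (((1:Fin 3),(1:Fin 2)) : Fin 3 × Fin 2) ≠ ((0:Fin 3),(1:Fin 2)) := by decide
    have hd2 : ((m,(0:Fin 2)) : Fin 3 × Fin 2) ≠ ((0:Fin 3),(1:Fin 2)) :=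
      fun h => pair_snd_ne (by decide) h
    have hd3 : ((m,(0:Fin 2)) : Fin 3 × Fin 2) ≠ ((1:Fin 3),(1:Fin 2)) :=
      fun h => pair_snd_ne (by decide) h
    have hg1 : g ((0:Fin 3),(1:Fin 2)) = u ((1:Fin 3),(1:Fin 2)) a := by
      simp [hgdef]
    have hg2 : g ((1:Fin 3),(1:Fin 2)) = -(u ((0:Fin 3),(1:Fin 2)) a) := by
      simp only [hgdef]
      rw [if_neg hd1]
      simp
    have hg3 : g (m,(0:Fin 2)) = -(u ((1:Fin 3),(1:Fin 2)) a * u ((0:Fin 3),(1:Fin 2)) m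
        - u ((0:Fin 3),(1:Fin 2)) a * u ((1:Fin 3),(1:Fin 2)) m) := by
      simp only [hgdef]
      rw [if_neg hd2, if_neg hd3]
      simp
    have hsum : ∑ z, g z • u z = 0 := by
      have hcollapse : ∑ z, g z • u z = ∑ z ∈
          ({((0:Fin 3),(1:Fin 2)),((1:Fin 3),(1:Fin 2)),(m,(0:Fin 2))} : Finset (Fin 3 × Fin 2)),
          g z • u z := by
        refine sum_support_subset _ _ ?_
        intro z hz
        simp only [Finset.mem_insert, Finset.mem_singleton] at hz
        push_neg at hz
        rw [hsupp z (by
          simp only [Set.mem_insert_iff, Set.mem_singleton_iff]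
          push_neg
          exact ⟨hz.1, hz.2.1, hz.2.2⟩), zero_smul]
      rw [hcollapse, Finset.sum_insert (by
          simp only [Finset.mem_insert, Finset.mem_singleton]
          push_neg
          exact ⟨hd1.symm, hd2.symm⟩),
        Finset.sum_insert (by
          simp only [Finset.mem_singleton]
          exact hd3.symm), Finset.sum_singleton, hg1, hg2, hg3]
      funext m'
      simp only [Pi.add_apply, Pi.smul_apply, smul_eq_mul, Pi.zero_apply]
      rw [hu0]
      have hm' : m' = a ∨ m' = b ∨ m' = m := by omega
      rcases hm' with rfl | rfl | rfl
      · rw [if_neg (Ne.symm ham)]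
        ring
      · rw [if_neg (Ne.symm hbm)]
        linear_combination hdd
      · rw [if_pos rfl]
        ring
    have := crit g hsupp hsum ((0:Fin 3),(1:Fin 2))
    rw [hg1] at this
    exact hF1 1 a this
  have c01 : d 0 ≠ d 1 := hdist 0 1 2 (by decide) (by decide) (by decide)
  have c02 : d 0 ≠ d 2 := hdist 0 2 1 (by decide) (by decide) (by decide)
  have c12 : d 1 ≠ d 2 := hdist 1 2 0 (by decide) (by decide) (by decide)
  have hcard : ({0, d 0, d 1, d 2} : Finset F).card = 4 := by
    rw [Finset.card_insert_of_notMem (by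
      simp only [Finset.mem_insert, Finset.mem_singleton]
      push_neg
      exact ⟨Ne.symm (hd0 0), Ne.symm (hd0 1), Ne.symm (hd0 2)⟩)]
    rw [Finset.card_insert_of_notMem (by
      simp only [Finset.mem_insert, Finset.mem_singleton]
      push_neg
      exact ⟨c01, c02⟩)]
    rw [Finset.card_insert_of_notMem (by
      simp only [Finset.mem_singleton]
      exact c12)]
    rfl
  calc (4:ℕ) = ({0, d 0, d 1, d 2} : Finset F).card := hcard.symm
    _ ≤ Fintype.card F := Finset.card_le_univ _


lemma pick_b [Fintype F] (h4 : 4 ≤ Fintype.card F) :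
    ∃ b₁ b₂ : F, b₁ ≠ 0 ∧ b₂ ≠ 0 ∧ b₁ ≠ b₂ ∧
      ∀ S : Finset (Fin 2), (∑ _i ∈ S, (1:F)) ≠ b₁ ∧ (∑ _i ∈ S, (1:F)) ≠ b₂ := by
  classical
  set S₀ : Finset F := {0, 1, 1+1} with hS0
  have hcard2 : S₀.card + 2 ≤ Fintype.card F := by
    rcases eq_or_lt_of_le h4 with h | h
    · -- card = 4 : characteristic 2
      have h2 : (1:F) + 1 = 0 := by
        have hc : ((Fintype.card F : ℕ) : F) = 0 := FiniteField.cast_card_eq_zero F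
        rw [← h] at hc
        have hsq : ((1:F)+1) * ((1:F)+1) = 0 := by push_cast at hc; linear_combination hc
        rcases mul_eq_zero.mp hsq with h'|h' <;> exact h'
      have hsub : S₀ ⊆ {0, 1} := by
        intro x hx
        simp only [hS0, Finset.mem_insert, Finset.mem_singleton] at hx ⊢
        rcases hx with rfl|rfl|rfl
        · exact Or.inl rfl
        · exact Or.inr rfl
        · exact Or.inl h2
      have hle := Finset.card_le_card hsub
      have h01 : ({0, 1} : Finset F).card ≤ 2 :=
        (Finset.card_insert_le _ _).trans (by simp)
      omega
    · have hle : S₀.card ≤ 3 :=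
        (Finset.card_insert_le _ _).trans (Nat.succ_le_succ
          ((Finset.card_insert_le _ _).trans (by simp)))
      omega
  have hcompl : 1 < (Finset.univ \ S₀).card := by
    have hsd := Finset.card_sdiff_of_subset (Finset.subset_univ S₀)
    rw [Finset.card_univ] at hsd
    omega
  obtain ⟨b₁, hb₁, b₂, hb₂, hne⟩ := Finset.one_lt_card.mp hcompl
  have hb₁' : b₁ ∉ S₀ := (Finset.mem_sdiff.mp hb₁).2
  have hb₂' : b₂ ∉ S₀ := (Finset.mem_sdiff.mp hb₂).2
  have hmem : ∀ S : Finset (Fin 2), (∑ _i ∈ S, (1:F)) ∈ S₀ := by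
    intro S
    have hsum : ∑ _i ∈ S, (1:F) = (S.card : F) := by
      rw [Finset.sum_const, nsmul_eq_mul, mul_one]
    have hcard : S.card ≤ 2 := (Finset.card_le_univ S).trans (by simp)
    have h3 : S.card = 0 ∨ S.card = 1 ∨ S.card = 2 := by omega
    rw [hsum]
    rcases h3 with h|h|h <;> rw [h]
    · simp [hS0]
    · simp [hS0]
    · have : ((2:ℕ):F) = 1 + 1 := by push_cast; ring
      rw [this]
      simp [hS0]
  refine ⟨b₁, b₂, fun h => hb₁' (by simp [hS0, h]), fun h => hb₂' (by simp [hS0, h]), hne, ?_⟩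
  intro S
  exact ⟨fun h => hb₁' (h ▸ hmem S), fun h => hb₂' (h ▸ hmem S)⟩

lemma cdelta_to_rhs {n : ℕ} (δ : Fin (n+1) → F) (h0 : ∀ i, δ i ≠ 0)
    (hs : ∀ B : Finset (Fin (n+1)), ∑ i ∈ B, δ i ≠ -1) :
    ∃ (a : Fin n → F) (b₁ b₂ : F), (∀ i, a i ≠ 0) ∧ b₁ ≠ 0 ∧ b₂ ≠ 0 ∧ b₁ ≠ b₂ ∧
      ∀ S : Finset (Fin n), (∑ i ∈ S, a i) ≠ b₁ ∧ (∑ i ∈ S, a i) ≠ b₂ := by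
  classical
  have hemb : ∀ i : Fin n, (Fin.castSuccEmb : Fin n ↪ Fin (n+1)) i = i.castSucc :=
    fun i => rfl
  have hmap : ∀ S : Finset (Fin n),
      ∑ i ∈ S, δ i.castSucc = ∑ j ∈ S.map Fin.castSuccEmb, δ j := by
    intro S
    rw [Finset.sum_map]
    exact Finset.sum_congr rfl fun i _ => by rw [hemb]
  have hlast : ∀ S : Finset (Fin n), Fin.last n ∉ S.map Fin.castSuccEmb := by
    intro S h
    obtain ⟨i, -, hi⟩ := Finset.mem_map.mp h
    rw [hemb] at hi
    exact (Fin.castSucc_lt_last i).ne hi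
  refine ⟨fun i => δ i.castSucc, -1, -1 - δ (Fin.last n), fun i => h0 _, by simp, ?_, ?_, ?_⟩
  · intro h
    apply hs {Fin.last n}
    rw [Finset.sum_singleton]
    linear_combination -h
  · intro h
    exact h0 (Fin.last n) (by linear_combination h)
  · intro S
    constructor
    · rw [hmap]
      exact hs _
    · intro h
      apply hs (insert (Fin.last n) (S.map Fin.castSuccEmb))
      rw [Finset.sum_insert (hlast S), ← hmap]
      linear_combination h

lemma rhs_to_cdelta {n : ℕ} (a : Fin n → F) (b₁ b₂ : F) (ha : ∀ i, a i ≠ 0)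
    (h1 : b₁ ≠ 0) (h12 : b₁ ≠ b₂)
    (hs : ∀ S : Finset (Fin n), (∑ i ∈ S, a i) ≠ b₁ ∧ (∑ i ∈ S, a i) ≠ b₂) :
    ∃ δ : Fin (n+1) → F, (∀ i, δ i ≠ 0) ∧ ∀ B : Finset (Fin (n+1)), ∑ i ∈ B, δ i ≠ -1 := by
  classical
  set δ : Fin (n+1) → F :=
    fun j => Fin.lastCases ((b₂ - b₁)/b₁) (fun i => -(a i)/b₁) j with hδ
  have hδc : ∀ i : Fin n, δ i.castSucc = -(a i)/b₁ := by
    intro i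
    simp only [hδ]
    rw [Fin.lastCases_castSucc]
  have hδl : δ (Fin.last n) = (b₂ - b₁)/b₁ := by
    simp only [hδ]
    rw [Fin.lastCases_last]
  have hemb : ∀ i : Fin n, (Fin.castSuccEmb : Fin n ↪ Fin (n+1)) i = i.castSucc :=
    fun i => rfl
  refine ⟨δ, ?_, ?_⟩
  · intro j
    induction j using Fin.lastCases with
    | last =>
      rw [hδl]
      exact div_ne_zero (sub_ne_zero.mpr (Ne.symm h12)) h1
    | cast i =>
      rw [hδc]
      exact div_ne_zero (neg_ne_zero.mpr (ha i)) h1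
  · intro B hB
    set S : Finset (Fin n) := Finset.univ.filter (fun i => i.castSucc ∈ B) with hS
    have hfil : B.filter (fun j => ¬ j = Fin.last n) = S.map Fin.castSuccEmb := by
      ext j
      simp only [Finset.mem_filter, Finset.mem_map, hS, Finset.mem_univ, true_and]
      constructor
      · rintro ⟨hj, hne⟩
        obtain ⟨i, hi⟩ := Fin.exists_castSucc_eq.mpr hne
        exact ⟨i, by rw [hi]; exact hj, by rw [hemb, hi]⟩
      · rintro ⟨i, hiB, hie⟩
        rw [hemb] at hie
        subst hie
        exact ⟨hiB, (Fin.castSucc_lt_last i).ne⟩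
    have hsplit : ∑ j ∈ B, δ j
        = (if Fin.last n ∈ B then δ (Fin.last n) else 0) + ∑ i ∈ S, δ i.castSucc := by
      rw [← Finset.sum_filter_add_sum_filter_not B (fun j => j = Fin.last n) δ]
      congr 1
      · rw [Finset.filter_eq' B (Fin.last n)]
        split_ifs with h
        · rw [Finset.sum_singleton]
        · rw [Finset.sum_empty]
      · rw [hfil, Finset.sum_map]
        refine Finset.sum_congr rfl fun i _ => by rw [hemb]
    have hcs : ∑ i ∈ S, δ i.castSucc = -(∑ i ∈ S, a i)/b₁ := by
      rw [Finset.sum_congr rfl (fun i _ => hδc i), ← Finset.sum_div, ← Finset.sum_neg_distrib]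
    rw [hsplit, hcs] at hB
    by_cases hl : Fin.last n ∈ B
    · rw [if_pos hl, hδl, ← add_div, div_eq_iff h1] at hB
      exact (hs S).2 (by linear_combination -hB)
    · rw [if_neg hl, zero_add, div_eq_iff h1] at hB
      exact (hs S).1 (by linear_combination -hB)


lemma normalize {k n : ℕ} (hk : 3 ≤ k) (w : Fin k × Fin 2 → (Fin n → F))
    (H₀ : ∀ J : Set (Fin k × Fin 2), LinearIndependent F (fun z : J => w z) ↔ Good k J) :
    ∃ u : Fin k × Fin 2 → (Fin k → F),
      (∀ i m, u (i,0) m = if i = m then 1 else 0) ∧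
      (∀ J : Set (Fin k × Fin 2), LinearIndependent F (fun z : J => u z) ↔ Good k J) := by
  classical
  have hinj0 : Function.Injective (fun i : Fin k => (i,(0:Fin 2))) :=
    fun a b h => congrArg Prod.fst h
  set J₀ : Set (Fin k × Fin 2) := (fun i : Fin k => (i,(0:Fin 2))) '' Set.univ with hJ₀
  have hJ₀card : J₀.ncard = k := by
    rw [hJ₀, Set.ncard_image_of_injective _ hinj0, Set.ncard_univ]
    simp
  have hmem1J₀ : ∀ j : Fin k, ((j,(1:Fin 2)) : Fin k × Fin 2) ∉ J₀ := by
    rintro j ⟨i, -, hi⟩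
    exact pair_snd_ne (by decide) hi
  have hJ₀good : Good k J₀ := by
    refine ⟨le_of_eq hJ₀card, ?_⟩
    rintro ⟨i, j, hij, hsub⟩
    exact hmem1J₀ i (hsub (by simp))
  have hxLI : LinearIndependent F (fun i : Fin k => w (i,0)) := by
    have hli := (H₀ J₀).mpr hJ₀good
    exact hli.comp (fun i : Fin k => (⟨(i,0), ⟨i, Set.mem_univ i, rfl⟩⟩ : J₀))
      (fun a b h => congrArg (fun z : J₀ => (z : Fin k × Fin 2).1) h)
  have hmem : ∀ z : Fin k × Fin 2, w z ∈ Submodule.span F (Set.range (fun i : Fin k => w (i,0))) := by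
    rintro ⟨j, ε⟩
    have hε : ε = 0 ∨ ε = 1 := by omega
    rcases hε with rfl | rfl
    · exact Submodule.subset_span ⟨j, rfl⟩
    · have hnot : ¬ Good k (insert ((j,(1:Fin 2))) J₀) := by
        rintro ⟨hcard, -⟩
        rw [Set.ncard_insert_of_notMem (hmem1J₀ j) (Set.toFinite _), hJ₀card] at hcard
        omega
      have hnli : ¬ LinearIndependent F
          (fun z : (insert ((j,(1:Fin 2))) J₀ : Set (Fin k × Fin 2)) => w z) :=
        fun hli => hnot ((H₀ _).mp hli)
      rw [li_iff] at hnli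
      push_neg at hnli
      obtain ⟨g, hsupp, hsum, z₀, hz₀⟩ := hnli
      have hgj : g ((j,(1:Fin 2))) ≠ 0 := by
        intro h0
        have crit := (li_iff w J₀).mp ((H₀ J₀).mpr hJ₀good)
        refine hz₀ (crit g ?_ hsum z₀)
        intro z hz
        by_cases hzj : z = ((j,(1:Fin 2)))
        · rw [hzj]; exact h0
        · exact hsupp z (fun hm => hz (by
            rcases Set.mem_insert_iff.mp hm with h | h
            · exact absurd h hzj
            · exact h))
      rw [← Finset.add_sum_erase Finset.univ _ (Finset.mem_univ ((j,(1:Fin 2))))] at hsum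
      have hsum_span : ∑ z ∈ Finset.univ.erase ((j,(1:Fin 2))), g z • w z
          ∈ Submodule.span F (Set.range (fun i : Fin k => w (i,0))) := by
        apply Submodule.sum_mem
        intro z hz
        by_cases hzJ : z ∈ J₀
        · obtain ⟨i, -, hi⟩ := hzJ
          apply Submodule.smul_mem
          rw [← hi]
          exact Submodule.subset_span ⟨i, rfl⟩
        · have hg0 : g z = 0 := by
            apply hsupp
            intro hm
            rcases Set.mem_insert_iff.mp hm with h | h
            · exact (Finset.mem_erase.mp hz).1 h
            · exact hzJ h
          rw [hg0, zero_smul]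
          exact Submodule.zero_mem _
      have h1 : g ((j,(1:Fin 2))) • w ((j,(1:Fin 2)))
          = -(∑ z ∈ Finset.univ.erase ((j,(1:Fin 2))), g z • w z) :=
        eq_neg_of_add_eq_zero_left hsum
      have h2 : w ((j,(1:Fin 2)))
          = (g ((j,(1:Fin 2))))⁻¹ • (-(∑ z ∈ Finset.univ.erase ((j,(1:Fin 2))), g z • w z)) := by
        rw [← h1, inv_smul_smul₀ hgj]
      rw [h2]
      exact Submodule.smul_mem _ _ (Submodule.neg_mem _ hsum_span)
  set b := Module.Basis.span hxLI with hb
  set u : Fin k × Fin 2 → (Fin k → F) := fun z => b.equivFun ⟨w z, hmem z⟩ with hu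
  have hu0 : ∀ i m, u (i,0) m = if i = m then 1 else 0 := by
    intro i m
    have hbi : (⟨w (i,0), hmem (i,0)⟩ : Submodule.span F (Set.range (fun i : Fin k => w (i,0)))) = b i := by
      apply Subtype.ext
      rw [hb, Module.Basis.span_apply]
    simp only [hu, hbi]
    rw [Module.Basis.equivFun_self]
  set L : (Fin k → F) →ₗ[F] (Fin n → F) :=
    (Submodule.span F (Set.range (fun i : Fin k => w (i,0)))).subtype.comp (b.equivFun.symm.toLinearMap) with hL
  have hLinj : Function.Injective L := by
    rw [hL, LinearMap.coe_comp]
    exact (Submodule.injective_subtype _).comp b.equivFun.symm.injective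
  have hLu : ∀ z, L (u z) = w z := by
    intro z
    simp only [hu, hL, LinearMap.coe_comp, Function.comp_apply,
      LinearEquiv.coe_coe, LinearEquiv.symm_apply_apply, Submodule.coe_subtype]
  refine ⟨u, hu0, ?_⟩
  intro J
  rw [← H₀ J]
  have heq : (⇑L ∘ fun z : J => u ↑z) = fun z : J => w ↑z := funext fun z => hLu z
  constructor
  · intro hli
    have := hli.map' L (LinearMap.ker_eq_bot.mpr hLinj)
    rwa [heq] at this
  · intro hli
    apply LinearIndependent.of_comp L
    rw [heq]
    exact hli


end Spk

theorem stmt10 (k q : ℕ) (hk : 3 ≤ k) (hq : IsPrimePow q)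
    (F : Type) [Field F] [Fintype F] (hF : Fintype.card F = q)
    {α : Type} (M : Matroid α) (hM : IsFreeSpike M k) :
    Rep M F ↔
      ∃ (a : Fin (k - 1) → F) (b₁ b₂ : F),
        (∀ i, a i ≠ 0) ∧ b₁ ≠ 0 ∧ b₂ ≠ 0 ∧ b₁ ≠ b₂ ∧
          ∀ S : Finset (Fin (k - 1)), (∑ i ∈ S, a i) ≠ b₁ ∧ (∑ i ∈ S, a i) ≠ b₂ := by
  classical
  obtain ⟨f, hE, hI⟩ := hM
  obtain ⟨n', rfl⟩ : ∃ m, k = m + 1 := ⟨k - 1, by omega⟩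
  constructor
  · rintro ⟨n, φ, hφ⟩
    have H₀ := (Spk.bridge f hE hI φ).mp hφ
    obtain ⟨u, hu0, H⟩ := Spk.normalize hk (fun z => φ (f z)) H₀
    by_cases hk4 : 4 ≤ n' + 1
    · obtain ⟨δ, hδ0, hδ⟩ := Spk.extract4 u hk4 hu0 H
      exact Spk.cdelta_to_rhs δ hδ0 hδ
    · have hn : n' = 2 := by omega
      subst hn
      have h4 := Spk.extract3 u hu0 H
      obtain ⟨b₁, b₂, hb1, hb2, hb12, hbs⟩ := Spk.pick_b h4
      exact ⟨fun _ => 1, b₁, b₂, fun _ => one_ne_zero, hb1, hb2, hb12, fun S => hbs S⟩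
  · rintro ⟨a, b₁, b₂, ha, hb1, hb2, hb12, hs⟩
    obtain ⟨δ, hδ0, hδ⟩ := Spk.rhs_to_cdelta (n := n') a b₁ b₂ ha hb1 hb12 hs
    set φ : α → (Fin (n' + 1) → F) :=
      fun x => if h : ∃ z, f z = x then Spk.sv δ h.choose else 0 with hφdef
    show ∃ (nn : ℕ) (ψ : α → (Fin nn → F)),
      ∀ I ⊆ M.E, (M.Indep I ↔ LinearIndependent F (fun x : I => ψ x.1))
    refine ⟨n' + 1, φ, ?_⟩
    apply (Spk.bridge f hE hI _).mpr
    intro J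
    have hcomp : ∀ z : Fin (n' + 1) × Fin 2, φ (f z) = Spk.sv δ z := by
      intro z
      simp only [hφdef]
      rw [dif_pos ⟨z, rfl⟩]
      exact congrArg (Spk.sv δ) (f.injective (⟨z, rfl⟩ : ∃ z', f z' = f z).choose_spec)
    have heq : (fun z : J => φ (f (z : Fin (n' + 1) × Fin 2)))
        = fun z : J => Spk.sv δ (z : Fin (n' + 1) × Fin 2) := funext fun z => hcomp z
    rw [heq]
    exact Spk.construct hk δ hδ0 hδ J
end

section
/- Let k ≥ 3 be an integer and q ≥ 3 a prime power. The rank-k free spike Λ_k is GF(q)-representable if and only if q is composite (i.e., not prime) or k ≤ q - 2. -/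
open Set Matroid

open PaperDefs

namespace SpikeAux

section Sums
variable {G : Type*} [AddCommGroup G] [Fintype G] [DecidableEq G]


variable {G : Type*} [AddCommGroup G] [Fintype G] [DecidableEq G]

lemma finset_univ_of_closed (hc : (Fintype.card G).Prime) {a : G} (ha : a ≠ 0)
    {S : Finset G} (hne : S.Nonempty) (hcl : ∀ s ∈ S, s + a ∈ S) : S = Finset.univ := by
  obtain ⟨s₀, hs₀⟩ := hne
  have horb : ∀ n : ℕ, s₀ + n • a ∈ S := by
    intro n
    induction n with
    | zero => simpa using hs₀
    | succ n ih =>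
      have := hcl _ ih
      rwa [succ_nsmul, ← add_assoc]
  have hord : addOrderOf a = Fintype.card G := by
    have hdvd : addOrderOf a ∣ Fintype.card G := addOrderOf_dvd_card
    rcases (Nat.Prime.eq_one_or_self_of_dvd hc _ hdvd) with h1 | h
    · exact absurd (AddMonoid.addOrderOf_eq_one_iff.mp h1) ha
    · exact h
  have hinj : Function.Injective (fun n : Fin (Fintype.card G) => s₀ + (n : ℕ) • a) := by
    intro n m hh
    simp only [add_right_inj] at hh
    have hmod := nsmul_eq_nsmul_iff_modEq.mp hh
    rw [hord] at hmod
    have := Nat.ModEq.eq_of_lt_of_lt hmod n.isLt m.isLt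
    exact Fin.ext this
  apply Finset.eq_univ_of_card
  refine le_antisymm (Finset.card_le_univ S) ?_
  calc Fintype.card G = (Finset.univ.image (fun n : Fin (Fintype.card G) => s₀ + (n : ℕ) • a)).card := by
        rw [Finset.card_image_of_injective _ hinj, Finset.card_univ, Fintype.card_fin]
    _ ≤ S.card := Finset.card_le_card (by
        intro x hx
        simp only [Finset.mem_image] at hx
        obtain ⟨n, -, rfl⟩ := hx
        exact horb n)

def subsums : List G → Finset G
  | [] => {0}
  | a :: l => subsums l ∪ (subsums l).image (· + a)

omit [Fintype G] in
lemma zero_mem_subsums (l : List G) : (0 : G) ∈ subsums l := by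
  induction l with
  | nil => simp [subsums]
  | cons a l ih => simp [subsums, ih]

lemma card_subsums (hc : (Fintype.card G).Prime) (l : List G) (h0 : ∀ a ∈ l, a ≠ 0) :
    min (Fintype.card G) (l.length + 1) ≤ (subsums l).card := by
  induction l with
  | nil => simp [subsums]
  | cons a l ih =>
    have ha : a ≠ 0 := h0 a List.mem_cons_self
    have ih' := ih (fun b hb => h0 b (List.mem_cons_of_mem a hb))
    by_cases hcl : ∀ s ∈ subsums l, s + a ∈ subsums l
    · have : subsums l = Finset.univ :=
        finset_univ_of_closed hc ha ⟨0, zero_mem_subsums l⟩ hcl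
      have hsub : subsums l ⊆ subsums (a :: l) := Finset.subset_union_left
      have : Fintype.card G ≤ (subsums (a :: l)).card := by
        calc Fintype.card G = (subsums l).card := by rw [this, Finset.card_univ]
          _ ≤ _ := Finset.card_le_card hsub
      exact le_trans (min_le_left _ _) this
    · push_neg at hcl
      obtain ⟨s, hs, hsa⟩ := hcl
      have hsub : insert (s + a) (subsums l) ⊆ subsums (a :: l) := by
        intro x hx
        rcases Finset.mem_insert.mp hx with rfl | hx
        · exact Finset.mem_union_right _ (Finset.mem_image_of_mem _ hs)
        · exact Finset.mem_union_left _ hx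
      have hcard : (subsums l).card + 1 ≤ (subsums (a :: l)).card := by
        have := Finset.card_le_card hsub
        rwa [Finset.card_insert_of_notMem hsa] at this
      rcases le_or_gt (Fintype.card G) (subsums l).card with h | h
      · exact le_trans (min_le_left _ _) (le_trans h (le_trans (Nat.le_succ _) hcard))
      · have : min (Fintype.card G) (l.length + 1) = l.length + 1 ∨
            min (Fintype.card G) (l.length + 1) = Fintype.card G := by
          rcases min_choice (Fintype.card G) (l.length + 1) with h' | h'
          · right; exact h'
          · left; exact h'
        have hll : l.length + 1 ≤ (subsums l).card ∨ Fintype.card G ≤ (subsums l).card := by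
          rcases this with h' | h'
          · left; rw [← h']; exact ih'
          · right; rw [← h']; exact ih'
        rcases hll with h' | h'
        · refine le_trans (min_le_right _ _) ?_
          simpa [List.length_cons] using le_trans (Nat.add_le_add_right h' 1) hcard
        · exact absurd h' (not_le.mpr h)

lemma exists_sublist_of_mem_subsums {l : List G} {x : G} (hx : x ∈ subsums l) :
    ∃ t : List G, t.Sublist l ∧ t.sum = x := by
  induction l generalizing x with
  | nil => exact ⟨[], List.Sublist.refl _, by simpa [subsums] using (Finset.mem_singleton.mp hx).symm⟩
  | cons a l ih =>
    rcases Finset.mem_union.mp hx with h | h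
    · obtain ⟨t, ht, hts⟩ := ih h
      exact ⟨t, ht.cons a, hts⟩
    · obtain ⟨s, hs, rfl⟩ := Finset.mem_image.mp h
      obtain ⟨t, ht, hts⟩ := ih hs
      exact ⟨a :: t, ht.cons₂ a, by simp [hts, add_comm]⟩


lemma exists_nonempty_subset_sum_eq_one {F : Type*} [Field F] [Fintype F] [DecidableEq F]
    (hp : (Fintype.card F).Prime) {k : ℕ} (hk : Fintype.card F ≤ k + 1)
    (d : Fin k → F) (hd : ∀ i, d i ≠ 0) :
    ∃ A : Finset (Fin k), A.Nonempty ∧ ∑ i ∈ A, d i = 1 := by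
  set l : List F := (List.finRange k).map d with hl
  have h0 : ∀ a ∈ l, a ≠ 0 := by
    intro a ha
    obtain ⟨i, -, rfl⟩ := List.mem_map.mp ha
    exact hd i
  have hcard : Fintype.card F ≤ (subsums l).card := by
    have := card_subsums hp l h0
    rwa [hl, List.length_map, List.length_finRange, min_eq_left hk] at this
  have huniv : subsums l = Finset.univ :=
    Finset.eq_univ_of_card _ (le_antisymm (Finset.card_le_univ _) hcard)
  have h1 : (1 : F) ∈ subsums l := huniv ▸ Finset.mem_univ 1
  obtain ⟨t, ht, hts⟩ := exists_sublist_of_mem_subsums h1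
  obtain ⟨t', ht', rfl⟩ := List.sublist_map_iff.mp ht
  have hnd : t'.Nodup := ht'.nodup (List.nodup_finRange k)
  refine ⟨t'.toFinset, ?_, ?_⟩
  · rcases t' with _ | ⟨a, t''⟩
    · simp at hts
    · exact ⟨a, by simp⟩
  · rw [List.sum_toFinset _ hnd, hts]

end Sums

section Spike
variable {k n : ℕ} {F : Type} [Field F]


def spikeVec (v : Fin k → F) (p : Fin k × Fin 2) : Fin k → F :=
  fun j => (if j = p.1 then 1 else 0) + (if p.2 = 1 then v j else 0)

lemma sum_spikeVec_apply (v : Fin k → F) (g : Fin k → F) (c : Fin k → Fin 2)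
    (s : Finset (Fin k)) (m : Fin k) :
    (∑ i ∈ s, g i • spikeVec v (i, c i)) m
      = (if m ∈ s then g m else 0) + (∑ i ∈ s.filter (fun i => c i = 1), g i) * v m := by
  classical
  rw [Finset.sum_apply]
  simp only [Pi.smul_apply, spikeVec, smul_eq_mul, mul_add]
  rw [Finset.sum_add_distrib]
  congr 1
  · simp [mul_ite, eq_comm]
  · rw [Finset.sum_filter, Finset.sum_mul]
    congr 1
    funext i
    by_cases h : c i = 1 <;> simp [h]

lemma li_choice (v : Fin k → F)
    (hvs : ∀ A : Finset (Fin k), ∑ i ∈ A, v i ≠ -1) (c : Fin k → Fin 2) :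
    LinearIndependent F (fun i : Fin k => spikeVec v (i, c i)) := by
  classical
  rw [Fintype.linearIndependent_iff]
  intro g hg
  have hm : ∀ m : Fin k,
      g m + (∑ i ∈ Finset.univ.filter (fun i => c i = 1), g i) * v m = 0 := by
    intro m
    have := congrFun hg m
    rwa [sum_spikeVec_apply, if_pos (Finset.mem_univ m)] at this
  set A := Finset.univ.filter (fun i => c i = 1) with hA
  set T := ∑ i ∈ A, g i with hT
  have hT0 : T = 0 := by
    have hsum : ∑ m ∈ A, (g m + T * v m) = 0 := Finset.sum_eq_zero (fun m _ => hm m)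
    rw [Finset.sum_add_distrib, ← hT, ← Finset.mul_sum] at hsum
    have h2 : T * (1 + ∑ m ∈ A, v m) = 0 := by linear_combination hsum
    rcases mul_eq_zero.mp h2 with h | h
    · exact h
    · exact absurd (by linear_combination h) (hvs A)
  intro i
  have := hm i
  rwa [hT0, zero_mul, add_zero] at this

lemma li_oneleg (v : Fin k → F) (hv0 : ∀ i, v i ≠ 0) (i₀ j : Fin k) (hij : i₀ ≠ j)
    (c : Fin k → Fin 2) (hc : c i₀ = 1) :
    LinearIndependent F
      (fun l : Fin k => if l = j then spikeVec v (i₀, 0) else spikeVec v (l, c l)) := by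
  classical
  rw [Fintype.linearIndependent_iff]
  intro g hg
  set T := ∑ l ∈ (Finset.univ.erase j).filter (fun l => c l = 1), g l with hT
  have hval : ∀ m, g j * (if m = i₀ then 1 else 0)
      + ((if m ∈ Finset.univ.erase j then g m else 0) + T * v m) = 0 := by
    intro m
    have h0 := congrFun hg m
    rw [← Finset.add_sum_erase _ _ (Finset.mem_univ j)] at h0
    simp only [eq_self_iff_true, if_true] at h0
    have hrest : ∀ l ∈ Finset.univ.erase j,
        g l • (if l = j then spikeVec v (i₀, 0) else spikeVec v (l, c l)) = g l • spikeVec v (l, c l) := by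
      intro l hl
      rw [if_neg (Finset.ne_of_mem_erase hl)]
    rw [Finset.sum_congr rfl hrest] at h0
    have h1 := h0
    rw [Pi.add_apply, Pi.zero_apply] at h1
    rw [sum_spikeVec_apply] at h1
    have h2 : (g j • spikeVec v (i₀, 0)) m = g j * (if m = i₀ then 1 else 0) := by
      simp [spikeVec]
    rw [h2] at h1
    rw [← hT] at h1
    exact h1
  have hTz : T = 0 := by
    have := hval j
    rw [if_neg (fun h => hij (h.symm)), mul_zero, if_neg (fun h => (Finset.mem_erase.mp h).1 rfl),
      zero_add, zero_add] at this
    exact (mul_eq_zero.mp this).resolve_right (hv0 j)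
  have hother : ∀ m, m ≠ j → m ≠ i₀ → g m = 0 := by
    intro m hmj hmi
    have := hval m
    rwa [hTz, zero_mul, add_zero, if_neg hmi, mul_zero, zero_add,
      if_pos (Finset.mem_erase.mpr ⟨hmj, Finset.mem_univ m⟩)] at this
  have hgi₀ : g i₀ = 0 := by
    have : T = g i₀ := by
      rw [hT]
      apply Finset.sum_eq_single i₀
      · intro l hl hli
        exact hother l (Finset.ne_of_mem_erase (Finset.mem_of_mem_filter l hl)) hli
      · intro hnot
        exact absurd (Finset.mem_filter.mpr ⟨Finset.mem_erase.mpr ⟨hij, Finset.mem_univ _⟩, hc⟩) hnot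
    rw [← this, hTz]
  have hgj : g j = 0 := by
    have := hval i₀
    rwa [hTz, zero_mul, add_zero, if_pos rfl, mul_one,
      if_pos (Finset.mem_erase.mpr ⟨hij, Finset.mem_univ _⟩), hgi₀, add_zero] at this
  intro l
  by_cases hlj : l = j
  · rw [hlj]; exact hgj
  · by_cases hli : l = i₀
    · rw [hli]; exact hgi₀
    · exact hother l hlj hli


lemma not_li_of_large (φ : Fin k × Fin 2 → Fin k → F) {J : Set (Fin k × Fin 2)}
    (h : k < J.ncard) : ¬ LinearIndependent F (fun x : J => φ x.1) := by
  intro hli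
  classical
  haveI : Fintype J := (Set.toFinite J).fintype
  have hle := hli.fintype_card_le_finrank
  rw [Module.finrank_fintype_fun_eq_card, Fintype.card_fin] at hle
  have hc : J.ncard = Fintype.card J := by
    rw [← Nat.card_coe_set_eq, Nat.card_eq_fintype_card]
  omega

lemma spikeVec_rel (v : Fin k → F) (i j : Fin k) :
    spikeVec v (i, 1) = spikeVec v (i, 0) + spikeVec v (j, 1) - spikeVec v (j, 0) := by
  funext m
  simp only [spikeVec, Pi.add_apply, Pi.sub_apply]
  ring

lemma not_li_twolegs (v : Fin k → F) {J : Set (Fin k × Fin 2)} {i j : Fin k} (hij : i ≠ j)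
    (hsub : {(i,(0:Fin 2)),(i,1),(j,0),(j,1)} ⊆ J) :
    ¬ LinearIndependent F (fun x : J => spikeVec v x.1) := by
  intro hli
  have hi0 : ((i,(0:Fin 2)) : Fin k × Fin 2) ∈ J := hsub (by simp)
  have hi1 : ((i,(1:Fin 2)) : Fin k × Fin 2) ∈ J := hsub (by simp)
  have hj0 : ((j,(0:Fin 2)) : Fin k × Fin 2) ∈ J := hsub (by simp)
  have hj1 : ((j,(1:Fin 2)) : Fin k × Fin 2) ∈ J := hsub (by simp)
  set s : Set J := {y : J | (y : Fin k × Fin 2) ∈ ({(i,(0:Fin 2)),(j,0),(j,1)} : Set (Fin k × Fin 2))} with hs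
  have hx : (⟨(i,1), hi1⟩ : J) ∉ s := by
    simp only [hs, Set.mem_setOf_eq, Set.mem_insert_iff, Set.mem_singleton_iff]
    push_neg
    refine ⟨?_, ?_, ?_⟩
    · intro h; simpa using congrArg Prod.snd h
    · intro h; exact hij (congrArg Prod.fst h)
    · intro h; exact hij (congrArg Prod.fst h)
  have hspan : spikeVec v ((i,(1:Fin 2))) ∈
      Submodule.span F ((fun x : J => spikeVec v x.1) '' s) := by
    have h1 : spikeVec v (i,0) ∈ (fun x : J => spikeVec v x.1) '' s :=
      ⟨⟨(i,0), hi0⟩, by simp [hs], rfl⟩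
    have h2 : spikeVec v (j,1) ∈ (fun x : J => spikeVec v x.1) '' s :=
      ⟨⟨(j,1), hj1⟩, by simp [hs], rfl⟩
    have h3 : spikeVec v (j,0) ∈ (fun x : J => spikeVec v x.1) '' s :=
      ⟨⟨(j,0), hj0⟩, by simp [hs], rfl⟩
    rw [spikeVec_rel v i j]
    exact Submodule.sub_mem _ (Submodule.add_mem _ (Submodule.subset_span h1)
      (Submodule.subset_span h2)) (Submodule.subset_span h3)
  exact hli.notMem_span_image hx hspan

lemma fin2_cases (a : Fin 2) : a = 0 ∨ a = 1 := by omega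

lemma backward_core (v : Fin k → F) (hv0 : ∀ i, v i ≠ 0)
    (hvs : ∀ A : Finset (Fin k), ∑ i ∈ A, v i ≠ -1)
    (J : Set (Fin k × Fin 2)) :
    LinearIndependent F (fun x : J => spikeVec v x.1) ↔
      (J.ncard ≤ k ∧ ¬ ∃ i j : Fin k, i ≠ j ∧
        ({(i,(0:Fin 2)),(i,1),(j,0),(j,1)} : Set (Fin k × Fin 2)) ⊆ J) := by
  constructor
  · intro hli
    constructor
    · by_contra h
      exact not_li_of_large _ (lt_of_not_ge h) hli
    · rintro ⟨i, j, hij, hsub⟩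
      exact not_li_twolegs v hij hsub hli
  · rintro ⟨hnc, hlegs⟩
    classical
    set c : Fin k → Fin 2 := fun i => if (i,(1:Fin 2)) ∈ J then 1 else 0 with hc
    by_cases hL : ∃ i₀ : Fin k, (i₀,(0:Fin 2)) ∈ J ∧ (i₀,(1:Fin 2)) ∈ J
    · obtain ⟨i₀, hi₀0, hi₀1⟩ := hL
      have huniq : ∀ i : Fin k, (i,(0:Fin 2)) ∈ J → (i,(1:Fin 2)) ∈ J → i = i₀ := by
        intro i h0 h1
        by_contra hne
        refine hlegs ⟨i, i₀, hne, ?_⟩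
        intro p hp
        rcases hp with rfl | hp
        · exact h0
        rcases hp with rfl | hp
        · exact h1
        rcases hp with rfl | hp
        · exact hi₀0
        rcases hp with rfl
        exact hi₀1
      have hfin : J.Finite := Set.toFinite J
      set Jf : Finset (Fin k × Fin 2) := hfin.toFinset with hJf
      have hJfc : Jf.card ≤ k := by
        rw [← Set.ncard_eq_toFinset_card J hfin]
        exact hnc
      set P : Finset (Fin k) := Jf.image Prod.fst with hP
      have hi₀Jf : (i₀,(0:Fin 2)) ∈ Jf := (Set.Finite.mem_toFinset hfin).mpr hi₀0
      have hi₁Jf : (i₀,(1:Fin 2)) ∈ Jf := (Set.Finite.mem_toFinset hfin).mpr hi₀1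
      have hPe : P ⊆ (Jf.erase (i₀,(1:Fin 2))).image Prod.fst := by
        intro x hx
        obtain ⟨p, hp, rfl⟩ := Finset.mem_image.mp hx
        by_cases hsp : p = (i₀,(1:Fin 2))
        · subst hsp
          refine Finset.mem_image.mpr ⟨(i₀,(0:Fin 2)), ?_, rfl⟩
          exact Finset.mem_erase.mpr ⟨by simp, hi₀Jf⟩
        · exact Finset.mem_image.mpr ⟨p, Finset.mem_erase.mpr ⟨hsp, hp⟩, rfl⟩
      have hk0 : 0 < k := i₀.pos
      have hPcard : P.card < k := by
        calc P.card ≤ ((Jf.erase (i₀,(1:Fin 2))).image Prod.fst).card := Finset.card_le_card hPe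
          _ ≤ (Jf.erase (i₀,(1:Fin 2))).card := Finset.card_image_le
          _ = Jf.card - 1 := Finset.card_erase_of_mem hi₁Jf
          _ < k := by omega
      obtain ⟨j, hjP⟩ : ∃ j : Fin k, j ∉ P := by
        by_contra hall
        push_neg at hall
        have hsub : (Finset.univ : Finset (Fin k)) ⊆ P := fun x _ => hall x
        have := Finset.card_le_card hsub
        rw [Finset.card_univ, Fintype.card_fin] at this
        omega
      have hjmem : ∀ s : Fin 2, (j, s) ∉ J := by
        intro s hs
        exact hjP (Finset.mem_image.mpr ⟨(j,s), (Set.Finite.mem_toFinset hfin).mpr hs, rfl⟩)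
      have hji₀ : i₀ ≠ j := by
        intro h
        exact hjmem 0 (h ▸ hi₀0)
      have hci₀ : c i₀ = 1 := by rw [hc]; simp [hi₀1]
      have hLI := li_oneleg v hv0 i₀ j hji₀ c hci₀
      set g : J → Fin k :=
        fun x => if (x : Fin k × Fin 2) = (i₀,(0:Fin 2)) then j else (x : Fin k × Fin 2).1 with hg
      have hgne : ∀ x : J, (x : Fin k × Fin 2).1 ≠ j := by
        intro x hj1
        exact hjmem (x : Fin k × Fin 2).2
          ((Prod.ext hj1 rfl : (x : Fin k × Fin 2) = (j, (x : Fin k × Fin 2).2)) ▸ x.2)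
      have hsnd : ∀ x : J, ¬((x : Fin k × Fin 2) = (i₀,(0:Fin 2))) →
          c (x : Fin k × Fin 2).1 = (x : Fin k × Fin 2).2 := by
        intro x hxs
        rcases fin2_cases (x : Fin k × Fin 2).2 with h2 | h2
        · rw [h2, hc]
          simp only [ite_eq_right_iff]
          intro h1
          have h0 : ((x : Fin k × Fin 2).1, (0:Fin 2)) ∈ J :=
            (Prod.ext rfl h2 : (x : Fin k × Fin 2) = ((x : Fin k × Fin 2).1, (0:Fin 2))) ▸ x.2
          exact absurd (Prod.ext (huniq _ h0 h1) h2) hxs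
        · rw [h2, hc]
          have h1 : ((x : Fin k × Fin 2).1, (1:Fin 2)) ∈ J :=
            (Prod.ext rfl h2 : (x : Fin k × Fin 2) = ((x : Fin k × Fin 2).1, (1:Fin 2))) ▸ x.2
          simp [h1]
      have hinj : Function.Injective g := by
        intro x y hxy
        rw [hg] at hxy
        simp only at hxy
        by_cases hx : (x : Fin k × Fin 2) = (i₀,(0:Fin 2)) <;>
          by_cases hy : (y : Fin k × Fin 2) = (i₀,(0:Fin 2))
        · exact Subtype.ext (hx.trans hy.symm)
        · rw [if_pos hx, if_neg hy] at hxy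
          exact absurd hxy.symm (hgne y)
        · rw [if_neg hx, if_pos hy] at hxy
          exact absurd hxy (hgne x)
        · rw [if_neg hx, if_neg hy] at hxy
          by_cases h2 : (x : Fin k × Fin 2).2 = (y : Fin k × Fin 2).2
          · exact Subtype.ext (Prod.ext hxy h2)
          · exfalso
            have hcx := hsnd x hx
            have hcy := hsnd y hy
            rw [← hxy] at hcy
            exact h2 (hcx.symm.trans hcy)
      have hcomp := hLI.comp g hinj
      have heq : ((fun l : Fin k => if l = j then spikeVec v (i₀, 0) else spikeVec v (l, c l)) ∘ g)
          = fun x : J => spikeVec v (x : Fin k × Fin 2) := by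
        funext x
        simp only [Function.comp_apply, hg]
        by_cases hx : (x : Fin k × Fin 2) = (i₀,(0:Fin 2))
        · rw [if_pos hx, if_pos rfl, hx]
        · rw [if_neg hx, if_neg (hgne x), hsnd x hx, Prod.mk.eta]
      rw [heq] at hcomp
      exact hcomp
    · push_neg at hL
      have hLI := li_choice v hvs c
      have hsnd : ∀ x : J, c (x : Fin k × Fin 2).1 = (x : Fin k × Fin 2).2 := by
        intro x
        rcases fin2_cases (x : Fin k × Fin 2).2 with h2 | h2
        · rw [h2, hc]
          simp only [ite_eq_right_iff]
          intro h1
          have h0 : ((x : Fin k × Fin 2).1, (0:Fin 2)) ∈ J :=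
            (Prod.ext rfl h2 : (x : Fin k × Fin 2) = ((x : Fin k × Fin 2).1, (0:Fin 2))) ▸ x.2
          exact absurd h1 (hL _ h0)
        · rw [h2, hc]
          have h1 : ((x : Fin k × Fin 2).1, (1:Fin 2)) ∈ J :=
            (Prod.ext rfl h2 : (x : Fin k × Fin 2) = ((x : Fin k × Fin 2).1, (1:Fin 2))) ▸ x.2
          simp [h1]
      have hinj : Function.Injective (fun x : J => (x : Fin k × Fin 2).1) := by
        intro x y hxy
        simp only at hxy
        by_cases h2 : (x : Fin k × Fin 2).2 = (y : Fin k × Fin 2).2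
        · exact Subtype.ext (Prod.ext hxy h2)
        · exfalso
          have hcx := hsnd x
          have hcy := hsnd y
          rw [← hxy] at hcy
          exact h2 (hcx.symm.trans hcy)
      have hcomp := hLI.comp (fun x : J => (x : Fin k × Fin 2).1) hinj
      have heq : ((fun i : Fin k => spikeVec v (i, c i)) ∘ (fun x : J => (x : Fin k × Fin 2).1))
          = fun x : J => spikeVec v (x : Fin k × Fin 2) := by
        funext x
        simp only [Function.comp_apply]
        rw [hsnd x, Prod.mk.eta]
      rw [heq] at hcomp
      exact hcomp


end Spike


lemma exists_good_v {F : Type} [Field F] [Fintype F] {k q : ℕ} (hF : Fintype.card F = q)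
    (hq3 : 3 ≤ q) (hcond : ¬ q.Prime ∨ k ≤ q - 2) :
    ∃ v : Fin k → F, (∀ i, v i ≠ 0) ∧ ∀ A : Finset (Fin k), ∑ i ∈ A, v i ≠ -1 := by
  classical
  set p := ringChar F with hp
  haveI : CharP F p := ringChar.charP F
  obtain ⟨n, hpp, hcard⟩ := FiniteField.card F p
  rw [hF] at hcard
  by_cases hqp : q.Prime
  · -- q prime, so k ≤ q - 2 and char F = q
    have hk2 : k ≤ q - 2 := hcond.resolve_left (not_not_intro hqp)
    have hpq : p = q := by
      have hdvd : p ∣ q := hcard ▸ dvd_pow_self p n.ne_zero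
      exact (Nat.prime_dvd_prime_iff_eq hpp hqp).mp hdvd
    refine ⟨fun _ => 1, fun i => one_ne_zero, ?_⟩
    intro A hA
    have hsum : ∑ i ∈ A, (1:F) = ((A.card : ℕ) : F) := by simp
    rw [hsum] at hA
    have : (((A.card + 1 : ℕ)) : F) = 0 := by push_cast; rw [hA]; ring
    rw [CharP.cast_eq_zero_iff F p] at this
    have hle : A.card + 1 ≤ k + 1 := by
      have := Finset.card_le_univ A
      simp only [Finset.card_univ, Fintype.card_fin] at this
      omega
    have := Nat.le_of_dvd (by omega) this
    omega
  · -- q not prime: char p < q, pick h outside the prime subfield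
    have hn2 : 2 ≤ (n : ℕ) := by
      by_contra hn
      have : (n : ℕ) = 1 := by have := n.pos; omega
      rw [this, pow_one] at hcard
      exact hqp (hcard ▸ hpp)
    have hplt : p < q := by
      calc p = p ^ 1 := (pow_one p).symm
        _ < p ^ (n:ℕ) := Nat.pow_lt_pow_right hpp.one_lt (by omega)
        _ = q := hcard.symm
    haveI : Fact p.Prime := ⟨hpp⟩
    set ζ : ZMod p →+* F := ZMod.castHom dvd_rfl F with hζ
    have hnotsurj : ¬ Function.Surjective ζ := by
      intro hs
      have := Fintype.card_le_of_surjective ζ hs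
      rw [ZMod.card, hF] at this
      omega
    obtain ⟨h, hh⟩ : ∃ h : F, ∀ z : ZMod p, ζ z ≠ h := by
      simp only [Function.Surjective, not_forall] at hnotsurj
      obtain ⟨h, hh⟩ := hnotsurj
      exact ⟨h, fun z hz => hh ⟨z, hz⟩⟩
    refine ⟨fun _ => h, fun i h0 => hh 0 (by simp [h0]), ?_⟩
    intro A hA
    have hsum : ∑ i ∈ A, h = ((A.card : ℕ) : F) * h := by
      rw [Finset.sum_const, nsmul_eq_mul]
    rw [hsum] at hA
    have hcast : ((A.card : ℕ) : F) = ζ ((A.card : ℕ) : ZMod p) := by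
      rw [map_natCast]
    by_cases hz : ((A.card : ℕ) : ZMod p) = 0
    · rw [hcast, hz, map_zero, zero_mul] at hA
      exact (by norm_num : (0:F) ≠ -1) hA
    · apply hh (((A.card : ℕ) : ZMod p)⁻¹ * (-1))
      rw [map_mul, map_inv₀, map_neg, map_one, ← hcast]
      have hC : ((A.card : ℕ) : F) ≠ 0 := by
        rw [hcast]
        intro h0
        exact hz (by
          have : Function.Injective ζ := ζ.injective
          exact this (by rw [h0, map_zero]))
      field_simp
      rw [mul_comm] at hA
      rw [← hA, mul_comm]



lemma li_image_iff {k : ℕ} {F : Type} [Field F] {V : Type} [AddCommGroup V] [Module F V]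
    {α : Type} (f : Fin k × Fin 2 ↪ α) (φ : α → V) (J : Set (Fin k × Fin 2)) :
    LinearIndependent F (fun x : (f '' J : Set α) => φ x.1) ↔
      LinearIndependent F (fun x : J => φ (f x.1)) := by
  rw [← linearIndependent_equiv (Equiv.Set.image f J f.injective)]
  have : (fun x : (f '' J : Set α) => φ x.1) ∘ (Equiv.Set.image f J f.injective) =
      fun x : J => φ (f x.1) := by
    funext x
    simp [Equiv.Set.image, Equiv.Set.imageOfInjOn]
  rw [this]

lemma cond_iff {k : ℕ} {α : Type} (f : Fin k × Fin 2 ↪ α) (J : Set (Fin k × Fin 2)) :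
    ((f '' J).Finite ∧ (f '' J).ncard ≤ k ∧
      ¬ ∃ i j : Fin k, i ≠ j ∧ {f (i,0), f (i,1), f (j,0), f (j,1)} ⊆ f '' J) ↔
    (J.ncard ≤ k ∧ ¬ ∃ i j : Fin k, i ≠ j ∧
      {(i,(0:Fin 2)), (i,1), (j,0), (j,1)} ⊆ J) := by
  have hfin : (f '' J).Finite := (J.toFinite).image f
  have hnc : (f '' J).ncard = J.ncard := Set.ncard_image_of_injective J f.injective
  have hlegs : ∀ i j : Fin k,
      ({f (i,0), f (i,1), f (j,0), f (j,1)} ⊆ f '' J ↔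
        {(i,(0:Fin 2)), (i,1), (j,0), (j,1)} ⊆ J) := by
    intro i j
    have himg : ({f (i,0), f (i,1), f (j,0), f (j,1)} : Set α) =
        f '' {(i,(0:Fin 2)), (i,1), (j,0), (j,1)} := by
      simp [Set.image_insert_eq]
    rw [himg, Set.image_subset_image_iff f.injective]
  constructor
  · rintro ⟨-, h1, h2⟩
    refine ⟨hnc ▸ h1, ?_⟩
    rintro ⟨i, j, hij, hsub⟩
    exact h2 ⟨i, j, hij, (hlegs i j).mpr hsub⟩
  · rintro ⟨h1, h2⟩
    refine ⟨hfin, hnc ▸ h1, ?_⟩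
    rintro ⟨i, j, hij, hsub⟩
    exact h2 ⟨i, j, hij, (hlegs i j).mp hsub⟩


section Fwd
lemma fin2_01 : (0:Fin 2) ≠ 1 := by decide
lemma fin2_10 : (1:Fin 2) ≠ 0 := by decide

lemma inj3 {β : Type*} {p1 p2 p3 : β} (h12 : p1 ≠ p2) (h13 : p1 ≠ p3)
    (h23 : p2 ≠ p3) : Function.Injective ![p1, p2, p3] := by
  intro u v h
  fin_cases u <;> fin_cases v <;> simp_all

lemma inj4 {β : Type*} {p1 p2 p3 p4 : β} (h12 : p1 ≠ p2) (h13 : p1 ≠ p3) (h14 : p1 ≠ p4)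
    (h23 : p2 ≠ p3) (h24 : p2 ≠ p4) (h34 : p3 ≠ p4) : Function.Injective ![p1, p2, p3, p4] := by
  intro u v h
  fin_cases u <;> fin_cases v <;> simp_all

lemma prod_ne_fst {β γ : Type*} {b1 b2 : β} {c1 c2 : γ} (h : b1 ≠ b2) : (b1,c1) ≠ (b2,c2) :=
  fun he => h (congrArg Prod.fst he)

lemma prod_ne_snd {β γ : Type*} {b1 b2 : β} {c1 c2 : γ} (h : c1 ≠ c2) : (b1,c1) ≠ (b2,c2) :=
  fun he => h (congrArg Prod.snd he)

lemma forward_core {k n q : ℕ} {F : Type} [Field F] [Fintype F]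
    (hF : Fintype.card F = q) (hk : 3 ≤ k) (hq3 : 3 ≤ q) (hqp : q.Prime) (hkq : q - 2 < k)
    (ψ : Fin k × Fin 2 → (Fin n → F))
    (H : ∀ J : Set (Fin k × Fin 2),
        LinearIndependent F (fun x : J => ψ x.1) ↔
          (J.ncard ≤ k ∧ ¬ ∃ i j : Fin k, i ≠ j ∧
            ({(i,(0:Fin 2)),(i,1),(j,0),(j,1)} : Set (Fin k × Fin 2)) ⊆ J)) : False := by
  classical
  -- family version of H
  have Hfam : ∀ {m : ℕ} (g : Fin m → Fin k × Fin 2), Function.Injective g →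
      (LinearIndependent F (ψ ∘ g) ↔ (m ≤ k ∧ ¬ ∃ i j : Fin k, i ≠ j ∧
        ({(i,(0:Fin 2)),(i,1),(j,0),(j,1)} : Set (Fin k × Fin 2)) ⊆ Set.range g)) := by
    intro m g hg
    have hn : (Set.range g).ncard = m := by
      rw [← Set.image_univ, Set.ncard_image_of_injective _ hg, Set.ncard_univ,
        Nat.card_eq_fintype_card, Fintype.card_fin]
    have he : (fun x : (Set.range g) => ψ x.1) ∘ (Equiv.ofInjective g hg) = ψ ∘ g := by
      funext i
      rfl
    have h1 : LinearIndependent F (ψ ∘ g) ↔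
        LinearIndependent F (fun x : (Set.range g) => ψ x.1) := by
      rw [← he]
      exact linearIndependent_equiv (Equiv.ofInjective g hg)
    rw [h1, H (Set.range g), hn]
  have Huniq : ∀ {m : ℕ} (g : Fin m → Fin k × Fin 2), Function.Injective g → m ≤ k →
      ∀ (a : Fin k), (∀ i : Fin k, (i,(0:Fin 2)) ∈ Set.range g →
        (i,(1:Fin 2)) ∈ Set.range g → i = a) →
      LinearIndependent F (ψ ∘ g) := by
    intro m g hg hm a ha
    rw [Hfam g hg]
    refine ⟨hm, ?_⟩
    rintro ⟨i, j, hij, hsub⟩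
    have hi := ha i (hsub (by simp)) (hsub (by simp))
    have hj := ha j (hsub (by simp)) (hsub (by simp))
    exact hij (hi.trans hj.symm)
  set x : Fin k → Fin n → F := fun i => ψ (i, 0) with hxdef
  set y : Fin k → Fin n → F := fun i => ψ (i, 1) with hydef
  have a0 : Fin k := ⟨0, by omega⟩
  -- basic independent families
  have hx : LinearIndependent F x := by
    refine Huniq (fun i : Fin k => ((i, 0) : Fin k × Fin 2))
      (fun u v h => congrArg Prod.fst h) le_rfl a0 ?_
    intro i h0 h1
    obtain ⟨w, hw⟩ := h1
    exact absurd (show (0:Fin 2) = 1 from congrArg Prod.snd hw) fin2_01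
  have htriple : ∀ (a b : Fin k) (s : Fin 2), a ≠ b →
      LinearIndependent F ![x a, y a, ψ (b, s)] := by
    intro a b s hab
    have hginj : Function.Injective ![((a,0) : Fin k × Fin 2), (a,1), (b,s)] :=
      inj3 (prod_ne_snd fin2_01) (prod_ne_fst hab) (prod_ne_fst hab)
    have heq : ψ ∘ ![((a,0) : Fin k × Fin 2), (a,1), (b,s)] = ![x a, y a, ψ (b, s)] := by
      funext i
      fin_cases i <;> rfl
    rw [← heq]
    refine Huniq _ hginj (by omega) a ?_
    intro i h0 h1
    rw [Matrix.range_cons, Matrix.range_cons, Matrix.range_cons, Matrix.range_empty] at h0 h1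
    simp only [Set.union_empty, Set.mem_union, Set.mem_singleton_iff, Prod.ext_iff] at h0 h1
    rcases h1 with ⟨h,h'⟩ | ⟨h,h'⟩ | ⟨h,h'⟩
    · exact absurd h' (by decide)
    · exact h
    · -- (i,1) = (b,s) : then s = 1, i = b; use h0
      exfalso
      rcases h0 with ⟨g,g'⟩ | ⟨g,g'⟩ | ⟨g,g'⟩
      · exact hab (g.symm.trans h)
      · exact absurd g' (by decide)
      · rw [← h'] at g'
        exact absurd g' (by decide)
  have honeleg : ∀ (i j : Fin k),
      LinearIndependent F (ψ ∘ (fun l : Fin k => if l = j then ((i,1) : Fin k × Fin 2) else (l,0))) := by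
    intro i j
    have hginj : Function.Injective
        (fun l : Fin k => if l = j then ((i,1) : Fin k × Fin 2) else (l,0)) := by
      intro u v huv
      dsimp only at huv
      by_cases hu : u = j <;> by_cases hv : v = j
      · exact hu.trans hv.symm
      · rw [if_pos hu, if_neg hv] at huv
        exact absurd (show (1:Fin 2) = 0 from congrArg Prod.snd huv) fin2_10
      · rw [if_neg hu, if_pos hv] at huv
        exact absurd (show (0:Fin 2) = 1 from congrArg Prod.snd huv) fin2_01
      · rw [if_neg hu, if_neg hv] at huv
        exact congrArg Prod.fst huv
    refine Huniq _ hginj le_rfl i ?_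
    intro i' h0 h1
    obtain ⟨w, hw⟩ := h1
    dsimp only at hw
    by_cases hwj : w = j
    · rw [if_pos hwj] at hw
      exact (congrArg Prod.fst hw).symm
    · rw [if_neg hwj] at hw
      exact absurd (show (0:Fin 2) = 1 from congrArg Prod.snd hw) fin2_01
  have hchoice : ∀ (c : Fin k → Fin 2),
      LinearIndependent F (ψ ∘ (fun l : Fin k => ((l, c l) : Fin k × Fin 2))) := by
    intro c
    have hginj : Function.Injective (fun l : Fin k => ((l, c l) : Fin k × Fin 2)) :=
      fun u v h => congrArg Prod.fst h
    refine Huniq _ hginj le_rfl a0 ?_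
    intro i' h0 h1
    obtain ⟨w0, hw0⟩ := h0
    obtain ⟨w1, hw1⟩ := h1
    exfalso
    dsimp only at hw0 hw1
    have e0 : w0 = i' := congrArg Prod.fst hw0
    have e1 : w1 = i' := congrArg Prod.fst hw1
    have hc0 : c i' = 0 := by
      have := congrArg Prod.snd hw0
      rwa [e0] at this
    have hc1 : c i' = 1 := by
      have := congrArg Prod.snd hw1
      rwa [e1] at this
    exact absurd (hc0.symm.trans hc1) fin2_01
  -- extraction helper for triples
  have extract3 : ∀ (u v w : Fin n → F), LinearIndependent F ![u, v, w] →
      ∀ (s t r : F), s • u + t • v + r • w = 0 → s = 0 ∧ t = 0 ∧ r = 0 := by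
    intro u v w hli s t r hsum
    have h := Fintype.linearIndependent_iff.mp hli ![s, t, r] ?_
    · exact ⟨h 0, h 1, h 2⟩
    · rw [Fin.sum_univ_three]
      simpa using hsum
  -- spanning: each y i is a combination of the x's
  have hspan : ∀ i : Fin k, ∃ w : Fin k → F, y i = ∑ l, w l • x l := by
    intro i
    set g : Fin (k+1) → Fin k × Fin 2 :=
      Fin.snoc (fun l : Fin k => ((l,0) : Fin k × Fin 2)) (i,1) with hgdef
    have hginj : Function.Injective g := by
      intro u v huv
      rcases Fin.eq_castSucc_or_eq_last u with ⟨u', rfl⟩ | rfl <;>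
        rcases Fin.eq_castSucc_or_eq_last v with ⟨v', rfl⟩ | rfl
      · rw [hgdef] at huv
        simp only [Fin.snoc_castSucc] at huv
        exact congrArg Fin.castSucc (congrArg Prod.fst huv)
      · rw [hgdef] at huv
        simp only [Fin.snoc_castSucc, Fin.snoc_last] at huv
        exact absurd (show (0:Fin 2) = 1 from congrArg Prod.snd huv) fin2_01
      · rw [hgdef] at huv
        simp only [Fin.snoc_castSucc, Fin.snoc_last] at huv
        exact absurd (show (1:Fin 2) = 0 from congrArg Prod.snd huv) fin2_10
      · rfl
    have hnli : ¬ LinearIndependent F (ψ ∘ g) := by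
      intro hli
      have := ((Hfam g hginj).mp hli).1
      omega
    rw [Fintype.not_linearIndependent_iff] at hnli
    obtain ⟨G, hGsum, i₀, hGi₀⟩ := hnli
    rw [Fin.sum_univ_castSucc] at hGsum
    simp only [Function.comp_apply, hgdef, Fin.snoc_castSucc, Fin.snoc_last] at hGsum
    have hc0 : G (Fin.last k) ≠ 0 := by
      intro h0
      rw [h0, zero_smul, add_zero] at hGsum
      have hall := Fintype.linearIndependent_iff.mp hx (fun l => G (Fin.castSucc l)) hGsum
      rcases Fin.eq_castSucc_or_eq_last i₀ with ⟨i', rfl⟩ | rfl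
      · exact hGi₀ (hall i')
      · exact hGi₀ h0
    refine ⟨fun l => -(G (Fin.last k))⁻¹ * G (Fin.castSucc l), ?_⟩
    have h3 : ∑ l : Fin k, (-(G (Fin.last k))⁻¹ * G (Fin.castSucc l)) • x l
        = (-(G (Fin.last k))⁻¹) • ∑ l : Fin k, G (Fin.castSucc l) • x l := by
      rw [Finset.smul_sum]
      exact Finset.sum_congr rfl (fun l _ => by rw [smul_smul])
    have h4 : ∑ l : Fin k, G (Fin.castSucc l) • x l = -(G (Fin.last k) • y i) := by
      rw [eq_neg_iff_add_eq_zero]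
      exact hGsum
    symm
    rw [h3, h4, neg_smul, smul_neg, neg_neg, smul_smul, inv_mul_cancel₀ hc0, one_smul]
  -- pair relations
  have hr : ∀ i j : Fin k, i ≠ j → ∃ a b c d : F,
      (a • x i + b • y i + c • x j + d • y j = 0) ∧ a ≠ 0 ∧ b ≠ 0 ∧ c ≠ 0 ∧ d ≠ 0 := by
    intro i j hij
    set g : Fin 4 → Fin k × Fin 2 := ![(i,0), (i,1), (j,0), (j,1)] with hgdef
    have hginj : Function.Injective g :=
      inj4 (prod_ne_snd fin2_01) (prod_ne_fst hij) (prod_ne_fst hij)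
        (prod_ne_fst hij) (prod_ne_fst hij) (prod_ne_snd fin2_01)
    have hnli : ¬ LinearIndependent F (ψ ∘ g) := by
      intro hli
      refine ((Hfam g hginj).mp hli).2 ⟨i, j, hij, ?_⟩
      intro p hp
      rw [hgdef]
      rcases hp with rfl | hp
      · exact ⟨0, rfl⟩
      rcases hp with rfl | hp
      · exact ⟨1, rfl⟩
      rcases hp with rfl | hp
      · exact ⟨2, rfl⟩
      rcases hp with rfl
      exact ⟨3, rfl⟩
    rw [Fintype.not_linearIndependent_iff] at hnli
    obtain ⟨G, hGsum, i₀, hGi₀⟩ := hnli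
    rw [Fin.sum_univ_four] at hGsum
    simp only [Function.comp_apply, hgdef] at hGsum
    have hGsum' : G 0 • x i + G 1 • y i + G 2 • x j + G 3 • y j = 0 := by
      simpa using hGsum
    have hcase0 : G 0 = 0 → G 1 = 0 ∧ G 2 = 0 ∧ G 3 = 0 ∧ G 0 = 0 := by
      intro h0
      have hs : G 2 • x j + G 3 • y j + G 1 • ψ ((i:Fin k),(1:Fin 2)) = 0 := by
        rw [h0, zero_smul] at hGsum'
        have : y i = ψ (i, 1) := rfl
        rw [← this]
        linear_combination (norm := module) hGsum'
      obtain ⟨e1, e2, e3⟩ := extract3 _ _ _ (htriple j i 1 hij.symm) _ _ _ hs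
      exact ⟨e3, e1, e2, h0⟩
    have hcase1 : G 1 = 0 → G 0 = 0 ∧ G 2 = 0 ∧ G 3 = 0 ∧ G 1 = 0 := by
      intro h0
      have hs : G 2 • x j + G 3 • y j + G 0 • ψ ((i:Fin k),(0:Fin 2)) = 0 := by
        rw [h0, zero_smul] at hGsum'
        have : x i = ψ (i, 0) := rfl
        rw [← this]
        linear_combination (norm := module) hGsum'
      obtain ⟨e1, e2, e3⟩ := extract3 _ _ _ (htriple j i 0 hij.symm) _ _ _ hs
      exact ⟨e3, e1, e2, h0⟩
    have hcase2 : G 2 = 0 → G 0 = 0 ∧ G 1 = 0 ∧ G 3 = 0 ∧ G 2 = 0 := by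
      intro h0
      have hs : G 0 • x i + G 1 • y i + G 3 • ψ ((j:Fin k),(1:Fin 2)) = 0 := by
        rw [h0, zero_smul] at hGsum'
        have : y j = ψ (j, 1) := rfl
        rw [← this]
        linear_combination (norm := module) hGsum'
      obtain ⟨e1, e2, e3⟩ := extract3 _ _ _ (htriple i j 1 hij) _ _ _ hs
      exact ⟨e1, e2, e3, h0⟩
    have hcase3 : G 3 = 0 → G 0 = 0 ∧ G 1 = 0 ∧ G 2 = 0 ∧ G 3 = 0 := by
      intro h0
      have hs : G 0 • x i + G 1 • y i + G 2 • ψ ((j:Fin k),(0:Fin 2)) = 0 := by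
        rw [h0, zero_smul] at hGsum'
        have : x j = ψ (j, 0) := rfl
        rw [← this]
        linear_combination (norm := module) hGsum'
      obtain ⟨e1, e2, e3⟩ := extract3 _ _ _ (htriple i j 0 hij) _ _ _ hs
      exact ⟨e1, e2, e3, h0⟩
    refine ⟨G 0, G 1, G 2, G 3, hGsum', ?_, ?_, ?_, ?_⟩
    · intro h0
      obtain ⟨e1, e2, e3, e0⟩ := hcase0 h0
      apply hGi₀
      fin_cases i₀ <;> assumption
    · intro h0
      obtain ⟨e1, e2, e3, e0⟩ := hcase1 h0
      apply hGi₀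
      fin_cases i₀ <;> assumption
    · intro h0
      obtain ⟨e1, e2, e3, e0⟩ := hcase2 h0
      apply hGi₀
      fin_cases i₀ <;> assumption
    · intro h0
      obtain ⟨e1, e2, e3, e0⟩ := hcase3 h0
      apply hGi₀
      fin_cases i₀ <;> assumption
  by_cases hk4 : 4 ≤ k
  · -- general case (k ≥ 4)
    set a0 : Fin k := ⟨0, by omega⟩ with ha0
    set a1 : Fin k := ⟨1, by omega⟩ with ha1
    have h01 : a0 ≠ a1 := by
      rw [ha0, ha1]
      intro h
      exact absurd (congrArg Fin.val h) (by norm_num)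
    have hquad : ∀ (h a b : Fin k), h ≠ a → h ≠ b → a ≠ b →
        LinearIndependent F ![x h, x a, y a, x b] := by
      intro h a b hha hhb hab
      have hginj : Function.Injective ![((h,0) : Fin k × Fin 2), (a,0), (a,1), (b,0)] :=
        inj4 (prod_ne_fst hha) (prod_ne_fst hha) (prod_ne_fst hhb)
          (prod_ne_snd fin2_01) (prod_ne_fst hab) (prod_ne_fst hab)
      have heq : ψ ∘ ![((h,0) : Fin k × Fin 2), (a,0), (a,1), (b,0)] = ![x h, x a, y a, x b] := by
        funext i
        fin_cases i <;> rfl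
      rw [← heq]
      refine Huniq _ hginj hk4 a ?_
      intro i' h0 h1
      rw [Matrix.range_cons, Matrix.range_cons, Matrix.range_cons, Matrix.range_cons,
        Matrix.range_empty] at h1
      simp only [Set.union_empty, Set.mem_union, Set.mem_singleton_iff] at h1
      rcases h1 with e | e | e | e
      · exact absurd (show (1:Fin 2) = 0 from congrArg Prod.snd e) fin2_10
      · exact absurd (show (1:Fin 2) = 0 from congrArg Prod.snd e) fin2_10
      · exact congrArg Prod.fst e
      · exact absurd (show (1:Fin 2) = 0 from congrArg Prod.snd e) fin2_10
    have hD : ∀ (i j : Fin k), i ≠ a0 → j ≠ a0 → i ≠ j →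
        ∀ a b c d a' b' c' d' e f g' h' : F,
        (a • x a0 + b • y a0 + c • x i + d • y i = 0) →
        (a' • x a0 + b' • y a0 + c' • x j + d' • y j = 0) →
        (e • x i + f • y i + g' • x j + h' • y j = 0) → h' ≠ 0 →
        a * b' - a' * b = 0 := by
      intro i j hi hj hij a b c d a' b' c' d' e f g' h' hR1 hR2 hR3 hh'
      have hsum : (a * b' - a' * b) • x a0 + (b' * c + b * d' * e / h') • x i
          + (b' * d + b * d' * f / h') • y i + (-(b * c') + b * d' * g' / h') • x j = 0 := by
        have hcomb : (a * b' - a' * b) • x a0 + (b' * c + b * d' * e / h') • x i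
            + (b' * d + b * d' * f / h') • y i + (-(b * c') + b * d' * g' / h') • x j
            = b' • (a • x a0 + b • y a0 + c • x i + d • y i)
              - b • (a' • x a0 + b' • y a0 + c' • x j + d' • y j)
              + (b * d' / h') • (e • x i + f • y i + g' • x j + h' • y j) := by
          match_scalars <;> field_simp <;> ring
        rw [hcomb, hR1, hR2, hR3]
        simp
      have hLI := hquad a0 i j (Ne.symm hi) (Ne.symm hj) hij
      have hall := Fintype.linearIndependent_iff.mp hLI
        ![a * b' - a' * b, b' * c + b * d' * e / h', b' * d + b * d' * f / h',
          -(b * c') + b * d' * g' / h'] ?_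
      · exact hall 0
      · rw [Fin.sum_univ_four]
        simpa using hsum
    obtain ⟨A1, B1, C1, D1, hrel1, hA1, hB1, hC1, hD1⟩ := hr a0 a1 h01
    have hz : ∀ i : Fin k, ∃ p q : F, p ≠ 0 ∧ q ≠ 0 ∧
        A1 • x a0 + B1 • y a0 = p • x i + q • y i := by
      intro i
      by_cases hi0 : i = a0
      · subst hi0
        exact ⟨A1, B1, hA1, hB1, rfl⟩
      by_cases hi1 : i = a1
      · subst hi1
        refine ⟨-C1, -D1, neg_ne_zero.mpr hC1, neg_ne_zero.mpr hD1, ?_⟩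
        have hcomb : A1 • x a0 + B1 • y a0 - ((-C1) • x a1 + (-D1) • y a1)
            = A1 • x a0 + B1 • y a0 + C1 • x a1 + D1 • y a1 := by
          match_scalars <;> ring
        have h5 : A1 • x a0 + B1 • y a0 - ((-C1) • x a1 + (-D1) • y a1) = 0 := by
          rw [hcomb, hrel1]
        rwa [sub_eq_zero] at h5
      obtain ⟨a, b, c, d, hrel, ha, hb, hc, hd⟩ := hr a0 i (fun h => hi0 h.symm)
      obtain ⟨e, f, g', h', hrel3, he, hf, hg', hh'⟩ := hr a1 i (fun h => hi1 h.symm)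
      have hDeq : A1 * b - a * B1 = 0 :=
        hD a1 i (Ne.symm h01) (fun h => hi0 h) (fun h => hi1 h.symm)
          A1 B1 C1 D1 a b c d e f g' h' hrel1 hrel hrel3 hh'
      refine ⟨-(A1 * c) / a, -(A1 * d) / a,
        div_ne_zero (neg_ne_zero.mpr (mul_ne_zero hA1 hc)) ha,
        div_ne_zero (neg_ne_zero.mpr (mul_ne_zero hA1 hd)) ha, ?_⟩
      have hcomb : A1 • x a0 + B1 • y a0 - ((-(A1 * c) / a) • x i + (-(A1 * d) / a) • y i)
          = (A1 / a) • (a • x a0 + b • y a0 + c • x i + d • y i)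
            + ((a * B1 - A1 * b) / a) • y a0 := by
        match_scalars <;> field_simp <;> ring
      have hz2 : (a * B1 - A1 * b) = 0 := by linear_combination -hDeq
      have : A1 • x a0 + B1 • y a0 - ((-(A1 * c) / a) • x i + (-(A1 * d) / a) • y i) = 0 := by
        rw [hcomb, hrel, hz2, smul_zero, zero_div, zero_smul, add_zero]
      rwa [sub_eq_zero] at this
    choose pp qq hpp hqq hzeq using hz
    obtain ⟨w, hw⟩ := hspan a0
    set d : Fin k → F := fun l => (if l = a0 then A1 else 0) + B1 * w l with hddef
    have hzd : A1 • x a0 + B1 • y a0 = ∑ l, d l • x l := by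
      have hsplit : ∑ l, d l • x l
          = ∑ l, (if l = a0 then A1 else 0) • x l + ∑ l, (B1 * w l) • x l := by
        rw [← Finset.sum_add_distrib]
        refine Finset.sum_congr rfl ?_
        intro l _
        rw [hddef, add_smul]
      have h1 : ∑ l, (if l = a0 then A1 else 0) • x l = A1 • x a0 := by
        rw [Finset.sum_eq_single a0]
        · rw [if_pos rfl]
        · intro l _ hl
          rw [if_neg hl, zero_smul]
        · intro habs
          exact absurd (Finset.mem_univ a0) habs
      have h2 : ∑ l, (B1 * w l) • x l = B1 • ∑ l, w l • x l := by
        rw [Finset.smul_sum]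
        exact Finset.sum_congr rfl (fun l _ => by rw [smul_smul])
      rw [hsplit, h1, h2, ← hw]
    have hd0 : ∀ m : Fin k, d m ≠ 0 := by
      intro m hdm
      set i : Fin k := if m = a0 then a1 else a0 with hidef
      have him : i ≠ m := by
        rw [hidef]
        by_cases hma : m = a0
        · rw [if_pos hma, hma]
          exact Ne.symm h01
        · rw [if_neg hma]
          exact fun h => hma h.symm
      have hLI := honeleg i m
      set G : Fin k → F := fun l => if l = m then -(qq i) else d l - (if l = i then pp i else 0)
        with hGdef
      have hsum : ∑ l, G l •
          (ψ ∘ (fun l : Fin k => if l = m then ((i,1) : Fin k × Fin 2) else (l,0))) l = 0 := by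
        rw [← Finset.add_sum_erase _ _ (Finset.mem_univ m)]
        have h1 : G m • (ψ ∘ (fun l : Fin k =>
            if l = m then ((i,1) : Fin k × Fin 2) else (l,0))) m = (-(qq i)) • y i := by
          rw [hGdef]
          simp only [Function.comp_apply, eq_self_iff_true, if_true]
          rfl
        have h2 : ∀ l ∈ Finset.univ.erase m, G l • (ψ ∘ (fun l : Fin k =>
            if l = m then ((i,1) : Fin k × Fin 2) else (l,0))) l
            = d l • x l - (if l = i then pp i else 0) • x l := by
          intro l hl
          have hlm : l ≠ m := Finset.ne_of_mem_erase hl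
          rw [hGdef]
          simp only [Function.comp_apply, if_neg hlm]
          rw [sub_smul]
        rw [h1, Finset.sum_congr rfl h2, Finset.sum_sub_distrib]
        have h3 : ∑ l ∈ Finset.univ.erase m, (if l = i then pp i else 0) • x l = pp i • x i := by
          rw [Finset.sum_eq_single i]
          · rw [if_pos rfl]
          · intro l _ hli
            rw [if_neg hli, zero_smul]
          · intro habs
            exact absurd (Finset.mem_erase.mpr ⟨him, Finset.mem_univ i⟩) habs
        have h4 : ∑ l ∈ Finset.univ.erase m, d l • x l = ∑ l, d l • x l := by
          rw [← Finset.add_sum_erase _ (fun l => d l • x l) (Finset.mem_univ m), hdm, zero_smul,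
            zero_add]
        rw [h3, h4, ← hzd, hzeq i]
        module
      have hGm := Fintype.linearIndependent_iff.mp hLI G hsum m
      rw [hGdef] at hGm
      simp only [eq_self_iff_true, if_true, neg_eq_zero] at hGm
      exact hqq i hGm
    have hsums : ∀ A : Finset (Fin k), A.Nonempty → (∑ l ∈ A, d l / pp l) ≠ 1 := by
      intro A hAne hA1
      set c : Fin k → Fin 2 := fun l => if l ∈ A then 1 else 0 with hcdef
      have hLI := hchoice c
      set G : Fin k → F := fun l => if l ∈ A then d l / pp l * qq l else -(d l) with hGdef
      have hsum : ∑ l, G l • (ψ ∘ (fun l : Fin k => ((l, c l) : Fin k × Fin 2))) l = 0 := by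
        have hsplit : ∑ l, G l • (ψ ∘ (fun l : Fin k => ((l, c l) : Fin k × Fin 2))) l
            = ∑ l ∈ A, G l • ψ (l, c l) + ∑ l ∈ Aᶜ, G l • ψ (l, c l) :=
          (Finset.sum_add_sum_compl A _).symm
        have hApart : ∑ l ∈ A, G l • ψ (l, c l)
            = ∑ l ∈ A, ((d l / pp l) • (A1 • x a0 + B1 • y a0) - d l • x l) := by
          refine Finset.sum_congr rfl ?_
          intro l hl
          rw [hGdef, hcdef]
          simp only [if_pos hl]
          have hyl : ψ (l, 1) = y l := rfl
          rw [hyl]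
          have hqy : qq l • y l = (A1 • x a0 + B1 • y a0) - pp l • x l := by
            rw [hzeq l]
            module
          calc (d l / pp l * qq l) • y l = (d l / pp l) • (qq l • y l) := by rw [smul_smul]
            _ = (d l / pp l) • ((A1 • x a0 + B1 • y a0) - pp l • x l) := by rw [hqy]
            _ = (d l / pp l) • (A1 • x a0 + B1 • y a0) - d l • x l := by
                rw [smul_sub, smul_smul, div_mul_cancel₀ _ (hpp l)]
        have hA2 : ∑ l ∈ A, ((d l / pp l) • (A1 • x a0 + B1 • y a0) - d l • x l)
            = (A1 • x a0 + B1 • y a0) - ∑ l ∈ A, d l • x l := by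
          rw [Finset.sum_sub_distrib, ← Finset.sum_smul, hA1, one_smul]
        have hCpart : ∑ l ∈ Aᶜ, G l • ψ (l, c l) = -∑ l ∈ Aᶜ, d l • x l := by
          rw [← Finset.sum_neg_distrib]
          refine Finset.sum_congr rfl ?_
          intro l hl
          have hlA : l ∉ A := Finset.mem_compl.mp hl
          rw [hGdef, hcdef]
          simp only [if_neg hlA]
          have hxl : ψ (l, (0:Fin 2)) = x l := rfl
          rw [hxl, neg_smul]
        rw [hsplit, hApart, hA2, hCpart]
        have hfull : ∑ l ∈ A, d l • x l + ∑ l ∈ Aᶜ, d l • x l = ∑ l, d l • x l :=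
          Finset.sum_add_sum_compl A _
        rw [← hzd] at hfull
        rw [← hfull]
        abel
      have hall := Fintype.linearIndependent_iff.mp hLI G hsum
      obtain ⟨a, ha⟩ := hAne
      have hGa := hall a
      rw [hGdef] at hGa
      simp only [if_pos ha] at hGa
      exact (mul_ne_zero (div_ne_zero (hd0 a) (hpp a)) (hqq a)) hGa
    have hp' : (Fintype.card F).Prime := hF ▸ hqp
    have hcard : Fintype.card F ≤ k + 1 := by
      rw [hF]
      omega
    obtain ⟨A, hAne, hAsum⟩ := exists_nonempty_subset_sum_eq_one hp' hcard (fun l => d l / pp l)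
      (fun l => div_ne_zero (hd0 l) (hpp l))
    exact hsums A hAne hAsum
  · -- special case: k = 3 and q = 3
    have hk3 : k = 3 := by omega
    have hq3' : q = 3 := by
      rcases (by omega : q = 3 ∨ q = 4) with h | h
      · exact h
      · rw [h] at hqp
        exact absurd hqp (by norm_num)
    subst hk3
    obtain ⟨c0, hc0⟩ := hspan 0
    obtain ⟨c1, hc1⟩ := hspan 1
    rw [Fin.sum_univ_three] at hc0 hc1
    have hLI0 : ∀ i : Fin 3, LinearIndependent F ![y i, x 1, x 2] := by
      intro i
      have := honeleg i 0
      rwa [show (ψ ∘ fun l : Fin 3 => if l = 0 then ((i,1) : Fin 3 × Fin 2) else (l,0))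
        = ![y i, x 1, x 2] from by funext l; fin_cases l <;> rfl] at this
    have hLI1 : ∀ i : Fin 3, LinearIndependent F ![x 0, y i, x 2] := by
      intro i
      have := honeleg i 1
      rwa [show (ψ ∘ fun l : Fin 3 => if l = 1 then ((i,1) : Fin 3 × Fin 2) else (l,0))
        = ![x 0, y i, x 2] from by funext l; fin_cases l <;> rfl] at this
    have hLI2 : ∀ i : Fin 3, LinearIndependent F ![x 0, x 1, y i] := by
      intro i
      have := honeleg i 2
      rwa [show (ψ ∘ fun l : Fin 3 => if l = 2 then ((i,1) : Fin 3 × Fin 2) else (l,0))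
        = ![x 0, x 1, y i] from by funext l; fin_cases l <;> rfl] at this
    have hent0 : ∀ (ci : Fin 3 → F) (i : Fin 3),
        (y i = ci 0 • x 0 + ci 1 • x 1 + ci 2 • x 2) → ci 0 ≠ 0 := by
      intro ci i hci h0
      have hs : (-1 : F) • y i + ci 1 • x 1 + ci 2 • x 2 = 0 := by
        rw [hci]
        match_scalars <;> first | ring1 | (linear_combination -h0) | (linear_combination h0)
      obtain ⟨e1, -, -⟩ := extract3 _ _ _ (hLI0 i) _ _ _ hs
      norm_num at e1
    have hent1 : ∀ (ci : Fin 3 → F) (i : Fin 3),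
        (y i = ci 0 • x 0 + ci 1 • x 1 + ci 2 • x 2) → ci 1 ≠ 0 := by
      intro ci i hci h0
      have hs : ci 0 • x 0 + (-1 : F) • y i + ci 2 • x 2 = 0 := by
        rw [hci]
        match_scalars <;> first | ring1 | (linear_combination -h0) | (linear_combination h0)
      obtain ⟨-, e2, -⟩ := extract3 _ _ _ (hLI1 i) _ _ _ hs
      norm_num at e2
    have hent2 : ∀ (ci : Fin 3 → F) (i : Fin 3),
        (y i = ci 0 • x 0 + ci 1 • x 1 + ci 2 • x 2) → ci 2 ≠ 0 := by
      intro ci i hci h0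
      have hs : ci 0 • x 0 + ci 1 • x 1 + (-1 : F) • y i = 0 := by
        rw [hci]
        match_scalars <;> first | ring1 | (linear_combination -h0) | (linear_combination h0)
      obtain ⟨-, -, e3⟩ := extract3 _ _ _ (hLI2 i) _ _ _ hs
      norm_num at e3
    have hch : LinearIndependent F ![y 0, y 1, x 2] := by
      have := hchoice (fun l => if l = 2 then (0:Fin 2) else 1)
      rwa [show (ψ ∘ fun l : Fin 3 => ((l, if l = 2 then (0:Fin 2) else 1) : Fin 3 × Fin 2))
        = ![y 0, y 1, x 2] from by funext l; fin_cases l <;> rfl] at this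
    have h10 : (1 : Fin 3) ≠ 0 := by decide
    have h01 : (0 : Fin 3) ≠ 1 := by decide
    have hM01 : c0 0 * c1 1 - c0 1 * c1 0 ≠ 0 := by
      intro hM
      have hs : (c1 0) • y 0 + (-(c0 0)) • y 1 + (-(c1 0 * c0 2 - c0 0 * c1 2)) • x 2 = 0 := by
        rw [hc0, hc1]
        match_scalars <;> first | ring1 | (linear_combination -hM) | (linear_combination hM)
      obtain ⟨e1, -, -⟩ := extract3 _ _ _ hch _ _ _ hs
      exact hent0 c1 1 hc1 e1
    have hM02 : c0 0 * c1 2 - c0 2 * c1 0 ≠ 0 := by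
      intro hM
      have hy0 : ψ ((0:Fin 3),(1:Fin 2)) = y 0 := rfl
      have hs : (-(c1 0 * c0 1 - c0 0 * c1 1)) • x 1 + (-(c0 0)) • y 1
          + (c1 0) • ψ ((0:Fin 3),(1:Fin 2)) = 0 := by
        rw [hy0, hc0, hc1]
        match_scalars <;> first | ring1 | (linear_combination -hM) | (linear_combination hM)
      obtain ⟨-, -, e3⟩ := extract3 _ _ _ (htriple 1 0 1 h10) _ _ _ hs
      exact hent0 c1 1 hc1 e3
    have hM12 : c0 1 * c1 2 - c0 2 * c1 1 ≠ 0 := by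
      intro hM
      have hy1 : ψ ((1:Fin 3),(1:Fin 2)) = y 1 := rfl
      have hs : (-(c1 1 * c0 0 - c0 1 * c1 0)) • x 0 + (c1 1) • y 0
          + (-(c0 1)) • ψ ((1:Fin 3),(1:Fin 2)) = 0 := by
        rw [hy1, hc0, hc1]
        match_scalars <;> first | ring1 | (linear_combination -hM) | (linear_combination hM)
      obtain ⟨-, e2, -⟩ := extract3 _ _ _ (htriple 0 1 1 h01) _ _ _ hs
      exact hent1 c1 1 hc1 e2
    set r : Fin 3 → F := fun l => c0 l * (c1 l)⁻¹ with hrdef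
    have hc1ne : ∀ l, c1 l ≠ 0 := by
      intro l
      fin_cases l
      · exact hent0 c1 1 hc1
      · exact hent1 c1 1 hc1
      · exact hent2 c1 1 hc1
    have hc0ne : ∀ l, c0 l ≠ 0 := by
      intro l
      fin_cases l
      · exact hent0 c0 0 hc0
      · exact hent1 c0 0 hc0
      · exact hent2 c0 0 hc0
    have hrne : ∀ l, r l ≠ 0 := by
      intro l
      exact mul_ne_zero (hc0ne l) (inv_ne_zero (hc1ne l))
    have hdist : ∀ a b : Fin 3, (c0 a * c1 b - c0 b * c1 a ≠ 0) → r a ≠ r b := by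
      intro a b hM hEq
      apply hM
      rw [hrdef] at hEq
      dsimp only at hEq
      field_simp [hc1ne a, hc1ne b] at hEq
      linear_combination hEq
    have h01' : r 0 ≠ r 1 := hdist 0 1 hM01
    have h02' : r 0 ≠ r 2 := hdist 0 2 hM02
    have h12' : r 1 ≠ r 2 := hdist 1 2 hM12
    have hsub : ({r 0, r 1, r 2} : Finset F) ⊆ Finset.univ.erase 0 := by
      intro u hu
      rcases Finset.mem_insert.mp hu with rfl | hu
      · exact Finset.mem_erase.mpr ⟨hrne 0, Finset.mem_univ _⟩
      rcases Finset.mem_insert.mp hu with rfl | hu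
      · exact Finset.mem_erase.mpr ⟨hrne 1, Finset.mem_univ _⟩
      rcases Finset.mem_singleton.mp hu with rfl
      exact Finset.mem_erase.mpr ⟨hrne 2, Finset.mem_univ _⟩
    have hcard3 : ({r 0, r 1, r 2} : Finset F).card = 3 := by
      rw [Finset.card_insert_of_notMem (by simp [h01', h02']),
        Finset.card_insert_of_notMem (by simp [h12']), Finset.card_singleton]
    have hle := Finset.card_le_card hsub
    rw [hcard3, Finset.card_erase_of_mem (Finset.mem_univ _), Finset.card_univ, hF, hq3'] at hle
    omega


end Fwd

end SpikeAux

open SpikeAux in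
theorem stmt11 (k q : ℕ) (hk : 3 ≤ k) (hq3 : 3 ≤ q) (hq : IsPrimePow q)
    (F : Type) [Field F] [Fintype F] (hF : Fintype.card F = q)
    {α : Type} (M : Matroid α) (hM : IsFreeSpike M k) :
    Rep M F ↔ (¬ q.Prime ∨ k ≤ q - 2) := by
  classical
  obtain ⟨f, hE, hI⟩ := hM
  constructor
  · rintro ⟨n, φ, hφ⟩
    by_contra hcond
    push_neg at hcond
    obtain ⟨hqprime, hkq⟩ := hcond
    have H : ∀ J : Set (Fin k × Fin 2),
        LinearIndependent F (fun x : J => (fun p => φ (f p)) x.1) ↔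
          (J.ncard ≤ k ∧ ¬ ∃ i j : Fin k, i ≠ j ∧
            ({(i,(0:Fin 2)),(i,1),(j,0),(j,1)} : Set (Fin k × Fin 2)) ⊆ J) := by
      intro J
      have hIJ : f '' J ⊆ M.E := by
        rw [hE]
        exact Set.image_subset_range f J
      calc LinearIndependent F (fun x : J => (fun p => φ (f p)) x.1)
          ↔ LinearIndependent F (fun x : (f '' J : Set α) => φ x.1) :=
            (li_image_iff f φ J).symm
        _ ↔ M.Indep (f '' J) := (hφ (f '' J) hIJ).symm
        _ ↔ _ := (hI (f '' J) hIJ).trans (cond_iff f J)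
    exact forward_core hF hk hq3 hqprime (by omega) (fun p => φ (f p)) H
  · intro hcond
    obtain ⟨v, hv0, hvs⟩ := exists_good_v hF hq3 hcond
    refine ⟨k, Function.extend f (spikeVec v) 0, ?_⟩
    intro I hIE
    have hIr : I ⊆ Set.range f := hE ▸ hIE
    have hIim : f '' (f ⁻¹' I) = I := Set.image_preimage_eq_of_subset hIr
    rw [hI I hIE, ← hIim, cond_iff f (f ⁻¹' I),
      li_image_iff f (Function.extend f (spikeVec v) 0) (f ⁻¹' I)]
    have heq : (fun x : (f ⁻¹' I : Set (Fin k × Fin 2)) =>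
        Function.extend f (spikeVec v) 0 (f x.1)) = fun x : (f ⁻¹' I : Set (Fin k × Fin 2)) =>
          spikeVec v x.1 := by
      funext x
      exact f.injective.extend_apply _ _ _
    rw [heq, backward_core v hv0 hvs (f ⁻¹' I)]
end

section
/- Let q be a prime power and m ≥ 2 an integer. If M is a single-element extension of PG(2m-1, q) (by an element e) that is not GF(q)-representable, then M has a minor isomorphic to the principal extension of a rank-2 flat of PG(m-1,q) or to the principal extension of a rank-m flat (the whole space) of PG(m-1,q). -/
open Set Matroid

open PaperDefs

namespace Tool

open PaperDefs Set Matroid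

variable {α : Type*} {M : Matroid α} {B I J X Y F G : Set α} {e x : α}

/-! ### Rank toolkit -/

theorem linearIndependent_insert' {ι V K : Type*} [DivisionRing K] [AddCommGroup V] [Module K V]
    {s : Set ι} {a : ι} {f : ι → V} (has : a ∉ s) :
    LinearIndependent K (fun x : (insert a s : Set ι) => f x) ↔
      LinearIndependent K (fun x : s => f x) ∧ f a ∉ Submodule.span K (f '' s) :=
  linearIndepOn_insert has

theorem linearIndependent_image {ι R M : Type*} [Semiring R] [AddCommMonoid M] [Module R M]
    {s : Set ι} {f : ι → M} (hf : Set.InjOn f s) :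
    (LinearIndependent R fun x : s => f x) ↔ LinearIndepOn R id (f '' s) :=
  linearIndepOn_iff_image hf

theorem rk_base (hB : M.IsBase B) : rk M = B.ncard := by
  have h : Set.ncard '' {B' | M.IsBase B'} = {B.ncard} := by
    apply subset_antisymm
    · rintro k ⟨B', hB', rfl⟩
      simp only [mem_singleton_iff, hB'.ncard_eq_ncard_of_isBase hB]
    · rintro k rfl
      exact ⟨B, hB, rfl⟩
  rw [rk, h, csSup_singleton]

theorem rkOf_basis' (hI : M.IsBasis' I X) : rkOf M X = I.ncard :=
  rk_base (isBase_restrict_iff'.mpr hI)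

theorem rkOf_basis (hI : M.IsBasis I X) : rkOf M X = I.ncard :=
  rkOf_basis' hI.isBasis'

theorem ncard_le_rkOf (hE : M.E.Finite) (hI : M.Indep I) (hIX : I ⊆ X) :
    I.ncard ≤ rkOf M X := by
  obtain ⟨J, hJ, hIJ⟩ := hI.subset_isBasis'_of_subset hIX
  rw [rkOf_basis' hJ]
  exact Set.ncard_le_ncard hIJ (hE.subset hJ.indep.subset_ground)

theorem rkOf_mono (hE : M.E.Finite) (hXY : X ⊆ Y) : rkOf M X ≤ rkOf M Y := by
  obtain ⟨I, hI⟩ := M.exists_isBasis' X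
  rw [rkOf_basis' hI]
  exact ncard_le_rkOf hE hI.indep (hI.subset.trans hXY)

theorem rkOf_ground (M : Matroid α) : rkOf M M.E = rk M := by
  rw [rkOf, restrict_ground_eq_self]

theorem rkOf_restrict {R : Set α} (M : Matroid α) (hXR : X ⊆ R) :
    rkOf (M ↾ R) X = rkOf M X := by
  rw [rkOf, rkOf, restrict_restrict_eq _ hXR]

theorem mem_closure_iff_rkOf (hE : M.E.Finite) (hX : X ⊆ M.E) (he : e ∈ M.E) :
    e ∈ M.closure X ↔ rkOf M (insert e X) = rkOf M X := by
  obtain ⟨I, hI⟩ := M.exists_isBasis X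
  have hIfin : I.Finite := hE.subset hI.indep.subset_ground
  by_cases hecl : e ∈ M.closure X
  · refine iff_of_true hecl ?_
    have : M.IsBasis I (insert e X) := by
      refine hI.indep.isBasis_of_subset_of_subset_closure
        (hI.subset.trans (subset_insert _ _)) ?_
      rw [insert_subset_iff]
      exact ⟨by rwa [hI.closure_eq_closure], hI.subset_closure⟩
    rw [rkOf_basis this, rkOf_basis hI]
  · refine iff_of_false hecl ?_
    have heI : e ∉ I := fun h => hecl (M.mem_closure_of_mem (hI.subset h))
    have hii : M.Indep (insert e I) := by
      rw [hI.indep.insert_indep_iff_of_notMem heI]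
      exact ⟨he, fun h => hecl (by rwa [hI.closure_eq_closure] at h)⟩
    have : M.IsBasis (insert e I) (insert e X) := by
      refine hii.isBasis_of_subset_of_subset_closure
        (insert_subset_insert hI.subset) ?_
      refine insert_subset (M.mem_closure_of_mem (mem_insert _ _)
        (insert_subset he hI.indep.subset_ground)) ?_
      exact (hI.subset_closure.trans (M.closure_subset_closure (subset_insert _ _)))
    rw [rkOf_basis this, rkOf_basis hI, Set.ncard_insert_of_notMem heI hIfin]
    simp

theorem rkOf_submod (hE : M.E.Finite) (hX : X ⊆ M.E) (hY : Y ⊆ M.E) :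
    rkOf M (X ∪ Y) + rkOf M (X ∩ Y) ≤ rkOf M X + rkOf M Y := by
  obtain ⟨I, hI⟩ := M.exists_isBasis (X ∩ Y) (inter_subset_left.trans hX)
  obtain ⟨J, hJ, hIJ⟩ := hI.indep.subset_isBasis_of_subset
    (hI.subset.trans (inter_subset_left.trans subset_union_left)) (union_subset hX hY)
  have hJfin : J.Finite := hE.subset hJ.indep.subset_ground
  rw [rkOf_basis hJ, rkOf_basis hI]
  have h1 : (J ∩ X).ncard ≤ rkOf M X := ncard_le_rkOf hE (hJ.indep.subset inter_subset_left)
    inter_subset_right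
  have h2 : (J ∩ Y).ncard ≤ rkOf M Y := ncard_le_rkOf hE (hJ.indep.subset inter_subset_left)
    inter_subset_right
  have key : (J ∩ X).ncard + (J ∩ Y).ncard = J.ncard + (J ∩ (X ∩ Y)).ncard := by
    rw [← Set.ncard_union_add_ncard_inter _ _ (hJfin.subset inter_subset_left)
      (hJfin.subset inter_subset_left), ← inter_union_distrib_left, ← inter_inter_distrib_left,
      inter_eq_self_of_subset_left hJ.subset]
  have h3 : I.ncard ≤ (J ∩ (X ∩ Y)).ncard :=
    Set.ncard_le_ncard (subset_inter hIJ hI.subset) (hJfin.subset inter_subset_left)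
  omega

/-! ### Closure of restrictions -/

theorem closure_restrict {R : Set α} (hXR : X ⊆ R) (hR : R ⊆ M.E) :
    (M ↾ R).closure X = M.closure X ∩ R := by
  obtain ⟨I, hI⟩ := M.exists_isBasis X (hXR.trans hR)
  have hIR : (M ↾ R).IsBasis I X := hI.isBasis_restrict_of_subset hXR
  have hIi : (M ↾ R).Indep I := hIR.indep
  ext x
  rw [← hIR.closure_eq_closure, ← hI.closure_eq_closure, mem_inter_iff, hIi.mem_closure_iff',
    hI.indep.mem_closure_iff', restrict_ground_eq, restrict_indep_iff]
  constructor
  · rintro ⟨hxR, h⟩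
    exact ⟨⟨hR hxR, fun hi => h ⟨hi, insert_subset hxR (hI.subset.trans hXR)⟩⟩, hxR⟩
  · rintro ⟨⟨hxE, h⟩, hxR⟩
    exact ⟨hxR, fun hi => h hi.1⟩

theorem closure_delete_point {M' : Matroid α} (hdel : PaperDefs.delete M' {e} = M)
    (hE' : M'.E = insert e M.E) (he : e ∉ M.E) (hX : X ⊆ M.E) :
    M.closure X = M'.closure X \ {e} := by
  have hg : M'.E \ {e} = M.E := by
    rw [hE']; rw [insert_diff_of_mem _ (mem_singleton e), diff_singleton_eq_self he]
  rw [← hdel, PaperDefs.delete, hg,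
    closure_restrict (M := M') (R := M.E) hX (by rw [hE']; exact subset_insert _ _)]
  ext x
  simp only [mem_inter_iff, mem_diff, mem_singleton_iff]
  exact ⟨fun ⟨h1, h2⟩ => ⟨h1, fun h => he (h ▸ h2)⟩,
    fun ⟨h1, h2⟩ => ⟨h1, by
      have := M'.closure_subset_ground X h1
      rw [hE'] at this
      rcases this with h | h
      · exact absurd h h2
      · exact h⟩⟩

theorem flat_of_closure_eq (h : M.closure F = F) (hF : F ⊆ M.E) : M.IsFlat F := by
  refine ⟨fun I X hIF hIX => ?_, hF⟩
  calc X ⊆ M.closure I := hIX.subset_closure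
    _ = M.closure F := hIF.closure_eq_closure
    _ = F := h

theorem flat_closure (M : Matroid α) (hX : X ⊆ M.E) : M.IsFlat (M.closure X) :=
  flat_of_closure_eq (M.closure_closure X) (M.closure_subset_ground X)


/-! ### Contraction -/

variable {K : Matroid α} {C : Set α}

theorem contract_ground (K : Matroid α) (C : Set α) :
    (PaperDefs.contract K C).E = K.E \ C := rfl

theorem base_contract_iff (hC : K.Indep C) :
    (PaperDefs.contract K C).IsBase B ↔ B ⊆ K.E \ C ∧ K.IsBase (B ∪ C) := by
  have hCE : C ⊆ K.E := hC.subset_ground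
  set G := K.E \ C with hG
  have hGE : G ⊆ K✶.E := by rw [dual_ground]; exact diff_subset
  have hKC : PaperDefs.contract K C = (K✶ ↾ G)✶ := rfl
  rw [hKC, dual_isBase_iff', restrict_ground_eq, isBase_restrict_iff',
    isBasis'_iff_isBasis hGE]
  constructor
  · rintro ⟨hdB, hBG⟩
    refine ⟨hBG, ?_⟩
    obtain ⟨Bs, hBs, hsub⟩ := hdB.indep.exists_isBase_superset
    have hBsE : Bs ⊆ K.E := hBs.subset_ground
    have hB₀ : K.IsBase (K.E \ Bs) := hBs.compl_isBase_of_dual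
    have hGB : G \ B = Bs ∩ G :=
      hdB.eq_of_subset_indep (hBs.indep.subset inter_subset_left)
        (subset_inter hsub diff_subset) inter_subset_right
    have hcompl : (K.E \ (K.E \ Bs)) ∩ (K.E \ C) = G \ B := by
      rw [diff_diff_cancel_left hBsE, ← hG, hGB]
    have hbC : K.IsBasis ((K.E \ Bs) ∩ C) C := by
      rw [hB₀.inter_isBasis_iff_compl_inter_isBasis_dual hCE, hcompl, ← hG]
      exact hdB
    have hCB₀ : C ⊆ K.E \ Bs := by
      have := hbC.eq_of_subset_indep hC inter_subset_right Subset.rfl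
      rw [← this]; exact inter_subset_left
    have hBB₀ : B ⊆ K.E \ Bs := by
      intro x hx
      refine ⟨(hBG.trans diff_subset) hx, fun hxBs => ?_⟩
      have : x ∈ G \ B := hGB ▸ ⟨hxBs, hBG hx⟩
      exact this.2 hx
    have : B ∪ C = K.E \ Bs := by
      apply subset_antisymm (union_subset hBB₀ hCB₀)
      rintro x ⟨hxE, hxBs⟩
      by_cases hxC : x ∈ C
      · exact Or.inr hxC
      · left
        by_contra hxB
        have : x ∈ G \ B := ⟨⟨hxE, hxC⟩, hxB⟩
        exact hxBs (hGB ▸ this).1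
    rwa [this]
  · rintro ⟨hBG, hB0⟩
    refine ⟨?_, hBG⟩
    have h1 : K.IsBasis ((B ∪ C) ∩ C) C :=
      (inter_eq_self_of_subset_right subset_union_right).symm ▸ hC.isBasis_self
    rw [hB0.inter_isBasis_iff_compl_inter_isBasis_dual hCE] at h1
    have : (K.E \ (B ∪ C)) ∩ (K.E \ C) = G \ B := by
      ext x
      simp only [mem_inter_iff, mem_diff, mem_union, hG]
      tauto
    rwa [this, ← hG] at h1

theorem indep_contract_iff (hC : K.Indep C) :
    (PaperDefs.contract K C).Indep I ↔ I ⊆ K.E \ C ∧ K.Indep (I ∪ C) := by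
  constructor
  · intro h
    obtain ⟨B, hB, hIB⟩ := h.exists_isBase_superset
    rw [base_contract_iff hC] at hB
    exact ⟨hIB.trans hB.1, hB.2.indep.subset (union_subset_union_left _ hIB)⟩
  · rintro ⟨hIG, hIC⟩
    obtain ⟨B₀, hB₀, hsub⟩ := hIC.exists_isBase_superset
    have hCB₀ : C ⊆ B₀ := subset_union_right.trans hsub
    have hB : (PaperDefs.contract K C).IsBase (B₀ \ C) := by
      rw [base_contract_iff hC]
      refine ⟨diff_subset_diff_left hB₀.subset_ground, ?_⟩
      rwa [diff_union_self, union_eq_self_of_subset_right hCB₀]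
    refine hB.indep.subset (subset_diff.mpr ⟨subset_union_left.trans hsub, ?_⟩)
    exact disjoint_left.mpr fun x hx => (hIG hx).2

theorem closure_contract (hC : K.Indep C) (hX : X ⊆ K.E \ C) :
    (PaperDefs.contract K C).closure X = K.closure (X ∪ C) \ C := by
  have hCE : C ⊆ K.E := hC.subset_ground
  obtain ⟨J, hJ, hCJ⟩ := hC.subset_isBasis_of_subset (subset_union_right (s := X))
    (union_subset (hX.trans diff_subset) hCE)
  set I := J \ C with hIdef
  have hIX : I ⊆ X := fun x hx => by
    rcases hJ.subset hx.1 with h | h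
    · exact h
    · exact absurd h hx.2
  have hIC : I ∪ C = J := by rw [hIdef, diff_union_self, union_eq_self_of_subset_right hCJ]
  have hIi : (PaperDefs.contract K C).Indep I := by
    rw [indep_contract_iff hC, hIC]
    exact ⟨hIX.trans hX, hJ.indep⟩
  have hzIJ : ∀ z, z ∉ C → insert z I ∪ C = insert z J := by
    intro z hz
    rw [insert_union, hIC]
  have hIbasis : (PaperDefs.contract K C).IsBasis I X := by
    refine hIi.isBasis_of_subset_of_subset_closure hIX (fun x hx => ?_)
    rw [hIi.mem_closure_iff', contract_ground]
    refine ⟨hX hx, fun hind => ?_⟩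
    rw [indep_contract_iff hC, hzIJ x (hX hx).2] at hind
    by_contra hxI
    have hxJ : x ∉ J := fun h => hxI ⟨h, (hX hx).2⟩
    exact (hJ.insert_dep ⟨Or.inl hx, hxJ⟩).not_indep hind.2
  ext z
  rw [← hIbasis.closure_eq_closure, hIi.mem_closure_iff', contract_ground,
    ← hJ.closure_eq_closure]
  constructor
  · rintro ⟨⟨hzE, hzC⟩, h⟩
    refine ⟨?_, hzC⟩
    rw [hJ.indep.mem_closure_iff']
    refine ⟨hzE, fun hind => ?_⟩
    have hzI : z ∈ I := h (by
      rw [indep_contract_iff hC, hzIJ z hzC]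
      exact ⟨insert_subset ⟨hzE, hzC⟩ (hIX.trans hX), hind⟩)
    exact hIC ▸ Or.inl hzI
  · rintro ⟨hcl, hzC⟩
    rw [hJ.indep.mem_closure_iff'] at hcl
    obtain ⟨hzE, h⟩ := hcl
    refine ⟨⟨hzE, hzC⟩, fun hind => ?_⟩
    rw [indep_contract_iff hC, hzIJ z hzC] at hind
    exact ⟨h hind.2, hzC⟩


/-! ### Representation calculus -/

section Rep

open Submodule Module

variable {𝔽 : Type*} [Field 𝔽] {n : ℕ} {φ : α → Fin n → 𝔽}

theorem lion_mono {s t : Set α} (h : LinearIndependent 𝔽 (fun x : s => φ x.1)) (hts : t ⊆ s) :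
    LinearIndependent 𝔽 (fun x : t => φ x.1) := by
  have : (fun x : t => φ x.1) = (fun x : s => φ x.1) ∘ (Set.inclusion hts) := rfl
  rw [this]
  exact h.comp _ (Set.inclusion_injective hts)

theorem span_basis_rep (hrep : ∀ I ⊆ M.E, (M.Indep I ↔ LinearIndependent 𝔽 (fun x : I => φ x.1)))
    (hX : X ⊆ M.E) (hI : M.IsBasis I X) :
    Submodule.span 𝔽 (φ '' I) = Submodule.span 𝔽 (φ '' X) := by
  apply le_antisymm (span_mono (image_mono hI.subset))
  rw [span_le]
  rintro - ⟨x, hxX, rfl⟩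
  by_cases hxI : x ∈ I
  · exact subset_span ⟨x, hxI, rfl⟩
  · have hdep : ¬ M.Indep (insert x I) := (hI.insert_dep ⟨hxX, hxI⟩).not_indep
    rw [hrep _ (insert_subset (hX hxX) hI.indep.subset_ground),
      linearIndependent_insert' hxI] at hdep
    have hLI : LinearIndependent 𝔽 (fun x : I => φ x.1) := (hrep _ hI.indep.subset_ground).mp
      hI.indep
    by_contra hn
    exact hdep ⟨hLI, hn⟩

theorem closure_rep (hrep : ∀ I ⊆ M.E, (M.Indep I ↔ LinearIndependent 𝔽 (fun x : I => φ x.1)))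
    (hX : X ⊆ M.E) :
    M.closure X = {x ∈ M.E | φ x ∈ Submodule.span 𝔽 (φ '' X)} := by
  obtain ⟨I, hI⟩ := M.exists_isBasis X
  have hspan := span_basis_rep hrep hX hI
  ext z
  rw [← hI.closure_eq_closure, hI.indep.mem_closure_iff', mem_setOf_eq, ← hspan]
  constructor
  · rintro ⟨hzE, h⟩
    refine ⟨hzE, ?_⟩
    by_cases hzI : z ∈ I
    · exact subset_span ⟨z, hzI, rfl⟩
    · by_contra hn
      refine hzI (h ?_)
      rw [hrep _ (insert_subset hzE hI.indep.subset_ground), linearIndependent_insert' hzI]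
      exact ⟨(hrep _ hI.indep.subset_ground).mp hI.indep, hn⟩
  · rintro ⟨hzE, hsp⟩
    refine ⟨hzE, fun hind => ?_⟩
    by_contra hzI
    rw [hrep _ (insert_subset hzE hI.indep.subset_ground), linearIndependent_insert' hzI] at hind
    exact hind.2 hsp

theorem rkOf_rep (hrep : ∀ I ⊆ M.E, (M.Indep I ↔ LinearIndependent 𝔽 (fun x : I => φ x.1)))
    (hEfin : M.E.Finite) (hX : X ⊆ M.E) :
    rkOf M X = finrank 𝔽 (Submodule.span 𝔽 (φ '' X)) := by
  obtain ⟨I, hI⟩ := M.exists_isBasis X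
  have hspan := span_basis_rep hrep hX hI
  have hIfin : I.Finite := hEfin.subset hI.indep.subset_ground
  have : Fintype I := hIfin.fintype
  have hLI : LinearIndependent 𝔽 (fun x : I => φ x.1) :=
    (hrep _ hI.indep.subset_ground).mp hI.indep
  rw [rkOf_basis hI, ← hspan, Set.image_eq_range, finrank_span_eq_card hLI]
  rw [Set.ncard_eq_toFinset_card' I, Set.toFinset_card]

theorem simple_nonzero (hrep : ∀ I ⊆ M.E, (M.Indep I ↔ LinearIndependent 𝔽
      (fun x : I => φ x.1))) (hsimp : Simple M) (hEfin : M.E.Finite) {x : α} (hx : x ∈ M.E) :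
    φ x ≠ 0 := by
  have hind : M.Indep {x} := hsimp {x} (singleton_subset_iff.mpr hx) (finite_singleton x)
    (by simp [Set.ncard_singleton])
  have := (hrep _ (singleton_subset_iff.mpr hx)).mp hind
  exact this.ne_zero ⟨x, rfl⟩

theorem simple_injOn (hrep : ∀ I ⊆ M.E, (M.Indep I ↔ LinearIndependent 𝔽
      (fun x : I => φ x.1))) (hsimp : Simple M) (hEfin : M.E.Finite) :
    Set.InjOn φ M.E := by
  intro x hx y hy hxy
  by_contra hne
  have hind : M.Indep {x, y} := hsimp _ (by simp [insert_subset_iff, hx, hy])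
    ((finite_singleton y).insert x) (by
      rw [Set.ncard_pair hne])
  have hLI := (hrep _ (by simp [insert_subset_iff, hx, hy])).mp hind
  have := hLI.injective (a₁ := ⟨x, Or.inl rfl⟩) (a₂ := ⟨y, Or.inr rfl⟩) hxy
  exact hne (congrArg Subtype.val this)

/-- x,y with parallel vectors are equal (simple case). -/
theorem simple_par (hrep : ∀ I ⊆ M.E, (M.Indep I ↔ LinearIndependent 𝔽
      (fun x : I => φ x.1))) (hsimp : Simple M) (hEfin : M.E.Finite) {x y : α} (hx : x ∈ M.E)
    (hy : y ∈ M.E) (c : 𝔽) (hxy : φ y = c • φ x) : x = y := by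
  by_contra hne
  have hind : M.Indep {x, y} := hsimp _ (by simp [insert_subset_iff, hx, hy])
    ((finite_singleton y).insert x) (by rw [Set.ncard_pair hne])
  have hLI := (hrep _ (by simp [insert_subset_iff, hx, hy])).mp hind
  have hyI : (⟨y, Or.inr rfl⟩ : ({x, y} : Set α)) ∉ ({⟨x, Or.inl rfl⟩} : Set ({x, y} : Set α)) := by
    simp only [mem_singleton_iff, Subtype.mk.injEq]
    exact fun h => hne (congrArg Subtype.val h).symm
  -- y's vector lies in span of x's vector: contradiction with LI
  have hnmem := hLI.notMem_span_image (s := {⟨x, Or.inl rfl⟩}) hyI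
  apply hnmem
  have : φ x ∈ (fun x : ({x, y} : Set α) => φ x.1) '' {⟨x, Or.inl rfl⟩} := ⟨_, rfl, rfl⟩
  rw [hxy]
  exact Submodule.smul_mem _ c (subset_span this)


section Counting

variable [Fintype 𝔽]

theorem ncard_scalings (W : Set α) (hWfin : W.Finite)
    (hφW : ∀ x ∈ W, φ x ≠ 0)
    (hpar : ∀ x ∈ W, ∀ y ∈ W, ∀ c : 𝔽, φ y = c • φ x → x = y) :
    (⋃ x ∈ W, {v : Fin n → 𝔽 | ∃ c : 𝔽, c ≠ 0 ∧ v = c • φ x}).ncard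
      = W.ncard * (Fintype.card 𝔽 - 1) := by
  classical
  set f : W × {c : 𝔽 // c ≠ 0} → (Fin n → 𝔽) := fun p => p.2.1 • φ p.1.1 with hf
  have hrange : (⋃ x ∈ W, {v : Fin n → 𝔽 | ∃ c : 𝔽, c ≠ 0 ∧ v = c • φ x}) = Set.range f := by
    ext v
    constructor
    · intro hv
      simp only [mem_iUnion, mem_setOf_eq] at hv
      obtain ⟨x, hx, c, hc, rfl⟩ := hv
      exact ⟨(⟨x, hx⟩, ⟨c, hc⟩), rfl⟩
    · rintro ⟨⟨⟨x, hx⟩, ⟨c, hc⟩⟩, rfl⟩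
      simp only [mem_iUnion, mem_setOf_eq]
      exact ⟨x, hx, c, hc, rfl⟩
  have hinj : Function.Injective f := by
    rintro ⟨⟨x, hx⟩, ⟨c, hc⟩⟩ ⟨⟨y, hy⟩, ⟨d, hd⟩⟩ h
    simp only [hf] at h
    have hxy : x = y := by
      apply hpar x hx y hy (d⁻¹ * c)
      rw [mul_smul, h, inv_smul_smul₀ hd]
    subst hxy
    have hcd : c = d := by
      obtain ⟨i, hi⟩ : ∃ i, φ x i ≠ 0 := by
        by_contra hno
        push_neg at hno
        exact hφW x hx (funext hno)
      have := congrFun h i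
      simp only [Pi.smul_apply, smul_eq_mul] at this
      exact mul_right_cancel₀ hi this
    subst hcd
    rfl
  rw [hrange, ← Nat.card_coe_set_eq, Nat.card_range_of_injective hinj, Nat.card_prod,
    Nat.card_coe_set_eq, Nat.card_eq_fintype_card]
  congr 1
  have : Fintype.card {c : 𝔽 // c ≠ 0} = Fintype.card 𝔽 - Fintype.card {c : 𝔽 // c = 0} :=
    Fintype.card_subtype_compl _
  rw [this, Fintype.card_subtype_eq]

theorem ncard_sphere (U : Submodule 𝔽 (Fin n → 𝔽)) :
    ({v : Fin n → 𝔽 | v ∈ U ∧ v ≠ 0}).ncard = Fintype.card 𝔽 ^ (Module.finrank 𝔽 U) - 1 := by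
  classical
  have hset : {v : Fin n → 𝔽 | v ∈ U ∧ v ≠ 0} = (U : Set (Fin n → 𝔽)) \ {0} := by
    ext v; simp [mem_diff]
  letI : Fintype ↥U := Fintype.ofFinite _
  have hcardU : (U : Set (Fin n → 𝔽)).ncard = Fintype.card 𝔽 ^ (Module.finrank 𝔽 U) := by
    rw [← card_eq_pow_finrank (K := 𝔽) (V := ↥U), ← Nat.card_coe_set_eq,
      Nat.card_eq_fintype_card]
    exact Fintype.card_congr (Equiv.refl _)
  rw [hset, Set.ncard_diff_singleton_of_mem U.zero_mem, hcardU]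

/-- Fullness from a cardinality assumption. -/
theorem full_of_ncard {W : Set α} {U : Submodule 𝔽 (Fin n → 𝔽)} {d : ℕ}
    (hWfin : W.Finite)
    (hsub : ∀ x ∈ W, φ x ∈ U) (hφW : ∀ x ∈ W, φ x ≠ 0)
    (hpar : ∀ x ∈ W, ∀ y ∈ W, ∀ c : 𝔽, φ y = c • φ x → x = y)
    (hd : Module.finrank 𝔽 U = d)
    (hcard : W.ncard = (Fintype.card 𝔽 ^ d - 1) / (Fintype.card 𝔽 - 1)) :
    ∀ v ∈ U, v ≠ 0 → ∃ x ∈ W, ∃ c : 𝔽, c ≠ 0 ∧ φ x = c • v := by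
  classical
  set T := ⋃ x ∈ W, {v : Fin n → 𝔽 | ∃ c : 𝔽, c ≠ 0 ∧ v = c • φ x} with hT
  set S := {v : Fin n → 𝔽 | v ∈ U ∧ v ≠ 0} with hS
  have hTS : T ⊆ S := by
    rintro v hv
    simp only [hT, mem_iUnion, mem_setOf_eq] at hv
    obtain ⟨x, hx, c, hc, rfl⟩ := hv
    exact ⟨U.smul_mem c (hsub x hx), smul_ne_zero hc (hφW x hx)⟩
  have hdvd : (Fintype.card 𝔽 - 1) ∣ (Fintype.card 𝔽 ^ d - 1) := by
    simpa using Nat.sub_dvd_pow_sub_pow (x := Fintype.card 𝔽) (y := 1) (n := d)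
  have hTcard : T.ncard = Fintype.card 𝔽 ^ d - 1 := by
    rw [hT, ncard_scalings W hWfin hφW hpar, hcard, Nat.div_mul_cancel hdvd]
  have hScard : S.ncard = Fintype.card 𝔽 ^ d - 1 := by rw [hS, ncard_sphere, hd]
  have hSfin : S.Finite := Set.toFinite _
  have : T = S := Set.eq_of_subset_of_ncard_le hTS (le_of_eq (hScard.trans hTcard.symm)) hSfin
  intro v hvU hv0
  have hvT : v ∈ T := this ▸ (show v ∈ S from ⟨hvU, hv0⟩)
  simp only [hT, mem_iUnion, mem_setOf_eq] at hvT
  obtain ⟨x, hx, c, hc, rfl⟩ := hvT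
  exact ⟨x, hx, c⁻¹, inv_ne_zero hc, by rw [inv_smul_smul₀ hc]⟩

/-- Cardinality from fullness. -/
theorem ncard_of_full {W : Set α} {U : Submodule 𝔽 (Fin n → 𝔽)} {d : ℕ}
    (hWfin : W.Finite)
    (hsub : ∀ x ∈ W, φ x ∈ U) (hφW : ∀ x ∈ W, φ x ≠ 0)
    (hpar : ∀ x ∈ W, ∀ y ∈ W, ∀ c : 𝔽, φ y = c • φ x → x = y)
    (hd : Module.finrank 𝔽 U = d)
    (hfull : ∀ v ∈ U, v ≠ 0 → ∃ x ∈ W, ∃ c : 𝔽, c ≠ 0 ∧ φ x = c • v) :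
    W.ncard = (Fintype.card 𝔽 ^ d - 1) / (Fintype.card 𝔽 - 1) := by
  classical
  set T := ⋃ x ∈ W, {v : Fin n → 𝔽 | ∃ c : 𝔽, c ≠ 0 ∧ v = c • φ x} with hT
  set S := {v : Fin n → 𝔽 | v ∈ U ∧ v ≠ 0} with hS
  have hTS : T = S := by
    apply subset_antisymm
    · rintro v hv
      simp only [hT, mem_iUnion, mem_setOf_eq] at hv
      obtain ⟨x, hx, c, hc, rfl⟩ := hv
      exact ⟨U.smul_mem c (hsub x hx), smul_ne_zero hc (hφW x hx)⟩
    · rintro v ⟨hvU, hv0⟩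
      obtain ⟨x, hx, c, hc, hφx⟩ := hfull v hvU hv0
      simp only [hT, mem_iUnion, mem_setOf_eq]
      exact ⟨x, hx, c⁻¹, inv_ne_zero hc, by rw [hφx, inv_smul_smul₀ hc]⟩
  have hq : 1 < Fintype.card 𝔽 := Fintype.one_lt_card
  have hTcard : W.ncard * (Fintype.card 𝔽 - 1) = Fintype.card 𝔽 ^ d - 1 := by
    rw [← ncard_scalings W hWfin hφW hpar, ← hT, hTS, hS, ncard_sphere, hd]
  rw [← hTcard, Nat.mul_div_cancel _ (by omega)]

end Counting

end Rep


/-! ### Single-element extensions -/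

section Ext

open Submodule Module

variable {𝔽 : Type*} [Field 𝔽] {n : ℕ} {φ : α → Fin n → 𝔽} {M' : Matroid α}

theorem flat_inter (hF : M.IsFlat F) (hG : M.IsFlat G) : M.IsFlat (F ∩ G) := by
  refine flat_of_closure_eq ?_ (inter_subset_left.trans hF.subset_ground)
  apply subset_antisymm ?_ (M.subset_closure _ (inter_subset_left.trans hF.subset_ground))
  have h1 : M.closure (F ∩ G) ⊆ M.closure F := M.closure_subset_closure inter_subset_left
  have h2 : M.closure (F ∩ G) ⊆ M.closure G := M.closure_subset_closure inter_subset_right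
  rw [hF.closure] at h1
  rw [hG.closure] at h2
  exact subset_inter h1 h2

section Del

variable (hdel : PaperDefs.delete M' {e} = M) (hE' : M'.E = insert e M.E) (he : e ∉ M.E)

include hdel hE' he

theorem del_ground_eq : M'.E \ {e} = M.E := by
  rw [hE', insert_diff_of_mem _ (mem_singleton e), diff_singleton_eq_self he]

theorem indep_del_iff (hI : I ⊆ M.E) : M.Indep I ↔ M'.Indep I := by
  rw [← hdel, PaperDefs.delete, restrict_indep_iff, del_ground_eq hdel hE' he]
  exact ⟨fun h => h.1, fun h => ⟨h, hI⟩⟩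

theorem rkOf_del_eq (hX : X ⊆ M.E) : rkOf M' X = rkOf M X := by
  conv_rhs => rw [← hdel]
  rw [rkOf, PaperDefs.delete, rkOf,
    restrict_restrict_eq _ (show X ⊆ M'.E \ {e} by rwa [del_ground_eq hdel hE' he])]

/-- The modular cut lemma: if `e ∈ cl'(M.E)` and `M`'s flats are modular,
the extension is principal on a flat. -/
theorem exists_principal_flat (hfinE : M.E.Finite)
    (hmodular : ∀ F G, M.IsFlat F → M.IsFlat G →
      rkOf M F + rkOf M G = rkOf M (F ∪ G) + rkOf M (F ∩ G))
    (hecl : e ∈ M'.closure M.E) :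
    ∃ Fl, M.IsFlat Fl ∧ e ∈ M'.closure Fl ∧
      (∀ X ⊆ M.E, (e ∈ M'.closure X ↔ Fl ⊆ M.closure X)) := by
  have hfinE' : M'.E.Finite := by rw [hE']; exact hfinE.insert e
  have heE' : e ∈ M'.E := by rw [hE']; exact mem_insert e M.E
  have hEsub : M.E ⊆ M'.E := by rw [hE']; exact subset_insert e M.E
  set S : Set (Set α) := {F | M.IsFlat F ∧ e ∈ M'.closure F} with hS
  -- S is closed under pairwise intersections
  have hpair : ∀ F G, F ∈ S → G ∈ S → F ∩ G ∈ S := by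
    rintro F G ⟨hF, heF⟩ ⟨hG, heG⟩
    refine ⟨flat_inter hF hG, ?_⟩
    have hFE := hF.subset_ground
    have hGE := hG.subset_ground
    have hFE' : F ⊆ M'.E := hFE.trans hEsub
    have hGE' : G ⊆ M'.E := hGE.trans hEsub
    have ha : rkOf M' (insert e F) = rkOf M' F :=
      (mem_closure_iff_rkOf hfinE' hFE' heE').mp heF
    have hb : rkOf M' (insert e G) = rkOf M' G :=
      (mem_closure_iff_rkOf hfinE' hGE' heE').mp heG
    rw [mem_closure_iff_rkOf hfinE' ((inter_subset_left.trans hFE).trans hEsub) heE']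
    have hsub := rkOf_submod (M := M') hfinE' (insert_subset heE' hFE')
      (insert_subset heE' hGE')
    rw [← insert_union_distrib, ← insert_inter_distrib, ha, hb,
      rkOf_del_eq hdel hE' he hFE, rkOf_del_eq hdel hE' he hGE] at hsub
    have hmono : rkOf M (F ∪ G) ≤ rkOf M' (insert e (F ∪ G)) := by
      rw [← rkOf_del_eq hdel hE' he (union_subset hFE hGE)]
      exact rkOf_mono hfinE' (subset_insert _ _)
    have hmod := hmodular F G hF hG
    have hceil : rkOf M' (insert e (F ∩ G)) ≤ rkOf M (F ∩ G) := by omega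
    have hfloor : rkOf M (F ∩ G) ≤ rkOf M' (insert e (F ∩ G)) := by
      rw [← rkOf_del_eq hdel hE' he (inter_subset_left.trans hFE)]
      exact rkOf_mono hfinE' (subset_insert _ _)
    rw [rkOf_del_eq hdel hE' he (inter_subset_left.trans hFE)]
    exact le_antisymm hceil hfloor
  have hES : M.E ∈ S := ⟨M.ground_isFlat, hecl⟩
  -- the intersection of all members of S is in S
  have hSfin : S.Finite := (hfinE.finite_subsets).subset (fun F hF => hF.1.subset_ground)
  have hkey : ∀ S' : Set (Set α), S'.Finite → S' ⊆ S → ⋂₀ (insert M.E S') ∈ S := by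
    intro S' hS'fin
    refine Set.Finite.induction_on (motive := fun S' _ => S' ⊆ S → ⋂₀ (insert M.E S') ∈ S)
      S' hS'fin (fun _ => by simpa using hES) ?_
    intro F T hFT hTfin ih hsub
    rw [insert_comm, sInter_insert]
    exact hpair _ _ (hsub (mem_insert F T)) (ih (fun G hG => hsub (mem_insert_of_mem F hG)))
  have hFl : ⋂₀ S ∈ S := by
    have h := hkey S hSfin Subset.rfl
    rwa [insert_eq_self.mpr hES] at h
  refine ⟨⋂₀ S, hFl.1, hFl.2, fun X hX => ?_⟩
  constructor
  · intro hecX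
    apply sInter_subset_of_mem
    exact ⟨flat_closure M hX, M'.closure_subset_closure (M.subset_closure X hX) hecX⟩
  · intro hFlX
    have h1 : e ∈ M'.closure (M.closure X) :=
      M'.closure_subset_closure hFlX hFl.2
    have h2 : M.closure X ⊆ M'.closure X := by
      rw [closure_delete_point hdel hE' he hX]
      exact diff_subset
    have := M'.closure_subset_closure_of_subset_closure h2
    exact this h1

theorem rep_of_loop (hrep : ∀ I ⊆ M.E, (M.Indep I ↔ LinearIndependent 𝔽
      (fun x : I => φ x.1))) (hloop : ¬ M'.Indep {e}) : PaperDefs.Rep M' 𝔽 := by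
  classical
  refine ⟨n, Function.update φ e 0, fun I hI => ?_⟩
  by_cases heI : e ∈ I
  · constructor
    · intro h
      exact absurd (h.subset (singleton_subset_iff.mpr heI)) hloop
    · intro h
      exfalso
      have hz := h.ne_zero ⟨e, heI⟩
      simp only [Function.update_self] at hz
      exact hz rfl
  · have hIE : I ⊆ M.E := by
      intro x hx
      rcases mem_insert_iff.mp (hE' ▸ hI hx) with h | h
      · exact absurd (h ▸ hx) heI
      · exact h
    have hfun : (fun x : I => Function.update φ e 0 x.1) = fun x : I => φ x.1 :=
      funext fun x => Function.update_of_ne (fun hh => heI (by rw [← hh]; exact x.2)) _ _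
    rw [hfun, ← indep_del_iff hdel hE' he hIE, hrep I hIE]

end Del

section Coloop

/-- The coordinate-extension linear map. -/
def extL (𝔽 : Type*) [Field 𝔽] (n : ℕ) : (Fin n → 𝔽) →ₗ[𝔽] (Fin (n + 1) → 𝔽) where
  toFun v := fun i => if h : (i : ℕ) < n then v ⟨i, h⟩ else 0
  map_add' u v := by funext i; by_cases h : (i : ℕ) < n <;> simp [h]
  map_smul' c v := by funext i; by_cases h : (i : ℕ) < n <;> simp [h]

theorem extL_apply (v : Fin n → 𝔽) (i : Fin (n + 1)) :
    extL 𝔽 n v i = if h : (i : ℕ) < n then v ⟨i, h⟩ else 0 := rfl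

theorem extL_injective : Function.Injective (extL 𝔽 n) := by
  intro u v h
  funext j
  have h1 := congrFun h ⟨j.1, Nat.lt_succ_of_lt j.2⟩
  rw [extL_apply, extL_apply] at h1
  simpa [j.2] using h1

theorem extL_last (v : Fin n → 𝔽) : extL 𝔽 n v (Fin.last n) = 0 := by
  rw [extL_apply]
  simp [Fin.last]

end Coloop

section Del2

variable (hdel : PaperDefs.delete M' {e} = M) (hE' : M'.E = insert e M.E) (he : e ∉ M.E)

include hdel hE' he

theorem rep_of_coloop (hrep : ∀ I ⊆ M.E, (M.Indep I ↔ LinearIndependent 𝔽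
      (fun x : I => φ x.1))) (hclp : e ∉ M'.closure M.E) : PaperDefs.Rep M' 𝔽 := by
  classical
  set ψ : α → Fin (n + 1) → 𝔽 :=
    fun x => if x = e then (fun i => if (i : ℕ) < n then 0 else 1) else extL 𝔽 n (φ x) with hψ
  have hψne : ∀ x ∈ M.E, ψ x = extL 𝔽 n (φ x) := fun x hx => by
    rw [hψ]
    simp only [if_neg (show ¬ x = e from fun hh => he (hh ▸ hx))]
  have htrans : ∀ J ⊆ M.E, (LinearIndependent 𝔽 (fun x : J => ψ x.1) ↔
      LinearIndependent 𝔽 (fun x : J => φ x.1)) := by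
    intro J hJ
    have hcomp : (fun x : J => ψ x.1) = (extL 𝔽 n) ∘ (fun x : J => φ x.1) :=
      funext fun x => hψne _ (hJ x.2)
    rw [hcomp]
    exact ⟨fun h => LinearIndependent.of_comp _ h,
      fun h => h.map' _ (LinearMap.ker_eq_bot.mpr extL_injective)⟩
  refine ⟨n + 1, ψ, fun I hI => ?_⟩
  by_cases heI : e ∈ I
  · set J := I \ {e} with hJdef
    have hJE : J ⊆ M.E := by
      intro x hx
      rcases mem_insert_iff.mp (hE' ▸ hI hx.1) with h | h
      · exact absurd h hx.2
      · exact h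
    have hIJ : I = insert e J := by
      rw [hJdef, insert_diff_singleton, insert_eq_of_mem heI]
    have heJ : e ∉ J := fun h => h.2 rfl
    have hmat : M'.Indep I ↔ M.Indep J := by
      rw [hIJ]
      constructor
      · intro h
        rw [indep_del_iff hdel hE' he hJE]
        exact h.subset (subset_insert _ _)
      · intro h
        have hJ' : M'.Indep J := (indep_del_iff hdel hE' he hJE).mp h
        rw [hJ'.insert_indep_iff_of_notMem heJ]
        refine ⟨by rw [hE']; exact mem_insert _ _, fun hcl => hclp ?_⟩
        exact M'.closure_subset_closure hJE hcl
    have hlast : ψ e ∉ Submodule.span 𝔽 (ψ '' J) := by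
      intro hmem
      have hrange : ψ '' J ⊆ ↑(LinearMap.range (extL 𝔽 n)) := by
        rintro - ⟨x, hx, rfl⟩
        rw [hψne x (hJE hx)]
        exact ⟨φ x, rfl⟩
      have hsp : Submodule.span 𝔽 (ψ '' J) ≤ LinearMap.range (extL 𝔽 n) :=
        Submodule.span_le.mpr hrange
      obtain ⟨v, hv⟩ := hsp hmem
      have h1 := congrFun hv (Fin.last n)
      rw [extL_last] at h1
      have h2 : ψ e (Fin.last n) = 1 := by
        rw [hψ]
        simp [Fin.last]
      rw [h2] at h1
      exact one_ne_zero h1.symm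
    have hli : LinearIndependent 𝔽 (fun x : I => ψ x.1) ↔
        LinearIndependent 𝔽 (fun x : J => ψ x.1) ∧ ψ e ∉ Submodule.span 𝔽 (ψ '' J) := by
      rw [hIJ]
      exact linearIndependent_insert' heJ
    rw [hmat, hli, htrans J hJE, ← hrep J hJE]
    exact (and_iff_left hlast).symm
  · have hIE : I ⊆ M.E := by
      intro x hx
      rcases mem_insert_iff.mp (hE' ▸ hI hx) with h | h
      · exact absurd (h ▸ hx) heI
      · exact h
    rw [← indep_del_iff hdel hE' he hIE, htrans I hIE, hrep I hIE]

theorem rep_of_parallel (hrep : ∀ I ⊆ M.E, (M.Indep I ↔ LinearIndependent 𝔽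
      (fun x : I => φ x.1))) {f : α} (hf : f ∈ M.E) (hef : e ∈ M'.closure {f})
    (hei : M'.Indep {e}) : PaperDefs.Rep M' 𝔽 := by
  classical
  have heE' : e ∈ M'.E := hei.subset_ground rfl
  have hfE' : f ∈ M'.E := by rw [hE']; exact mem_insert_of_mem _ hf
  have hnecl : e ∉ M'.closure ∅ := by
    intro hcl
    rw [M'.empty_indep.mem_closure_iff'] at hcl
    simpa using hcl.2 (by simpa using hei)
  have hfe : f ∈ M'.closure {e} := by
    have hx := Matroid.closure_exchange (M := M') (X := ∅) (e := e) (f := f)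
      ⟨by simpa using hef, hnecl⟩
    simpa using hx.1
  have hfecl : ∀ J, J ⊆ M'.E → (e ∈ M'.closure J ↔ f ∈ M'.closure J) := by
    intro J hJE
    constructor
    · intro h
      exact M'.closure_subset_closure_of_subset_closure (singleton_subset_iff.mpr h) hfe
    · intro h
      exact M'.closure_subset_closure_of_subset_closure (singleton_subset_iff.mpr h) hef
  set ψ := Function.update φ e (φ f) with hψ
  have hupd : ∀ x ∈ M.E, ψ x = φ x := fun x hx =>
    Function.update_of_ne (fun hh => he (by rw [← hh]; exact hx)) _ _
  refine ⟨n, ψ, fun I hI => ?_⟩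
  by_cases heI : e ∈ I
  · set J := I \ {e} with hJdef
    have hJE : J ⊆ M.E := by
      intro x hx
      rcases mem_insert_iff.mp (hE' ▸ hI hx.1) with h | h
      · exact absurd h hx.2
      · exact h
    have hJE' : J ⊆ M'.E := fun x hx => hI hx.1
    have hIJ : I = insert e J := by
      rw [hJdef, insert_diff_singleton, insert_eq_of_mem heI]
    have heJ : e ∉ J := fun h => h.2 rfl
    have hmat : M'.Indep I ↔ (f ∉ J ∧ M.Indep (insert f J)) := by
      rw [hIJ]
      constructor
      · intro h
        have hJi : M'.Indep J := h.subset (subset_insert _ _)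
        have hecl : e ∉ M'.closure J := ((hJi.insert_indep_iff_of_notMem heJ).mp h).2
        have hfJ : f ∉ J := fun hfJ =>
          hecl (M'.closure_subset_closure_of_subset_closure
            (singleton_subset_iff.mpr (M'.mem_closure_of_mem hfJ hJE')) hef)
        have hfcl : f ∉ M'.closure J := fun hc => hecl ((hfecl J hJE').mpr hc)
        have hParIns : M'.Indep (insert f J) := by
          rw [hJi.insert_indep_iff_of_notMem hfJ]
          exact ⟨hfE', hfcl⟩
        exact ⟨hfJ, (indep_del_iff hdel hE' he (insert_subset hf hJE)).mpr hParIns⟩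
      · rintro ⟨hfJ, hind⟩
        have hind' : M'.Indep (insert f J) :=
          (indep_del_iff hdel hE' he (insert_subset hf hJE)).mp hind
        have hJi : M'.Indep J := hind'.subset (subset_insert _ _)
        have hecl : e ∉ M'.closure J := by
          intro hecl
          exact ((hJi.insert_indep_iff_of_notMem hfJ).mp hind').2 ((hfecl J hJE').mp hecl)
        rw [hJi.insert_indep_iff_of_notMem heJ]
        exact ⟨heE', hecl⟩
    have hψJ : (fun x : J => ψ x.1) = fun x : J => φ x.1 :=
      funext fun x => hupd _ (hJE x.2)
    have himg : ψ '' J = φ '' J := image_congr fun x hx => hupd x (hJE hx)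
    have hli : LinearIndependent 𝔽 (fun x : I => ψ x.1) ↔
        LinearIndependent 𝔽 (fun x : J => ψ x.1) ∧ ψ e ∉ Submodule.span 𝔽 (ψ '' J) := by
      rw [hIJ]
      exact linearIndependent_insert' heJ
    by_cases hfJ : f ∈ J
    · apply iff_of_false
      · intro h
        rw [hmat] at h
        exact h.1 hfJ
      · intro h
        rw [hIJ] at h
        have hinj := h.injective
        have heq : (⟨e, mem_insert _ _⟩ : ↥(insert e J)) = ⟨f, mem_insert_of_mem _ hfJ⟩ :=
          hinj (by simp only [Function.update_self, hψ]; exact (hupd f (hJE hfJ)).symm)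
        have hef2 : e = f := congrArg Subtype.val heq
        rw [hef2] at he
        exact he hf
    · rw [hmat, hli, hψJ, himg]
      have hψe : ψ e = φ f := Function.update_self _ _ _
      rw [hψe, and_iff_right hfJ, hrep _ (insert_subset hf hJE),
        linearIndependent_insert' hfJ]
  · have hIE : I ⊆ M.E := by
      intro x hx
      rcases mem_insert_iff.mp (hE' ▸ hI hx) with h | h
      · exact absurd (h ▸ hx) heI
      · exact h
    have hψI : (fun x : I => ψ x.1) = fun x : I => φ x.1 :=
      funext fun x => hupd _ (hIE x.2)
    rw [hψI, ← indep_del_iff hdel hE' he hIE, hrep I hIE]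

end Del2

end Ext


/-! ### The main construction -/

section Main

open Submodule Module

variable {𝔽 : Type*} [Field 𝔽] [Fintype 𝔽] {n : ℕ} {φ : α → Fin n → 𝔽} {M' : Matroid α}

theorem disj_span {B s t : Set α} (hLI : LinearIndependent 𝔽 (fun x : B => φ x.1))
    (hs : s ⊆ B) (ht : t ⊆ B) (hst : Disjoint s t) :
    Disjoint (Submodule.span 𝔽 (φ '' s)) (Submodule.span 𝔽 (φ '' t)) := by
  have h := hLI.disjoint_span_image (s := (Subtype.val ⁻¹' s : Set B))
    (t := (Subtype.val ⁻¹' t : Set B)) (hst.preimage _)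
  have h1 : (fun x : B => φ x.1) '' (Subtype.val ⁻¹' s) = φ '' s := by
    rw [show (fun x : B => φ x.1) = φ ∘ Subtype.val from rfl, image_comp,
      Subtype.image_preimage_coe, inter_eq_self_of_subset_right hs]
  have h2 : (fun x : B => φ x.1) '' (Subtype.val ⁻¹' t) = φ '' t := by
    rw [show (fun x : B => φ x.1) = φ ∘ Subtype.val from rfl, image_comp,
      Subtype.image_preimage_coe, inter_eq_self_of_subset_right ht]
  rwa [h1, h2] at h

theorem finrank_span_sub {B s : Set α} (hLI : LinearIndependent 𝔽 (fun x : B => φ x.1))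
    (hs : s ⊆ B) (hfin : s.Finite) :
    finrank 𝔽 (Submodule.span 𝔽 (φ '' s)) = s.ncard := by
  have : Fintype s := hfin.fintype
  have hli := lion_mono hLI hs
  rw [Set.image_eq_range, finrank_span_eq_card hli]
  rw [Set.ncard_eq_toFinset_card' s, Set.toFinset_card]

/-- The wrap-up: given all the structural data, contracting `C = IFl \ I₀` and restricting to
the points of `U = span (φ '' (I₀ ∪ T₀))` (plus `e`) gives `P(m-1, q, k)` as a minor. -/
theorem construction {m k : ℕ}
    (hrep : ∀ I ⊆ M.E, (M.Indep I ↔ LinearIndependent 𝔽 (fun x : I => φ x.1)))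
    (hsimp : Simple M) (hfinE : M.E.Finite)
    (hdel : PaperDefs.delete M' {e} = M) (hE' : M'.E = insert e M.E) (he : e ∉ M.E)
    (hfull : ∀ v ∈ Submodule.span 𝔽 (φ '' M.E), v ≠ 0 →
      ∃ x ∈ M.E, ∃ c : 𝔽, c ≠ 0 ∧ φ x = c • v)
    {Fl : Set α} (hFlflat : M.IsFlat Fl)
    (hprin : ∀ X ⊆ M.E, (e ∈ M'.closure X ↔ Fl ⊆ M.closure X))
    {IFl BM I₀ T₀ : Set α}
    (hIFl : M.IsBasis IFl Fl) (hBM : M.IsBase BM) (hIFlBM : IFl ⊆ BM)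
    (hI₀ : I₀ ⊆ IFl) (hT₀ : T₀ ⊆ BM \ IFl)
    (hcard₀ : (I₀ ∪ T₀).ncard = m) (hk : I₀.ncard = k) :
    ∃ N : Matroid α, PaperDefs.IsMinor N M' ∧ IsPGPrincExt N 𝔽 m k := by
  classical
  have hinj : Set.InjOn φ M.E := simple_injOn hrep hsimp hfinE
  have hnz : ∀ x ∈ M.E, φ x ≠ 0 := fun x hx => simple_nonzero hrep hsimp hfinE hx
  have hpar : ∀ x ∈ M.E, ∀ y ∈ M.E, ∀ c : 𝔽, φ y = c • φ x → x = y :=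
    fun x hx y hy c h => simple_par hrep hsimp hfinE hx hy c h
  have hBME : BM ⊆ M.E := hBM.subset_ground
  have hIFlE : IFl ⊆ M.E := hIFlBM.trans hBME
  have hFlE : Fl ⊆ M.E := hFlflat.subset_ground
  have heE' : e ∈ M'.E := by rw [hE']; exact mem_insert _ _
  have hEE' : M.E ⊆ M'.E := by rw [hE']; exact subset_insert _ _
  set C : Set α := IFl \ I₀ with hCdef
  have hCE : C ⊆ M.E := diff_subset.trans hIFlE
  have hCi : M.Indep C := hIFl.indep.subset diff_subset
  have hCi' : M'.Indep C := (indep_del_iff hdel hE' he hCE).mp hCi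
  have heC : e ∉ C := fun h => he (hCE h)
  have hLIBM : LinearIndependent 𝔽 (fun x : BM => φ x.1) :=
    (hrep BM hBME).mp hBM.indep
  have hIT : I₀ ∪ T₀ ⊆ BM := union_subset (hI₀.trans hIFlBM) (hT₀.trans diff_subset)
  have hITE : I₀ ∪ T₀ ⊆ M.E := hIT.trans hBME
  set U₀ : Submodule 𝔽 (Fin n → 𝔽) := Submodule.span 𝔽 (φ '' I₀) with hU₀def
  set U : Submodule 𝔽 (Fin n → 𝔽) := Submodule.span 𝔽 (φ '' (I₀ ∪ T₀)) with hUdef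
  set UC : Submodule 𝔽 (Fin n → 𝔽) := Submodule.span 𝔽 (φ '' C) with hUCdef
  have hU₀U : U₀ ≤ U := span_mono (image_mono subset_union_left)
  have hITC : Disjoint (I₀ ∪ T₀) C := by
    rw [disjoint_union_left]
    constructor
    · exact disjoint_left.mpr fun x hx hxC => hxC.2 hx
    · exact disjoint_left.mpr fun x hx hxC => (hT₀ hx).2 (hxC.1)
  have hCBM : C ⊆ BM := diff_subset.trans hIFlBM
  have hUUC : Disjoint U UC := disj_span hLIBM hIT hCBM hITC
  have hIFlsplit : IFl = I₀ ∪ C := by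
    rw [hCdef, union_diff_cancel' Subset.rfl hI₀]
  have hspanIFl : Submodule.span 𝔽 (φ '' IFl) = U₀ ⊔ UC := by
    rw [hIFlsplit, image_union, span_union]
  have hspanFl : Submodule.span 𝔽 (φ '' Fl) = U₀ ⊔ UC := by
    rw [← span_basis_rep hrep hFlE hIFl, hspanIFl]
  have hUrank : finrank 𝔽 U = m := by
    rw [hUdef, finrank_span_sub hLIBM hIT (hfinE.subset hITE), hcard₀]
  have hU₀rank : finrank 𝔽 U₀ = k := by
    rw [hU₀def, finrank_span_sub hLIBM ((hI₀.trans hIFlBM)) (hfinE.subset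
      ((hI₀.trans hIFlE))), hk]
  -- the point set of U
  set W : Set α := {x ∈ M.E | φ x ∈ U} with hWdef
  have hWE : W ⊆ M.E := sep_subset _ _
  have hWfin : W.Finite := hfinE.subset hWE
  have heW : e ∉ W := fun h => he (hWE h)
  have hITW : I₀ ∪ T₀ ⊆ W := fun x hx => ⟨hITE hx, subset_span ⟨x, hx, rfl⟩⟩
  have hWC : Disjoint W C := by
    rw [disjoint_left]
    rintro x ⟨hxE, hxU⟩ hxC
    have hφC : φ x ∈ UC := subset_span ⟨x, hxC, rfl⟩
    exact hnz x hxE (disjoint_def.mp hUUC _ hxU hφC)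
  have hWeEC : insert e W ⊆ M'.E \ C :=
    insert_subset ⟨heE', heC⟩ (fun x hx => ⟨hEE' (hWE hx), disjoint_left.mp hWC hx⟩)
  -- the minor
  set D : Set α := (M'.E \ C) \ insert e W with hDdef
  set N : Matroid α := PaperDefs.delete (PaperDefs.contract M' C) D with hNdef
  have hNg : N = (PaperDefs.contract M' C) ↾ (insert e W) := by
    rw [hNdef, PaperDefs.delete, contract_ground, hDdef, diff_diff_right_self,
      inter_eq_self_of_subset_right hWeEC]
  set K : Matroid α := (PaperDefs.contract M' C) ↾ W with hKdef
  have hNe : insert e W \ {e} = W := by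
    rw [insert_diff_of_mem _ (mem_singleton e), diff_singleton_eq_self heW]
  have hKg : PaperDefs.delete N {e} = K := by
    rw [hNg, PaperDefs.delete, restrict_ground_eq, hNe,
      restrict_restrict_eq _ (subset_insert e W)]
  have hKE : K.E = W := rfl
  -- independence in K is linear independence
  have hKrep : ∀ I ⊆ W, (K.Indep I ↔ LinearIndependent 𝔽 (fun x : I => φ x.1)) := by
    intro I hIW
    have hIE : I ⊆ M.E := hIW.trans hWE
    have hIC : I ∪ C ⊆ M.E := union_subset hIE hCE
    have hICE' : I ⊆ M'.E \ C :=
      fun x hx => ⟨hEE' (hIE hx), disjoint_left.mp hWC (hIW hx)⟩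
    rw [hKdef, restrict_indep_iff, and_iff_left hIW, indep_contract_iff hCi',
      and_iff_right hICE', ← indep_del_iff hdel hE' he hIC, hrep _ hIC]
    -- now: LI (I ∪ C) ↔ LI I
    have hICinj : Set.InjOn φ (I ∪ C) := hinj.mono hIC
    have hIinj : Set.InjOn φ I := hinj.mono hIE
    have hCinj : Set.InjOn φ C := hinj.mono hCE
    rw [linearIndependent_image hICinj, linearIndependent_image hIinj, image_union]
    constructor
    · intro h
      exact h.mono subset_union_left
    · intro h
      have hspanI : Submodule.span 𝔽 (φ '' I) ≤ U := by
        rw [span_le]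
        rintro - ⟨x, hx, rfl⟩
        exact (hIW hx).2
      exact h.id_union ((linearIndependent_image hCinj).mp ((hrep C hCE).mp hCi))
        (hUUC.mono_left hspanI)
  have hKrep' : ∀ I ⊆ K.E, (K.Indep I ↔ LinearIndependent 𝔽 (fun x : I => φ x.1)) := hKrep
  have hKcl : ∀ X ⊆ W, K.closure X = {x ∈ W | φ x ∈ Submodule.span 𝔽 (φ '' X)} := by
    intro X hX
    exact closure_rep (M := K) hKrep' (show X ⊆ K.E from hX)
  have hKsimp : Simple K := by
    intro I hIW hfin hc
    rw [hKrep I hIW]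
    exact (hrep I ((hIW : I ⊆ W).trans hWE)).mp (hsimp I ((hIW : I ⊆ W).trans hWE) hfin hc)
  have hbaseK : K.IsBase (I₀ ∪ T₀) := by
    have hind : K.Indep (I₀ ∪ T₀) := (hKrep _ hITW).mpr (lion_mono hLIBM hIT)
    refine hind.isBase_of_ground_subset_closure ?_
    rw [hKcl _ hITW]
    intro x hx
    exact ⟨hx, (hx : x ∈ W).2⟩
  have hrkK : rk K = m := by rw [rk_base hbaseK, hcard₀]
  have hUV : U ≤ Submodule.span 𝔽 (φ '' M.E) := span_mono (image_mono hITE)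
  have hfullU : ∀ v ∈ U, v ≠ 0 → ∃ x ∈ W, ∃ c : 𝔽, c ≠ 0 ∧ φ x = c • v := by
    intro v hv hv0
    obtain ⟨x, hxE, c, hc, hφx⟩ := hfull v (hUV hv) hv0
    exact ⟨x, ⟨hxE, by rw [hφx]; exact U.smul_mem c hv⟩, c, hc, hφx⟩
  have hWcard : W.ncard = (Fintype.card 𝔽 ^ m - 1) / (Fintype.card 𝔽 - 1) :=
    ncard_of_full hWfin (fun x hx => hx.2) (fun x hx => hnz x (hWE hx))
      (fun x hx y hy c h => hpar x (hWE hx) y (hWE hy) c h) hUrank hfullU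
  have hKPG : IsPG K 𝔽 m := ⟨hKsimp, ⟨n, φ, hKrep'⟩, hrkK, hWfin, hWcard⟩
  set FlN : Set α := {x ∈ W | φ x ∈ U₀} with hFlNdef
  have hFlNW : FlN ⊆ W := sep_subset _ _
  have hspanFlN : Submodule.span 𝔽 (φ '' FlN) = U₀ := by
    apply le_antisymm
    · rw [span_le]
      rintro - ⟨x, hx, rfl⟩
      exact hx.2
    · intro v hv
      by_cases hv0 : v = 0
      · rw [hv0]; exact zero_mem _
      · obtain ⟨x, hxW, c, hc, hφx⟩ := hfullU v (hU₀U hv) hv0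
        have hxFlN : x ∈ FlN := ⟨hxW, by rw [hφx]; exact U₀.smul_mem c hv⟩
        have hm : φ x ∈ Submodule.span 𝔽 (φ '' FlN) := subset_span ⟨x, hxFlN, rfl⟩
        have h2 : v = c⁻¹ • φ x := by rw [hφx, inv_smul_smul₀ hc]
        rw [h2]
        exact Submodule.smul_mem _ _ hm
  have hFlNflat : K.IsFlat FlN := by
    apply flat_of_closure_eq _ (show FlN ⊆ K.E from hFlNW)
    rw [hKcl FlN hFlNW, hspanFlN]
  have hrkFlN : rkOf K FlN = k := by
    rw [rkOf_rep hKrep' (show K.E.Finite from hWfin) (show FlN ⊆ K.E from hFlNW),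
      hspanFlN, hU₀rank]
  have hprinN : ∀ X ⊆ W, (e ∈ N.closure X ↔ FlN ⊆ K.closure X) := by
    intro X hXW
    have hXE : X ⊆ M.E := hXW.trans hWE
    have hXEC : X ⊆ M'.E \ C := fun x hx => ⟨hEE' (hXE hx), disjoint_left.mp hWC (hXW hx)⟩
    have hXC : X ∪ C ⊆ M.E := union_subset hXE hCE
    have hspanXU : Submodule.span 𝔽 (φ '' X) ≤ U := by
      rw [span_le]
      rintro - ⟨x, hx, rfl⟩
      exact (hXW hx).2
    have h1 : e ∈ N.closure X ↔ e ∈ (PaperDefs.contract M' C).closure X := by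
      rw [hNg, closure_restrict (M := PaperDefs.contract M' C) (R := insert e W)
        (hXW.trans (subset_insert _ _)) (by rw [contract_ground]; exact hWeEC),
        mem_inter_iff, and_iff_left (mem_insert e W)]
    have h2 : e ∈ (PaperDefs.contract M' C).closure X ↔ e ∈ M'.closure (X ∪ C) := by
      rw [closure_contract hCi' hXEC, mem_diff, and_iff_left heC]
    have h3 : e ∈ M'.closure (X ∪ C) ↔ Fl ⊆ M.closure (X ∪ C) := hprin _ hXC
    have h4 : Fl ⊆ M.closure (X ∪ C) ↔ U₀ ≤ Submodule.span 𝔽 (φ '' X) ⊔ UC := by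
      rw [closure_rep hrep hXC]
      constructor
      · intro h
        have hsp : Submodule.span 𝔽 (φ '' Fl) ≤ Submodule.span 𝔽 (φ '' (X ∪ C)) := by
          rw [span_le]
          rintro - ⟨x, hx, rfl⟩
          exact (h hx).2
        rw [hspanFl, image_union, span_union] at hsp
        exact le_sup_left.trans hsp
      · intro h x hx
        refine ⟨hFlE hx, ?_⟩
        have hm : φ x ∈ Submodule.span 𝔽 (φ '' Fl) := subset_span ⟨x, hx, rfl⟩
        rw [hspanFl] at hm
        rw [image_union, span_union]
        exact (sup_le h le_sup_right) hm
    have h5 : U₀ ≤ Submodule.span 𝔽 (φ '' X) ⊔ UC ↔ U₀ ≤ Submodule.span 𝔽 (φ '' X) := by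
      constructor
      · intro h v hv
        obtain ⟨a, ha, c, hcUC, hsum⟩ := Submodule.mem_sup.mp (h hv)
        have hcU : c ∈ U := by
          have hvU : v ∈ U := hU₀U hv
          have haU : a ∈ U := hspanXU ha
          have hsub : v - a ∈ U := U.sub_mem hvU haU
          rwa [← hsum, add_sub_cancel_left] at hsub
        have hc0 : c = 0 := disjoint_def.mp hUUC c hcU hcUC
        rw [← hsum, hc0, add_zero]
        exact ha
      · intro h
        exact h.trans le_sup_left
    have h6 : U₀ ≤ Submodule.span 𝔽 (φ '' X) ↔ FlN ⊆ K.closure X := by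
      rw [hKcl X hXW]
      constructor
      · intro h x hx
        exact ⟨hx.1, h hx.2⟩
      · intro h v hv
        by_cases hv0 : v = 0
        · rw [hv0]; exact zero_mem _
        · obtain ⟨x, hxW, c, hc, hφx⟩ := hfullU v (hU₀U hv) hv0
          have hxFlN : x ∈ FlN := ⟨hxW, by rw [hφx]; exact U₀.smul_mem c hv⟩
          have hmem : φ x ∈ Submodule.span 𝔽 (φ '' X) := (h hxFlN).2
          have h2 : v = c⁻¹ • φ x := by rw [hφx, inv_smul_smul₀ hc]
          rw [h2]
          exact Submodule.smul_mem _ _ hmem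
    rw [h1, h2, h3, h4, h5, h6]
  have hNground : N.E = insert e W := by rw [hNg, restrict_ground_eq]
  refine ⟨N, ⟨C, D, hCE.trans hEE', diff_subset.trans diff_subset, ?_, rfl⟩, ?_⟩
  · exact disjoint_left.mpr fun x hxC hxD => hxD.1.2 hxC
  · refine ⟨e, FlN, ?_, ?_, ?_⟩
    · rw [hKg]
      exact hKPG
    · rw [hKg]
      exact hrkFlN
    · rw [hKg]
      exact ⟨hFlNflat, (show e ∉ K.E from heW), hNground, hKg, fun X hX => hprinN X hX⟩


end Main


theorem modular_of_rep {𝔽 : Type*} [Field 𝔽] {n : ℕ} {φ : α → Fin n → 𝔽}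
    (hrep : ∀ I ⊆ M.E, (M.Indep I ↔ LinearIndependent 𝔽 (fun x : I => φ x.1)))
    (hfinE : M.E.Finite)
    (hfull : ∀ v ∈ Submodule.span 𝔽 (φ '' M.E), v ≠ 0 →
      ∃ x ∈ M.E, ∃ c : 𝔽, c ≠ 0 ∧ φ x = c • v) :
    ∀ F G, M.IsFlat F → M.IsFlat G →
      rkOf M F + rkOf M G = rkOf M (F ∪ G) + rkOf M (F ∩ G) := by
  intro F G hF hG
  have hFE := hF.subset_ground
  have hGE := hG.subset_ground
  have e1 := rkOf_rep hrep hfinE hFE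
  have e2 := rkOf_rep hrep hfinE hGE
  have e3 := rkOf_rep hrep hfinE (union_subset hFE hGE)
  have e4 := rkOf_rep (X := F ∩ G) hrep hfinE (inter_subset_left.trans hFE)
  have hsup : Submodule.span 𝔽 (φ '' (F ∪ G)) =
      Submodule.span 𝔽 (φ '' F) ⊔ Submodule.span 𝔽 (φ '' G) := by
    rw [image_union, Submodule.span_union]
  have hinf : Submodule.span 𝔽 (φ '' (F ∩ G)) =
      Submodule.span 𝔽 (φ '' F) ⊓ Submodule.span 𝔽 (φ '' G) := by
    apply le_antisymm
    · exact le_inf (Submodule.span_mono (image_mono inter_subset_left))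
        (Submodule.span_mono (image_mono inter_subset_right))
    · intro v hv
      by_cases hv0 : v = 0
      · rw [hv0]; exact zero_mem _
      · have hvV : v ∈ Submodule.span 𝔽 (φ '' M.E) :=
          (Submodule.span_mono (image_mono hFE)) hv.1
        obtain ⟨x, hxE, c, hc, hφx⟩ := hfull v hvV hv0
        have hxF : x ∈ F := by
          have hx : x ∈ M.closure F := by
            rw [closure_rep hrep hFE]
            exact ⟨hxE, by rw [hφx]; exact Submodule.smul_mem _ _ hv.1⟩
          rwa [hF.closure] at hx
        have hxG : x ∈ G := by
          have hx : x ∈ M.closure G := by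
            rw [closure_rep hrep hGE]
            exact ⟨hxE, by rw [hφx]; exact Submodule.smul_mem _ _ hv.2⟩
          rwa [hG.closure] at hx
        have hm : φ x ∈ Submodule.span 𝔽 (φ '' (F ∩ G)) :=
          Submodule.subset_span ⟨x, ⟨hxF, hxG⟩, rfl⟩
        rw [show v = c⁻¹ • φ x from by rw [hφx, inv_smul_smul₀ hc]]
        exact Submodule.smul_mem _ _ hm
  haveI : FiniteDimensional 𝔽 (Submodule.span 𝔽 (φ '' F)) :=
    FiniteDimensional.span_of_finite _ ((hfinE.subset hFE).image φ)
  haveI : FiniteDimensional 𝔽 (Submodule.span 𝔽 (φ '' G)) :=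
    FiniteDimensional.span_of_finite _ ((hfinE.subset hGE).image φ)
  have hdim := Submodule.finrank_sup_add_finrank_inf_eq
    (Submodule.span 𝔽 (φ '' F)) (Submodule.span 𝔽 (φ '' G))
  rw [e1, e2, e3, e4, hsup, hinf]
  exact hdim.symm

end Tool

open Tool Submodule Module

theorem stmt16 (q m : ℕ) (hq : IsPrimePow q) (hm : 2 ≤ m)
    (F : Type) [Field F] [Fintype F] (hF : Fintype.card F = q)
    {α : Type} (M' M : Matroid α) (e : α)
    (hPG : IsPG M F (2 * m)) (he : e ∉ M.E) (hE : M'.E = insert e M.E)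
    (hdel : PaperDefs.delete M' {e} = M) (hnotrep : ¬ Rep M' F) :
    ∃ N : Matroid α, PaperDefs.IsMinor N M' ∧ (IsPGPrincExt N F m 2 ∨ IsPGPrincExt N F m m) := by
  classical
  obtain ⟨hsimp, hRepM, hrk, hfinE, hcard⟩ := hPG
  obtain ⟨n, φ, hrep⟩ := hRepM
  have hnz : ∀ x ∈ M.E, φ x ≠ 0 := fun x hx => simple_nonzero hrep hsimp hfinE hx
  have hpar : ∀ x ∈ M.E, ∀ y ∈ M.E, ∀ c : F, φ y = c • φ x → x = y :=
    fun x hx y hy c h => simple_par hrep hsimp hfinE hx hy c h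
  have hVrank : finrank F (span F (φ '' M.E)) = 2 * m := by
    rw [← rkOf_rep hrep hfinE Subset.rfl, rkOf_ground, hrk]
  have hfull : ∀ v ∈ span F (φ '' M.E), v ≠ 0 →
      ∃ x ∈ M.E, ∃ c : F, c ≠ 0 ∧ φ x = c • v :=
    full_of_ncard hfinE (fun x hx => subset_span ⟨x, hx, rfl⟩) hnz hpar hVrank hcard
  have hmodular := modular_of_rep hrep hfinE hfull
  have hecl : e ∈ M'.closure M.E := by
    by_contra h
    exact hnotrep (rep_of_coloop hdel hE he hrep h)
  obtain ⟨Fl, hFlflat, heFl, hprin⟩ := exists_principal_flat hdel hE he hfinE hmodular hecl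
  have hFlE := hFlflat.subset_ground
  obtain ⟨IFl, hIFl⟩ := M.exists_isBasis Fl hFlE
  have hIFlfin : IFl.Finite := hfinE.subset hIFl.indep.subset_ground
  have hspanFl := span_basis_rep hrep hFlE hIFl
  have hFlcl : Fl = {x ∈ M.E | φ x ∈ span F (φ '' IFl)} := by
    rw [hspanFl, ← closure_rep hrep hFlE, hFlflat.closure]
  have h2r : 2 ≤ IFl.ncard := by
    by_contra hlt
    push_neg at hlt
    rcases (by omega : IFl.ncard = 0 ∨ IFl.ncard = 1) with h0 | h1
    · -- rank 0 : Fl is empty, e is a loop-ish element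
      have hIFl0 : IFl = (∅ : Set α) := (Set.ncard_eq_zero hIFlfin).mp h0
      have hFl0 : Fl = ∅ := by
        rw [hFlcl, hIFl0]
        ext x
        simp only [image_empty, span_empty, Submodule.mem_bot, mem_setOf_eq, mem_empty_iff_false,
          iff_false, not_and]
        exact fun hx => hnz x hx
      rw [hFl0] at heFl
      by_cases hei : M'.Indep {e}
      · exfalso
        rw [M'.empty_indep.mem_closure_iff'] at heFl
        simpa using heFl.2 (by simpa using hei)
      · exact absurd (rep_of_loop hdel hE he hrep hei) hnotrep
    · -- rank 1 : Fl is a single point, e is parallel to it or a loop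
      obtain ⟨f, hf⟩ := Set.ncard_eq_one.mp h1
      have hfE : f ∈ M.E := hIFl.indep.subset_ground (hf ▸ rfl)
      have hFlf : Fl = {f} := by
        apply subset_antisymm
        · intro x hx
          rw [hFlcl] at hx
          rw [hf] at hx
          have := hx.2
          rw [image_singleton, Submodule.mem_span_singleton] at this
          obtain ⟨c, hc⟩ := this
          exact (hpar f hfE x hx.1 c hc.symm).symm
        · rw [← hf]
          exact hIFl.subset
      rw [hFlf] at heFl
      by_cases hei : M'.Indep {e}
      · exact absurd (rep_of_parallel hdel hE he hrep hfE heFl hei) hnotrep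
      · exact absurd (rep_of_loop hdel hE he hrep hei) hnotrep
  obtain ⟨BM, hBMb, hIFlBM⟩ :=
    hIFl.indep.subset_isBasis_of_subset hIFl.indep.subset_ground Subset.rfl
  have hBM : M.IsBase BM := isBasis_ground_iff.mp hBMb
  have hBMfin : BM.Finite := hfinE.subset hBM.subset_ground
  have hBMcard : BM.ncard = 2 * m := by rw [← rk_base hBM, hrk]
  have hrle : IFl.ncard ≤ 2 * m := by
    rw [← hBMcard]
    exact ncard_le_ncard hIFlBM hBMfin
  by_cases hrm : m ≤ IFl.ncard
  · obtain ⟨I₀, hI₀sub, hI₀card⟩ := Set.exists_subset_card_eq hrm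
    obtain ⟨N, hmin, hext⟩ := construction hrep hsimp hfinE hdel hE he hfull hFlflat hprin
      hIFl hBM hIFlBM hI₀sub (empty_subset _) (by rw [union_empty, hI₀card]) hI₀card
    exact ⟨N, hmin, Or.inr hext⟩
  · push_neg at hrm
    obtain ⟨I₀, hI₀sub, hI₀card⟩ := Set.exists_subset_card_eq h2r
    have hdiffcard : (BM \ IFl).ncard = 2 * m - IFl.ncard := by
      rw [Set.ncard_diff hIFlBM hIFlfin, hBMcard]
    obtain ⟨T₀, hT₀sub, hT₀card⟩ :=
      Set.exists_subset_card_eq (show m - 2 ≤ (BM \ IFl).ncard by omega)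
    have hdisj : Disjoint I₀ T₀ := disjoint_left.mpr
      (fun x hx hxT => (hT₀sub hxT).2 (hI₀sub hx))
    have hunioncard : (I₀ ∪ T₀).ncard = m := by
      rw [Set.ncard_union_eq hdisj (hIFlfin.subset hI₀sub)
        ((hBMfin.diff : (BM \ IFl).Finite).subset hT₀sub), hI₀card, hT₀card]
      omega
    obtain ⟨N, hmin, hext⟩ := construction hrep hsimp hfinE hdel hE he hfull hFlflat hprin
      hIFl hBM hIFlBM hI₀sub hT₀sub hunioncard hI₀card
    exact ⟨N, hmin, Or.inl hext⟩
end
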